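/- arXiv:2506.15441 — 11 statements merged into one kernel-verified Lean document; each statement's English description precedes it below -/
import Mathlib

section
/- Let (Ω, 𝓕, μ) be a probability space with Ω a nonempty standard Borel space, and let 𝒲, 𝒵, 𝒰, 𝒳 be standard Borel spaces. Let W : Ω → 𝒲, Z : Ω → 𝒵, U : Ω → 𝒰 be measurable random variables such that U is independent of the pair (W, Z), and let g : 𝒲 × 𝒰 → 𝒳 be measurable. Then X := g(W, U) and Z are conditionally independent given the σ-algebra generated by W (i.e., CondIndepFun holds for X and Z given σ(W)). -/
open MeasureTheory ProbabilityTheory MeasurableSpace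

/-!
Put `X := g (W, U)`. Since `U` is independent of `σ(W, Z) ⊇ σ(W)`, conditioning on `σ(W)` does not
change the law of `U`, and `μ⟦U ∈ B, V | σ(W)⟧ = μ(U ∈ B) μ⟦V | σ(W)⟧` for every `V ∈ σ(W, Z)`;
hence `σ(U)` and `σ(W, Z)` are conditionally independent given `σ(W)`. Conditional independence
given `σ(W)` survives enlarging one side by `σ(W)` itself, because `σ(W)`-measurable indicators
pull out of the conditional expectation. Finally `σ(X) ≤ σ(W) ⊔ σ(U)` and `σ(Z) ≤ σ(W, Z)`.
-/

section PiSystem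

variable {Ω : Type*}

lemma isPiSystem_image2_inter (m₁ m₂ : MeasurableSpace Ω) :
    IsPiSystem (Set.image2 (· ∩ ·) {s | MeasurableSet[m₁] s} {s | MeasurableSet[m₂] s}) := by
  rintro _ ⟨a, ha, b, hb, rfl⟩ _ ⟨a', ha', b', hb', rfl⟩ -
  exact ⟨a ∩ a', ha.inter ha', b ∩ b', hb.inter hb', (Set.inter_inter_inter_comm a b a' b').symm⟩

lemma generateFrom_image2_inter (m₁ m₂ : MeasurableSpace Ω) :
    generateFrom (Set.image2 (· ∩ ·) {s | MeasurableSet[m₁] s} {s | MeasurableSet[m₂] s})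
      = m₁ ⊔ m₂ := by
  refine le_antisymm (generateFrom_le ?_) (sup_le (fun a ha ↦ ?_) (fun b hb ↦ ?_))
  · rintro _ ⟨a, ha, b, hb, rfl⟩
    exact (le_sup_left (a := m₁) (b := m₂) a ha).inter (le_sup_right (a := m₁) b hb)
  · exact measurableSet_generateFrom ⟨a, ha, Set.univ, .univ, Set.inter_univ a⟩
  · exact measurableSet_generateFrom ⟨Set.univ, .univ, b, hb, Set.univ_inter b⟩

end PiSystem

section CondExp

variable {Ω : Type*} {m m₁ m₂ mΩ : MeasurableSpace Ω} {μ : Measure Ω} [IsFiniteMeasure μ]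

lemma condExp_inter_ae_eq_indicator {s t : Set Ω} (hs : MeasurableSet[m] s)
    (ht : MeasurableSet t) : μ⟦s ∩ t | m⟧ =ᵐ[μ] s.indicator (μ⟦t | m⟧) := by
  rw [← Set.indicator_indicator]
  exact condExp_indicator ((integrable_const (1 : ℝ)).indicator ht) hs

lemma condExp_indicator_ae_eq_measureReal_of_indep (hm : m ≤ mΩ) (hm₁ : m₁ ≤ mΩ)
    (h : Indep m₁ m μ) {s : Set Ω} (hs : MeasurableSet[m₁] s) :
    μ⟦s | m⟧ =ᵐ[μ] fun _ ↦ μ.real s := by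
  refine (condExp_indep_eq hm₁ hm ?_ h).trans ?_
  · exact stronglyMeasurable_const.indicator hs
  · exact .of_forall fun _ ↦ by simp [integral_indicator_const _ (hm₁ s hs)]

lemma condExp_inter_ae_eq_mul_of_indep (hm : m ≤ m₂) (hm₁ : m₁ ≤ mΩ) (hm₂ : m₂ ≤ mΩ)
    (h : Indep m₁ m₂ μ) {s t : Set Ω} (hs : MeasurableSet[m₁] s) (ht : MeasurableSet[m₂] t) :
    μ⟦s ∩ t | m⟧ =ᵐ[μ] fun ω ↦ μ.real s * (μ⟦t | m⟧) ω := by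
  have hs' := hm₁ s hs
  have ht' := hm₂ t ht
  refine (ae_eq_condExp_of_forall_setIntegral_eq (hm.trans hm₂)
    ((integrable_const (1 : ℝ)).indicator (hs'.inter ht')) (fun _ _ _ ↦ ?_) (fun u hu _ ↦ ?_)
    (stronglyMeasurable_const.mul stronglyMeasurable_condExp).aestronglyMeasurable).symm
  · exact (integrable_condExp.const_mul _).integrableOn
  have hu' : MeasurableSet[m₂] u := hm u hu
  calc ∫ ω in u, μ.real s * (μ⟦t | m⟧) ω ∂μ
      = μ.real s * μ.real (u ∩ t) := by
        rw [integral_const_mul, setIntegral_condExp (hm.trans hm₂)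
          ((integrable_const (1 : ℝ)).indicator ht') hu, setIntegral_indicator ht',
          setIntegral_const, smul_eq_mul, mul_one]
    _ = μ.real (s ∩ (u ∩ t)) := by
        rw [measureReal_def, measureReal_def, measureReal_def,
          (Indep_iff _ _ _).1 h s _ hs (hu'.inter ht), ENNReal.toReal_mul]
    _ = ∫ ω in u, (s ∩ t).indicator (fun _ ↦ (1 : ℝ)) ω ∂μ := by
        rw [setIntegral_indicator (hs'.inter ht'), setIntegral_const, smul_eq_mul, mul_one,
          Set.inter_left_comm]

end CondExp

section CondIndep

variable {Ω : Type*} {m m₁ m₂ mΩ : MeasurableSpace Ω} [StandardBorelSpace Ω]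
  {μ : Measure Ω} [IsFiniteMeasure μ]

theorem condIndep_of_indep_of_le (hm : m ≤ m₂) (hm₁ : m₁ ≤ mΩ) (hm₂ : m₂ ≤ mΩ)
    (h : Indep m₁ m₂ μ) : CondIndep m m₁ m₂ (hm.trans hm₂) μ := by
  refine (condIndep_iff m m₁ m₂ _ hm₁ hm₂ μ).2 fun s t hs ht ↦ ?_
  filter_upwards [condExp_inter_ae_eq_mul_of_indep hm hm₁ hm₂ h hs ht,
    condExp_indicator_ae_eq_measureReal_of_indep (hm.trans hm₂) hm₁
      (indep_of_indep_of_le_right h hm) hs] with ω hst hs_const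
  rw [Pi.mul_apply, hst, hs_const]

theorem CondIndep.sup_left_self {hm : m ≤ mΩ} (hm₁ : m₁ ≤ mΩ) (hm₂ : m₂ ≤ mΩ)
    (h : CondIndep m m₁ m₂ hm μ) : CondIndep m (m ⊔ m₁) m₂ hm μ := by
  refine CondIndepSets.condIndep (sup_le hm hm₁) hm₂ (isPiSystem_image2_inter m m₁)
    (@isPiSystem_measurableSet Ω m₂) (generateFrom_image2_inter m m₁).symm
    (@generateFrom_measurableSet Ω m₂).symm ?_
  rw [condIndepSets_iff]
  · rintro _ c ⟨a, ha, b, hb, rfl⟩ hc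
    have hb' := hm₁ b hb
    have hc' := hm₂ c hc
    filter_upwards [condExp_inter_ae_eq_indicator (μ := μ) ha (hb'.inter hc'),
      condExp_inter_ae_eq_indicator (μ := μ) ha hb',
      (condIndep_iff _ _ _ _ hm₁ hm₂ μ).1 h b c hb hc] with ω habc hab hbc
    rw [Set.inter_assoc, habc, Pi.mul_apply, hab]
    by_cases hω : ω ∈ a
    · rw [Set.indicator_of_mem hω, Set.indicator_of_mem hω, hbc, Pi.mul_apply]
    · rw [Set.indicator_of_notMem hω, Set.indicator_of_notMem hω, zero_mul]
  · rintro _ ⟨a, ha, b, hb, rfl⟩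
    exact (hm a ha).inter (hm₁ b hb)
  · exact hm₂

end CondIndep

theorem scm_substitution_condIndepFun_general
    {Ω 𝒲 𝒵 𝒰 𝒳 : Type*}
    [MeasurableSpace Ω] [StandardBorelSpace Ω]
    [MeasurableSpace 𝒲]
    [MeasurableSpace 𝒵]
    [MeasurableSpace 𝒰]
    [MeasurableSpace 𝒳]
    (μ : Measure Ω) [IsProbabilityMeasure μ]
    (W : Ω → 𝒲) (Z : Ω → 𝒵) (U : Ω → 𝒰)
    (hW : Measurable W) (hZ : Measurable Z) (hU : Measurable U)
    (hIndep : IndepFun U (fun ω => (W ω, Z ω)) μ)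
    (g : 𝒲 × 𝒰 → 𝒳) (hg : Measurable g) :
    CondIndepFun (MeasurableSpace.comap W inferInstance) (hW.comap_le)
      (fun ω => g (W ω, U ω)) Z μ := by
  have hσX : MeasurableSpace.comap (fun ω ↦ g (W ω, U ω)) inferInstance
      ≤ MeasurableSpace.comap W inferInstance ⊔ MeasurableSpace.comap U inferInstance :=
    (hg.comp (((comap_measurable W).mono le_sup_left le_rfl).prodMk
      ((comap_measurable U).mono le_sup_right le_rfl))).comap_le
  have hσW : MeasurableSpace.comap W inferInstance
      ≤ MeasurableSpace.comap (fun ω ↦ (W ω, Z ω)) inferInstance :=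
    (measurable_fst.comp (comap_measurable (fun ω ↦ (W ω, Z ω)))).comap_le
  have hσZ : MeasurableSpace.comap Z inferInstance
      ≤ MeasurableSpace.comap (fun ω ↦ (W ω, Z ω)) inferInstance :=
    (measurable_snd.comp (comap_measurable (fun ω ↦ (W ω, Z ω)))).comap_le
  have hU_WZ : CondIndep (MeasurableSpace.comap W inferInstance)
      (MeasurableSpace.comap U inferInstance)
      (MeasurableSpace.comap (fun ω ↦ (W ω, Z ω)) inferInstance) hW.comap_le μ :=
    condIndep_of_indep_of_le hσW hU.comap_le (hW.prodMk hZ).comap_le hIndep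
  rw [condIndepFun_iff_condIndep]
  exact condIndep_of_condIndep_of_le_right (condIndep_of_condIndep_of_le_left
    (CondIndep.sup_left_self hU.comap_le (hW.prodMk hZ).comap_le hU_WZ) hσX) hσZ

/-- **Substitution lemma for SCMs.** If `U` is independent of the pair `(W, Z)`, then
`X := g (W, U)` is conditionally independent of `Z` given the σ-algebra generated by `W`. -/
theorem scm_substitution_condIndepFun
    {Ω 𝒲 𝒵 𝒰 𝒳 : Type*}
    [MeasurableSpace Ω] [StandardBorelSpace Ω] [Nonempty Ω]
    [MeasurableSpace 𝒲] [StandardBorelSpace 𝒲]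
    [MeasurableSpace 𝒵] [StandardBorelSpace 𝒵]
    [MeasurableSpace 𝒰] [StandardBorelSpace 𝒰]
    [MeasurableSpace 𝒳] [StandardBorelSpace 𝒳]
    (μ : Measure Ω) [IsProbabilityMeasure μ]
    (W : Ω → 𝒲) (Z : Ω → 𝒵) (U : Ω → 𝒰)
    (hW : Measurable W) (hZ : Measurable Z) (hU : Measurable U)
    (hIndep : IndepFun U (fun ω => (W ω, Z ω)) μ)
    (g : 𝒲 × 𝒰 → 𝒳) (hg : Measurable g) :
    CondIndepFun (MeasurableSpace.comap W inferInstance) (hW.comap_le)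
      (fun ω => g (W ω, U ω)) Z μ :=
  scm_substitution_condIndepFun_general μ W Z U hW hZ hU hIndep g hg
end

section
/- In the discrete lm-SCM for the motivating example (Figure 1c), the exposure satisfies the context-specific independence A ⫫ Y₀ | W in the context R = 0: for every w ∈ 𝒲 with μ(W = w, R = 0) > 0, every a ∈ {0,1} and every y ∈ 𝒴₀, μ(A = a ∧ Y₀ = y | W = w, R = 0) = μ(A = a | W = w, R = 0) · μ(Y₀ = y | W = w, R = 0). -/
open MeasureTheory ProbabilityTheory

/-- Conditional probability of `S` given the event `E`: `μ(S ∩ E) / μ(E)`. -/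
noncomputable def cprob {Ω : Type*} [MeasurableSpace Ω] (μ : Measure Ω) (S E : Set Ω) : ENNReal :=
  μ (S ∩ E) / μ E

/-- In the discrete lm-SCM of Figure 1c, the context-specific independence
`A ⫫ Y₀ | W` holds in the context `R = 0`. -/
theorem lmSCM_csi_exposure
    {Ω 𝒲 𝒴₀ 𝒰₀ 𝒰R 𝒰A 𝒰Y : Type*}
    [MeasurableSpace Ω]
    [Fintype 𝒲] [Nonempty 𝒲] [MeasurableSpace 𝒲] [MeasurableSingletonClass 𝒲]
    [Fintype 𝒴₀] [Nonempty 𝒴₀] [MeasurableSpace 𝒴₀] [MeasurableSingletonClass 𝒴₀]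
    [MeasurableSpace 𝒰₀] [MeasurableSpace 𝒰R] [MeasurableSpace 𝒰A] [MeasurableSpace 𝒰Y]
    (μ : Measure Ω) [IsProbabilityMeasure μ]
    (W : Ω → 𝒲) (U₀ : Ω → 𝒰₀) (UR : Ω → 𝒰R) (UA : Ω → 𝒰A) (UY : Ω → 𝒰Y)
    (hW : Measurable W) (hU₀ : Measurable U₀) (hUR : Measurable UR)
    (hUA : Measurable UA) (hUY : Measurable UY)
    (hIndep : iIndep
      (![MeasurableSpace.comap W inferInstance, MeasurableSpace.comap U₀ inferInstance,
         MeasurableSpace.comap UR inferInstance, MeasurableSpace.comap UA inferInstance,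
         MeasurableSpace.comap UY inferInstance] : Fin 5 → MeasurableSpace Ω) μ)
    (f₀ : 𝒲 × 𝒰₀ → 𝒴₀) (hf₀ : Measurable f₀)
    (fR : 𝒲 × 𝒰R → Fin 2) (hfR : Measurable fR)
    (fA : 𝒲 × 𝒴₀ × 𝒰A → Fin 2) (hfA : Measurable fA)
    (gA : 𝒲 × 𝒰A → Fin 2) (hgA : Measurable gA)
    (fY : 𝒲 × 𝒴₀ × Fin 2 × 𝒰Y → ℝ) (hfY : Measurable fY)
    (gY : 𝒲 × Fin 2 × 𝒰Y → ℝ) (hgY : Measurable gY)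
    (Y₀ : Ω → 𝒴₀) (R A : Ω → Fin 2) (Y₁ : Ω → ℝ)
    (hY₀ : ∀ ω, Y₀ ω = f₀ (W ω, U₀ ω))
    (hR : ∀ ω, R ω = fR (W ω, UR ω))
    (hA : ∀ ω, A ω = if R ω = 1 then fA (W ω, Y₀ ω, UA ω) else gA (W ω, UA ω))
    (hY₁ : ∀ ω, Y₁ ω = if R ω = 1 then fY (W ω, Y₀ ω, A ω, UY ω) else gY (W ω, A ω, UY ω)) :
    ∀ w : 𝒲, 0 < μ {ω | W ω = w ∧ R ω = 0} →
      ∀ (a : Fin 2) (y : 𝒴₀),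
        cprob μ {ω | A ω = a ∧ Y₀ ω = y} {ω | W ω = w ∧ R ω = 0}
          = cprob μ {ω | A ω = a} {ω | W ω = w ∧ R ω = 0}
            * cprob μ {ω | Y₀ ω = y} {ω | W ω = w ∧ R ω = 0} := by
  intro w hpos a y
  classical
  set s : Fin 5 → Set Ω :=
    ![W ⁻¹' {w},
      U₀ ⁻¹' {u | f₀ (w, u) = y},
      UR ⁻¹' {u | fR (w, u) = 0},
      UA ⁻¹' {u | gA (w, u) = a},
      Set.univ] with hs
  -- key set identities
  have hE : {ω | W ω = w ∧ R ω = 0} = s 0 ∩ s 2 := by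
    ext ω
    simp only [hs, Set.mem_setOf_eq, Set.mem_inter_iff, Set.mem_preimage,
      Matrix.cons_val_zero, Set.mem_singleton_iff, Matrix.cons_val_two, Matrix.tail_cons,
      Matrix.head_cons, Set.mem_setOf_eq, hR]
    constructor
    · rintro ⟨rfl, h⟩; exact ⟨rfl, h⟩
    · rintro ⟨rfl, h⟩; exact ⟨rfl, h⟩
  have hAeq : ∀ ω, W ω = w → fR (w, UR ω) = 0 → (A ω = a ↔ gA (w, UA ω) = a) := by
    intro ω hw hr
    rw [hA ω, hR ω, hw, hr]
    simp
  have hYeq : ∀ ω, W ω = w → (Y₀ ω = y ↔ f₀ (w, U₀ ω) = y) := by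
    intro ω hw; rw [hY₀ ω, hw]
  have hEA : {ω | A ω = a} ∩ {ω | W ω = w ∧ R ω = 0} = s 0 ∩ s 2 ∩ s 3 := by
    rw [hE]; ext ω
    simp only [hs, Set.mem_inter_iff, Set.mem_setOf_eq, Set.mem_preimage,
      Matrix.cons_val_zero, Set.mem_singleton_iff, Matrix.cons_val_two, Matrix.tail_cons,
      Matrix.head_cons, Matrix.cons_val_three, Set.mem_setOf_eq]
    constructor
    · rintro ⟨ha, hw, hr⟩; exact ⟨⟨hw, hr⟩, (hAeq ω hw hr).1 ha⟩
    · rintro ⟨⟨hw, hr⟩, hga⟩; exact ⟨(hAeq ω hw hr).2 hga, hw, hr⟩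
  have hEY : {ω | Y₀ ω = y} ∩ {ω | W ω = w ∧ R ω = 0} = s 0 ∩ s 1 ∩ s 2 := by
    rw [hE]; ext ω
    simp only [hs, Set.mem_inter_iff, Set.mem_setOf_eq, Set.mem_preimage,
      Matrix.cons_val_zero, Set.mem_singleton_iff, Matrix.cons_val_one, Matrix.head_cons,
      Matrix.cons_val_two, Matrix.tail_cons, Set.mem_setOf_eq]
    constructor
    · rintro ⟨hy, hw, hr⟩; exact ⟨⟨hw, (hYeq ω hw).1 hy⟩, hr⟩
    · rintro ⟨⟨hw, hy⟩, hr⟩; exact ⟨(hYeq ω hw).2 hy, hw, hr⟩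
  have hEAY : {ω | A ω = a ∧ Y₀ ω = y} ∩ {ω | W ω = w ∧ R ω = 0}
      = s 0 ∩ s 1 ∩ s 2 ∩ s 3 := by
    rw [hE]; ext ω
    simp only [hs, Set.mem_inter_iff, Set.mem_setOf_eq, Set.mem_preimage,
      Matrix.cons_val_zero, Set.mem_singleton_iff, Matrix.cons_val_one, Matrix.head_cons,
      Matrix.cons_val_two, Matrix.tail_cons, Matrix.cons_val_three, Set.mem_setOf_eq]
    constructor
    · rintro ⟨⟨ha, hy⟩, hw, hr⟩
      exact ⟨⟨⟨hw, (hYeq ω hw).1 hy⟩, hr⟩, (hAeq ω hw hr).1 ha⟩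
    · rintro ⟨⟨⟨hw, hy⟩, hr⟩, hga⟩
      exact ⟨⟨(hAeq ω hw hr).2 hga, (hYeq ω hw).2 hy⟩, hw, hr⟩
  -- independence computations
  have hprod : ∀ T : Finset (Fin 5), T ⊆ {0, 1, 2, 3} →
      μ (⋂ i ∈ T, s i) = ∏ i ∈ T, μ (s i) := by
    intro T hT
    refine hIndep.meas_biInter fun i hi => ?_
    have hi' := hT hi
    fin_cases hi'
    · exact ⟨{w}, measurableSet_singleton w, rfl⟩
    · exact ⟨{u | f₀ (w, u) = y},
        (hf₀.comp (measurable_const.prodMk measurable_id)) (measurableSet_singleton y), rfl⟩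
    · exact ⟨{u | fR (w, u) = 0},
        (hfR.comp (measurable_const.prodMk measurable_id)) (measurableSet_singleton 0), rfl⟩
    · exact ⟨{u | gA (w, u) = a},
        (hgA.comp (measurable_const.prodMk measurable_id)) (measurableSet_singleton a), rfl⟩
  have h02 : μ (s 0 ∩ s 2) = μ (s 0) * μ (s 2) := by
    have := hprod {0, 2} (by decide)
    simpa [Finset.prod_insert, Set.biInter_insert] using this
  have h023 : μ (s 0 ∩ s 2 ∩ s 3) = μ (s 0) * μ (s 2) * μ (s 3) := by
    have := hprod {0, 2, 3} (by decide)
    simpa [Finset.prod_insert, Set.biInter_insert, Set.inter_assoc, mul_assoc] using this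
  have h012 : μ (s 0 ∩ s 1 ∩ s 2) = μ (s 0) * μ (s 1) * μ (s 2) := by
    have := hprod {0, 1, 2} (by decide)
    simpa [Finset.prod_insert, Set.biInter_insert, Set.inter_assoc, mul_assoc] using this
  have h0123 : μ (s 0 ∩ s 1 ∩ s 2 ∩ s 3) = μ (s 0) * μ (s 1) * μ (s 2) * μ (s 3) := by
    have := hprod {0, 1, 2, 3} (by decide)
    simpa [Finset.prod_insert, Set.biInter_insert, Set.inter_assoc, mul_assoc] using this
  -- arithmetic
  have hbase : μ {ω | W ω = w ∧ R ω = 0} = μ (s 0) * μ (s 2) := by rw [hE, h02]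
  have hne0 : μ (s 0) * μ (s 2) ≠ 0 := by rw [← hbase]; exact hpos.ne'
  have hnetop : μ (s 0) * μ (s 2) ≠ ⊤ := by rw [← hbase]; exact (measure_lt_top μ _).ne
  have cancel : ∀ x : ENNReal, x * (μ (s 0) * μ (s 2)) / (μ (s 0) * μ (s 2)) = x := by
    intro x
    rw [mul_div_assoc, ENNReal.div_self hne0 hnetop, mul_one]
  unfold cprob
  rw [hEAY, hEA, hEY, hbase, h0123, h023, h012,
    show μ (s 0) * μ (s 1) * μ (s 2) * μ (s 3)
      = (μ (s 3) * μ (s 1)) * (μ (s 0) * μ (s 2)) by ring,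
    show μ (s 0) * μ (s 2) * μ (s 3) = μ (s 3) * (μ (s 0) * μ (s 2)) by ring,
    show μ (s 0) * μ (s 1) * μ (s 2) = μ (s 1) * (μ (s 0) * μ (s 2)) by ring,
    cancel, cancel, cancel]
end

section
/- In the discrete lm-SCM for the motivating example (Figure 1c), the outcome satisfies the context-specific independence Y₁ ⫫ Y₀ | (W, A) in the context R = 0: for every w ∈ 𝒲 and a ∈ {0,1} with μ(W = w, A = a, R = 0) > 0, every y ∈ 𝒴₀ and every Borel set S ⊆ ℝ, μ(Y₁ ∈ S ∧ Y₀ = y | W = w, A = a, R = 0) = μ(Y₁ ∈ S | W = w, A = a, R = 0) · μ(Y₀ = y | W = w, A = a, R = 0). -/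
open MeasureTheory ProbabilityTheory

/-- Conditional expectation of `X` given the event `E`: `μ(E)⁻¹ * ∫_E X dμ`. -/
noncomputable def cexp {Ω : Type*} [MeasurableSpace Ω] (μ : Measure Ω) (X : Ω → ℝ) (E : Set Ω) : ℝ :=
  ((μ E).toReal)⁻¹ * ∫ ω in E, X ω ∂μ

/-- In the discrete lm-SCM of Figure 1c, the context-specific independence `Y₁ ⫫ Y₀ | (W, A)` holds in the context `R = 0`. -/
theorem lmSCM_csi_outcome
    {Ω 𝒲 𝒴₀ 𝒰₀ 𝒰R 𝒰A 𝒰Y : Type*}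
    [MeasurableSpace Ω]
    [Fintype 𝒲] [Nonempty 𝒲] [MeasurableSpace 𝒲] [MeasurableSingletonClass 𝒲]
    [Fintype 𝒴₀] [Nonempty 𝒴₀] [MeasurableSpace 𝒴₀] [MeasurableSingletonClass 𝒴₀]
    [MeasurableSpace 𝒰₀] [MeasurableSpace 𝒰R] [MeasurableSpace 𝒰A] [MeasurableSpace 𝒰Y]
    (μ : Measure Ω) [IsProbabilityMeasure μ]
    (W : Ω → 𝒲) (U₀ : Ω → 𝒰₀) (UR : Ω → 𝒰R) (UA : Ω → 𝒰A) (UY : Ω → 𝒰Y)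
    (hW : Measurable W) (hU₀ : Measurable U₀) (hUR : Measurable UR)
    (hUA : Measurable UA) (hUY : Measurable UY)
    (hIndep : iIndep
      (![MeasurableSpace.comap W inferInstance, MeasurableSpace.comap U₀ inferInstance,
         MeasurableSpace.comap UR inferInstance, MeasurableSpace.comap UA inferInstance,
         MeasurableSpace.comap UY inferInstance] : Fin 5 → MeasurableSpace Ω) μ)
    (f₀ : 𝒲 × 𝒰₀ → 𝒴₀) (hf₀ : Measurable f₀)
    (fR : 𝒲 × 𝒰R → Fin 2) (hfR : Measurable fR)
    (fA : 𝒲 × 𝒴₀ × 𝒰A → Fin 2) (hfA : Measurable fA)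
    (gA : 𝒲 × 𝒰A → Fin 2) (hgA : Measurable gA)
    (fY : 𝒲 × 𝒴₀ × Fin 2 × 𝒰Y → ℝ) (hfY : Measurable fY)
    (gY : 𝒲 × Fin 2 × 𝒰Y → ℝ) (hgY : Measurable gY)
    (Y₀ : Ω → 𝒴₀) (R A : Ω → Fin 2) (Y₁ : Ω → ℝ)
    (hY₀ : ∀ ω, Y₀ ω = f₀ (W ω, U₀ ω))
    (hR : ∀ ω, R ω = fR (W ω, UR ω))
    (hA : ∀ ω, A ω = if R ω = 1 then fA (W ω, Y₀ ω, UA ω) else gA (W ω, UA ω))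
    (hY₁ : ∀ ω, Y₁ ω = if R ω = 1 then fY (W ω, Y₀ ω, A ω, UY ω) else gY (W ω, A ω, UY ω))
    :
    ∀ (w : 𝒲) (a : Fin 2), 0 < μ {ω | W ω = w ∧ A ω = a ∧ R ω = 0} →
      ∀ (y : 𝒴₀) (S : Set ℝ), MeasurableSet S →
        cprob μ {ω | Y₁ ω ∈ S ∧ Y₀ ω = y} {ω | W ω = w ∧ A ω = a ∧ R ω = 0}
          = cprob μ {ω | Y₁ ω ∈ S} {ω | W ω = w ∧ A ω = a ∧ R ω = 0}
            * cprob μ {ω | Y₀ ω = y} {ω | W ω = w ∧ A ω = a ∧ R ω = 0} := by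
  intro w a hpos y S hS
  classical
  -- the five basic events
  set BW : Set Ω := W ⁻¹' {w} with hBW
  set B0 : Set Ω := U₀ ⁻¹' {u | f₀ (w, u) = y} with hB0
  set BR : Set Ω := UR ⁻¹' {u | fR (w, u) = 0} with hBR
  set BA : Set Ω := UA ⁻¹' {u | gA (w, u) = a} with hBA
  set BY : Set Ω := UY ⁻¹' {u | gY (w, a, u) ∈ S} with hBY
  have h01 : (0 : Fin 2) ≠ 1 := by decide
  -- set identities
  have hE : {ω | W ω = w ∧ A ω = a ∧ R ω = 0} = BW ∩ BR ∩ BA := by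
    ext ω
    simp only [Set.mem_setOf_eq, Set.mem_inter_iff, hBW, hB0, hBR, hBA, Set.mem_preimage,
      Set.mem_singleton_iff]
    constructor
    · rintro ⟨hw, ha, hr⟩
      have hrr : fR (w, UR ω) = 0 := by rw [← hw, ← hR]; exact hr
      have : A ω = gA (W ω, UA ω) := by rw [hA ω, if_neg (by rw [hr]; exact h01)]
      refine ⟨⟨hw, hrr⟩, ?_⟩
      rw [← hw]; rw [this] at ha; exact ha
    · rintro ⟨⟨hw, hrr⟩, haa⟩
      have hr : R ω = 0 := by rw [hR ω, hw]; exact hrr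
      have : A ω = gA (W ω, UA ω) := by rw [hA ω, if_neg (by rw [hr]; exact h01)]
      exact ⟨hw, by rw [this, hw]; exact haa, hr⟩
  have hE1 : {ω | Y₁ ω ∈ S} ∩ (BW ∩ BR ∩ BA) = BW ∩ BR ∩ BA ∩ BY := by
    ext ω
    simp only [Set.mem_inter_iff, Set.mem_setOf_eq, hBW, hBR, hBA, hBY, Set.mem_preimage,
      Set.mem_singleton_iff]
    constructor
    · rintro ⟨hy, ⟨hw, hrr⟩, haa⟩
      have hr : R ω = 0 := by rw [hR ω, hw]; exact hrr
      have hAeq : A ω = a := by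
        rw [hA ω, if_neg (by rw [hr]; exact h01), hw]; exact haa
      have : Y₁ ω = gY (w, a, UY ω) := by
        rw [hY₁ ω, if_neg (by rw [hr]; exact h01), hw, hAeq]
      exact ⟨⟨⟨hw, hrr⟩, haa⟩, by rw [← this]; exact hy⟩
    · rintro ⟨⟨⟨hw, hrr⟩, haa⟩, hy⟩
      have hr : R ω = 0 := by rw [hR ω, hw]; exact hrr
      have hAeq : A ω = a := by
        rw [hA ω, if_neg (by rw [hr]; exact h01), hw]; exact haa
      have : Y₁ ω = gY (w, a, UY ω) := by
        rw [hY₁ ω, if_neg (by rw [hr]; exact h01), hw, hAeq]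
      exact ⟨by rw [this]; exact hy, ⟨hw, hrr⟩, haa⟩
  have hE0 : {ω | Y₀ ω = y} ∩ (BW ∩ BR ∩ BA) = BW ∩ B0 ∩ BR ∩ BA := by
    ext ω
    simp only [Set.mem_inter_iff, Set.mem_setOf_eq, hBW, hB0, hBR, hBA, Set.mem_preimage,
      Set.mem_singleton_iff]
    constructor
    · rintro ⟨hy, ⟨hw, hrr⟩, haa⟩
      exact ⟨⟨⟨hw, by rw [← hw]; rw [hY₀ ω] at hy; exact hy⟩, hrr⟩, haa⟩
    · rintro ⟨⟨⟨hw, h0⟩, hrr⟩, haa⟩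
      exact ⟨by rw [hY₀ ω, hw]; exact h0, ⟨hw, hrr⟩, haa⟩
  have hE10 : {ω | Y₁ ω ∈ S ∧ Y₀ ω = y} ∩ (BW ∩ BR ∩ BA) = BW ∩ B0 ∩ BR ∩ BA ∩ BY := by
    have : {ω | Y₁ ω ∈ S ∧ Y₀ ω = y} ∩ (BW ∩ BR ∩ BA)
        = ({ω | Y₁ ω ∈ S} ∩ (BW ∩ BR ∩ BA)) ∩ ({ω | Y₀ ω = y} ∩ (BW ∩ BR ∩ BA)) := by
      ext ω
      simp only [Set.mem_inter_iff, Set.mem_setOf_eq]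
      tauto
    rw [this, hE1, hE0]
    ext ω
    simp only [Set.mem_inter_iff]
    tauto
  -- independence via iIndep_iff
  rw [iIndep_iff] at hIndep
  set F : Fin 5 → Set Ω := ![BW, B0, BR, BA, BY] with hF
  have hmeas : ∀ i, MeasurableSet[(![MeasurableSpace.comap W inferInstance,
      MeasurableSpace.comap U₀ inferInstance, MeasurableSpace.comap UR inferInstance,
      MeasurableSpace.comap UA inferInstance, MeasurableSpace.comap UY inferInstance] :
        Fin 5 → MeasurableSpace Ω) i] (F i) := by
    intro i
    fin_cases i
    · exact ⟨{w}, measurableSet_singleton w, rfl⟩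
    · exact ⟨{u | f₀ (w, u) = y}, (hf₀.comp measurable_prodMk_left)
        (measurableSet_singleton y), rfl⟩
    · exact ⟨{u | fR (w, u) = 0}, (hfR.comp measurable_prodMk_left)
        (measurableSet_singleton 0), rfl⟩
    · exact ⟨{u | gA (w, u) = a}, (hgA.comp measurable_prodMk_left)
        (measurableSet_singleton a), rfl⟩
    · exact ⟨{u | gY (w, a, u) ∈ S},
        (show Measurable fun u => gY (w, a, u) from hgY.comp (measurable_prodMk_left.comp measurable_prodMk_left)) hS, rfl⟩
  have key : ∀ s : Finset (Fin 5), μ (⋂ i ∈ s, F i) = ∏ i ∈ s, μ (F i) := by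
    intro s
    exact hIndep s (fun i _ => hmeas i)
  have hF0 : F 0 = BW := rfl
  have hF1 : F 1 = B0 := rfl
  have hF2 : F 2 = BR := rfl
  have hF3 : F 3 = BA := rfl
  have hF4 : F 4 = BY := rfl
  have mE : μ (BW ∩ BR ∩ BA) = μ BW * μ BR * μ BA := by
    have := key {0, 2, 3}
    simpa [Finset.mem_insert, hF0, hF2, hF3, Set.inter_assoc, mul_assoc] using this
  have mE1 : μ (BW ∩ BR ∩ BA ∩ BY) = μ BW * μ BR * μ BA * μ BY := by
    have := key {0, 2, 3, 4}
    simpa [Finset.mem_insert, hF0, hF2, hF3, hF4, Set.inter_assoc, mul_assoc] using this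
  have mE0 : μ (BW ∩ B0 ∩ BR ∩ BA) = μ BW * μ B0 * μ BR * μ BA := by
    have := key {0, 1, 2, 3}
    simpa [Finset.mem_insert, hF0, hF1, hF2, hF3, Set.inter_assoc, mul_assoc] using this
  have mE10 : μ (BW ∩ B0 ∩ BR ∩ BA ∩ BY) = μ BW * μ B0 * μ BR * μ BA * μ BY := by
    have := key {0, 1, 2, 3, 4}
    simpa [Finset.mem_insert, hF0, hF1, hF2, hF3, hF4, Set.inter_assoc, mul_assoc] using this
  -- finish with arithmetic
  rw [hE] at hpos ⊢
  unfold cprob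
  rw [hE10, hE1, hE0, mE, mE10, mE1, mE0]
  have hc0 : μ BW * μ BR * μ BA ≠ 0 := by rw [← mE]; exact hpos.ne'
  have hctop : μ BW * μ BR * μ BA ≠ ⊤ := by rw [← mE]; exact measure_ne_top μ _
  have cancel : ∀ x : ENNReal, x * (μ BW * μ BR * μ BA) / (μ BW * μ BR * μ BA) = x := fun x => by
    rw [mul_div_assoc, ENNReal.div_self hc0 hctop, mul_one]
  rw [show μ BW * μ B0 * μ BR * μ BA * μ BY = (μ B0 * μ BY) * (μ BW * μ BR * μ BA) by ring,
    show μ BW * μ BR * μ BA * μ BY = μ BY * (μ BW * μ BR * μ BA) by ring,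
    show μ BW * μ B0 * μ BR * μ BA = μ B0 * (μ BW * μ BR * μ BA) by ring,
    cancel, cancel, cancel, mul_comm]
end

section
/- In the adjustment SCM, for every a ∈ 𝒜 such that μ(L = l, A = a) > 0 for all l ∈ ℒ, the interventional mean is identified by covariate adjustment: E[Yᵃ] = Σ_{l ∈ ℒ} μ(L = l) · E[Y | L = l, A = a]. -/
open MeasureTheory ProbabilityTheory

/-!
Within the stratum `L = l` the treatment is `A = h(l, U_A)`, so the event `{L = l, A = a}` is
`{U_A ∈ B} ∩ {L = l}` with `B = {u | h(l, u) = a}`, and on it `Y = Yᵃ = k(l, a, U_Y)`. Since `U_A`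
is independent of `(L, U_Y)`, conditioning the mean of `Yᵃ` on `{L = l}` additionally on
`{U_A ∈ B}` does not change it, hence `E[Y | L = l, A = a] = E[Yᵃ | L = l]`; the law of total
expectation over the strata of `L` then gives `E[Yᵃ]`.
-/

section Cexp

variable {Ω : Type*} [MeasurableSpace Ω] {μ : Measure Ω}

theorem toReal_measure_mul_cexp [IsFiniteMeasure μ] (X : Ω → ℝ) (E : Set Ω) :
    (μ E).toReal * cexp μ X E = ∫ ω in E, X ω ∂μ := by
  by_cases hE : μ E = 0
  -- on a null event `cexp` is the junk value `0`, and the set integral vanishes as well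
  · simp [Measure.restrict_eq_zero.2 hE, hE]
  · exact mul_inv_cancel_left₀ (ENNReal.toReal_ne_zero.2 ⟨hE, measure_ne_top μ E⟩) _

theorem integral_eq_sum_toReal_measure_mul_cexp [IsFiniteMeasure μ] {ι : Type*} [Fintype ι]
    [MeasurableSpace ι] [MeasurableSingletonClass ι] {L : Ω → ι} (hL : Measurable L)
    {X : Ω → ℝ} (hX : Integrable X μ) :
    ∫ ω, X ω ∂μ = ∑ l, (μ {ω | L ω = l}).toReal * cexp μ X {ω | L ω = l} := by
  simp_rw [toReal_measure_mul_cexp]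
  rw [← integral_iUnion_fintype (s := fun l => {ω | L ω = l})
    (fun l => hL (measurableSet_singleton l)) (pairwise_disjoint_fiber L)
    (fun _ => hX.integrableOn),
    Set.iUnion_eq_univ_iff.2 fun ω => ⟨L ω, rfl⟩, setIntegral_univ]

theorem cexp_congr_of_eqOn {X X' : Ω → ℝ} {E : Set Ω} (hE : MeasurableSet E)
    (hXX' : Set.EqOn X X' E) : cexp μ X E = cexp μ X' E := by
  rw [cexp, cexp, setIntegral_congr_fun hE hXX']

theorem ProbabilityTheory.IndepFun.cexp_inter_preimage [IsFiniteMeasure μ]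
    {β γ : Type*} [MeasurableSpace β] [MeasurableSpace γ] {U : Ω → β} {V : Ω → γ}
    (hUV : IndepFun U V μ) (hU : Measurable U) (hV : Measurable V)
    {B : Set β} (hB : MeasurableSet B) {C : Set γ} (hC : MeasurableSet C)
    {g : γ → ℝ} (hg : Measurable g) (hUB : μ (U ⁻¹' B) ≠ 0) :
    cexp μ (g ∘ V) (U ⁻¹' B ∩ V ⁻¹' C) = cexp μ (g ∘ V) (V ⁻¹' C) := by
  have hintegral : ∫ ω in U ⁻¹' B ∩ V ⁻¹' C, (g ∘ V) ω ∂μ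
      = (μ (U ⁻¹' B)).toReal * ∫ ω in V ⁻¹' C, (g ∘ V) ω ∂μ := by
    rw [← setIntegral_indicator (hV hC), ← integral_indicator (hV hC)]
    simp_rw [Set.indicator_comp_right]
    exact ((IndepFun_iff_Indep U V μ).1 hUV).setIntegral_eq_mul hU.comap_le hV.aemeasurable
      ⟨B, hB, rfl⟩ (hg.indicator hC).aestronglyMeasurable
  have hUB' : (μ (U ⁻¹' B)).toReal ≠ 0 := ENNReal.toReal_ne_zero.2 ⟨hUB, measure_ne_top μ _⟩
  rw [cexp, cexp, hUV.measure_inter_preimage_eq_mul B C hB hC, ENNReal.toReal_mul, hintegral,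
    mul_inv_rev, mul_assoc, inv_mul_cancel_left₀ hUB']

end Cexp

theorem setOf_eq_and_eq_eq_preimage_inter {Ω ι β α : Type*} {L : Ω → ι} {U : Ω → β}
    {A : Ω → α} {h : ι × β → α} (hA : ∀ ω, A ω = h (L ω, U ω)) (l : ι) (a : α) :
    {ω | L ω = l ∧ A ω = a} = U ⁻¹' {u | h (l, u) = a} ∩ L ⁻¹' {l} := by
  ext ω
  simp only [Set.mem_ofPred_eq, Set.mem_inter_iff, Set.mem_preimage, Set.mem_singleton_iff, hA]
  constructor
  · rintro ⟨rfl, ha⟩; exact ⟨ha, rfl⟩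
  · rintro ⟨ha, rfl⟩; exact ⟨rfl, ha⟩

theorem adjustment_scm_backdoor_general
    {Ω ℒ 𝒜 𝒰A 𝒰Y : Type*}
    [MeasurableSpace Ω]
    [Fintype ℒ] [MeasurableSpace ℒ] [MeasurableSingletonClass ℒ]
    [MeasurableSpace 𝒜] [MeasurableSingletonClass 𝒜]
    [MeasurableSpace 𝒰A] [MeasurableSpace 𝒰Y]
    (μ : Measure Ω) [IsProbabilityMeasure μ]
    (L : Ω → ℒ) (UA : Ω → 𝒰A) (UY : Ω → 𝒰Y)
    (hL : Measurable L) (hUA : Measurable UA) (hUY : Measurable UY)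
    (hIndep : IndepFun UA (fun ω => (L ω, UY ω)) μ)
    (h : ℒ × 𝒰A → 𝒜) (hh : Measurable h)
    (k : ℒ × 𝒜 × 𝒰Y → ℝ) (hk : Measurable k)
    (A : Ω → 𝒜) (Y : Ω → ℝ)
    (hA : ∀ ω, A ω = h (L ω, UA ω))
    (hY : ∀ ω, Y ω = k (L ω, A ω, UY ω))
    (Ypo : 𝒜 → Ω → ℝ)
    (hYpo : ∀ (a : 𝒜) (ω : Ω), Ypo a ω = k (L ω, a, UY ω))
    (hIntYpo : ∀ a : 𝒜, Integrable (Ypo a) μ) :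
    ∀ a : 𝒜, (∀ l : ℒ, 0 < μ {ω | L ω = l ∧ A ω = a}) →
      ∫ ω, Ypo a ω ∂μ
        = ∑ l : ℒ, (μ {ω | L ω = l}).toReal * cexp μ Y {ω | L ω = l ∧ A ω = a} := by
  intro a hpos
  have hYpo_eq : Ypo a = (fun p : ℒ × 𝒰Y => k (p.1, a, p.2)) ∘ fun ω => (L ω, UY ω) :=
    funext (hYpo a)
  have hstratum : ∀ l, cexp μ Y {ω | L ω = l ∧ A ω = a} = cexp μ (Ypo a) {ω | L ω = l} := by
    intro l
    have hevent : {ω | L ω = l ∧ A ω = a}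
        = UA ⁻¹' {u | h (l, u) = a} ∩ (fun ω => (L ω, UY ω)) ⁻¹' (Prod.fst ⁻¹' {l}) :=
      setOf_eq_and_eq_eq_preimage_inter hA l a
    have hB : MeasurableSet {u | h (l, u) = a} :=
      hh.comp measurable_prodMk_left (measurableSet_singleton a)
    have hC : MeasurableSet (Prod.fst ⁻¹' {l} : Set (ℒ × 𝒰Y)) :=
      measurable_fst (measurableSet_singleton l)
    have hUB : μ (UA ⁻¹' {u | h (l, u) = a}) ≠ 0 := fun h0 =>
      (hpos l).ne' (measure_mono_null (hevent ▸ Set.inter_subset_left) h0)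
    have hYeq : Set.EqOn Y (Ypo a) {ω | L ω = l ∧ A ω = a} := by
      rintro ω ⟨-, ha⟩
      rw [hY, hYpo, ha]
    rw [cexp_congr_of_eqOn (hevent ▸ (hUA hB).inter ((hL.prodMk hUY) hC)) hYeq, hevent, hYpo_eq]
    exact hIndep.cexp_inter_preimage hUA (hL.prodMk hUY) hB hC
      (hk.comp (measurable_fst.prodMk (measurable_const.prodMk measurable_snd))) hUB
  rw [integral_eq_sum_toReal_measure_mul_cexp hL (hIntYpo a)]
  exact Finset.sum_congr rfl fun l _ => by rw [hstratum l]

/-- **Back-door adjustment identity.** In the adjustment SCM with `A := h(L, U_A)`,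
`Y := k(L, A, U_Y)` and `U_A ⫫ (L, U_Y)`, for every `a` with positivity the interventional
mean `E[Yᵃ]` is identified by covariate adjustment over `L`. -/
theorem adjustment_scm_backdoor
    {Ω ℒ 𝒜 𝒰A 𝒰Y : Type*}
    [MeasurableSpace Ω]
    [Fintype ℒ] [Nonempty ℒ] [MeasurableSpace ℒ] [MeasurableSingletonClass ℒ]
    [Fintype 𝒜] [Nonempty 𝒜] [MeasurableSpace 𝒜] [MeasurableSingletonClass 𝒜]
    [MeasurableSpace 𝒰A] [MeasurableSpace 𝒰Y]
    (μ : Measure Ω) [IsProbabilityMeasure μ]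
    (L : Ω → ℒ) (UA : Ω → 𝒰A) (UY : Ω → 𝒰Y)
    (hL : Measurable L) (hUA : Measurable UA) (hUY : Measurable UY)
    (hIndep : IndepFun UA (fun ω => (L ω, UY ω)) μ)
    (h : ℒ × 𝒰A → 𝒜) (hh : Measurable h)
    (k : ℒ × 𝒜 × 𝒰Y → ℝ) (hk : Measurable k)
    (A : Ω → 𝒜) (Y : Ω → ℝ)
    (hA : ∀ ω, A ω = h (L ω, UA ω))
    (hY : ∀ ω, Y ω = k (L ω, A ω, UY ω))
    (Ypo : 𝒜 → Ω → ℝ)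
    (hYpo : ∀ (a : 𝒜) (ω : Ω), Ypo a ω = k (L ω, a, UY ω))
    (hIntY : Integrable Y μ)
    (hIntYpo : ∀ a : 𝒜, Integrable (Ypo a) μ) :
    ∀ a : 𝒜, (∀ l : ℒ, 0 < μ {ω | L ω = l ∧ A ω = a}) →
      ∫ ω, Ypo a ω ∂μ
        = ∑ l : ℒ, (μ {ω | L ω = l}).toReal * cexp μ Y {ω | L ω = l ∧ A ω = a} :=
  adjustment_scm_backdoor_general μ L UA UY hL hUA hUY hIndep h hh k hk A Y hA hY Ypo hYpo hIntYpo
end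

section
/- In the discrete lm-SCM for the motivating example (Figure 1c), under Positivity, the FATE is recovered by the sequential-factorization estimand of Equations (4)–(5): φ = Σ_{w ∈ 𝒲} μ(W = w) · Σ_{y ∈ 𝒴₀} μ(Y₀ = y | W = w, R = 1) · (Q₁(w, y, 1) − Q₁(w, y, 0)), where Q₁(w, y, a) := E[Y₁ | W = w, Y₀ = y, A = a, R = 1]. -/
open MeasureTheory ProbabilityTheory

/-!
Everything upstream of `Y₁`, namely `(W, Y₀, A, R)`, is a measurable function of
`(W, U₀, U_R, U_A)` and hence independent of `U_Y`. On `{W = w, Y₀ = y, A = a, R = 1}` the outcome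
is `f_Y (w, y, a, U_Y)`, so `Q₁ (w, y, a) = E[f_Y (w, y, a, U_Y)]`, and by the same independence
`E[Y₁ᵃ¹] = Σ_{w,y} μ(W = w, Y₀ = y) · E[f_Y (w, y, a, U_Y)]`. Finally `R` depends on `(W, U_R)`
only and `U_R` is independent of `(W, Y₀)`, so conditioning on `R = 1` leaves the law of `Y₀`
given `W` unchanged: `μ(W = w) · μ(Y₀ = y | W = w, R = 1) = μ(W = w, Y₀ = y)`.
-/

section Independence

variable {Ω : Type*} {M N mΩ : MeasurableSpace Ω} {μ : Measure Ω}

theorem indepFun_of_iIndep_of_disjoint {ι β γ : Type*} [MeasurableSpace β] [MeasurableSpace γ]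
    {m : ι → MeasurableSpace Ω} (hle : ∀ i, m i ≤ mΩ) (hm : iIndep m μ) {S T : Set ι}
    (hST : Disjoint S T) {X : Ω → β} {Z : Ω → γ} (hX : Measurable[⨆ i ∈ S, m i] X)
    (hZ : Measurable[⨆ i ∈ T, m i] Z) :
    IndepFun X Z μ := by
  rw [IndepFun_iff_Indep]
  exact indep_of_indep_of_le_right (indep_of_indep_of_le_left
    (indep_iSup_of_disjoint hle hm hST) hX.comap_le) hZ.comap_le

/-- No integrability is assumed: when `g` is not integrable, it is not integrable on `E` either
(unless `μ E = 0`), and both sides are the junk value `0`. -/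
theorem setIntegral_eq_measureReal_mul_integral_of_indep (hM : M ≤ mΩ) (hN : N ≤ mΩ)
    (hMN : Indep M N μ) {E : Set Ω} (hE : MeasurableSet[M] E) {g : Ω → ℝ}
    (hg : Measurable[N] g) :
    ∫ ω in E, g ω ∂μ = μ.real E * ∫ ω, g ω ∂μ := by
  have hEm := hM _ hE
  have hind : IndepFun (E.indicator (1 : Ω → ℝ)) g μ := by
    have h1 : Measurable[M] (E.indicator (1 : Ω → ℝ)) := measurable_const.indicator hE
    rw [IndepFun_iff_Indep]
    exact indep_of_indep_of_le_left (indep_of_indep_of_le_right hMN hg.comap_le) h1.comap_le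
  calc ∫ ω in E, g ω ∂μ = ∫ ω, (E.indicator (1 : Ω → ℝ) * g) ω ∂μ := by
        rw [← integral_indicator hEm]
        congr 1 with ω
        by_cases hω : ω ∈ E <;> simp [hω]
    _ = μ.real E * ∫ ω, g ω ∂μ := by
        rw [hind.integral_mul_eq_mul_integral (measurable_one.indicator hEm).aestronglyMeasurable
          (hg.mono hN le_rfl).aestronglyMeasurable, integral_indicator_one hEm]

theorem integral_eq_sum_measureReal_fiber_mul_of_indep {β : Type*} [Fintype β]
    [MeasurableSpace β] [MeasurableSingletonClass β] (hM : M ≤ mΩ) (hN : N ≤ mΩ)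
    (hMN : Indep M N μ) {V : Ω → β} (hV : Measurable[M] V) {X : Ω → ℝ} (hX : Integrable X μ)
    {g : β → Ω → ℝ} (hg : ∀ b, Measurable[N] (g b)) (hXg : ∀ ω, X ω = g (V ω) ω) :
    ∫ ω, X ω ∂μ = ∑ b, μ.real (V ⁻¹' {b}) * ∫ ω, g b ω ∂μ := by
  have hfiber (b : β) : MeasurableSet[M] (V ⁻¹' {b}) := hV (measurableSet_singleton b)
  calc ∫ ω, X ω ∂μ = ∫ ω in ⋃ b, V ⁻¹' {b}, X ω ∂μ := by
        rw [← Set.preimage_iUnion, Set.iUnion_of_singleton, Set.preimage_univ,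
          Measure.restrict_univ]
    _ = ∑ b, ∫ ω in V ⁻¹' {b}, g b ω ∂μ := by
        rw [integral_iUnion_fintype (fun b => hM _ (hfiber b)) (pairwise_disjoint_fiber V)
          fun _ => hX.integrableOn]
        refine Finset.sum_congr rfl fun b _ => setIntegral_congr_fun (hM _ (hfiber b)) ?_
        rintro ω rfl
        exact hXg ω
    _ = ∑ b, μ.real (V ⁻¹' {b}) * ∫ ω, g b ω ∂μ := by
        simp only [setIntegral_eq_measureReal_mul_integral_of_indep hM hN hMN (hfiber _) (hg _)]

theorem cexp_eq_integral_of_indep [IsFiniteMeasure μ] (hM : M ≤ mΩ) (hN : N ≤ mΩ)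
    (hMN : Indep M N μ) {E : Set Ω} (hE : MeasurableSet[M] E) (hμE : μ E ≠ 0) {X g : Ω → ℝ}
    (hg : Measurable[N] g) (hXg : ∀ ω ∈ E, X ω = g ω) :
    cexp μ X E = ∫ ω, g ω ∂μ := by
  rw [cexp, setIntegral_congr_fun (hM _ hE) hXg,
    setIntegral_eq_measureReal_mul_integral_of_indep hM hN hMN hE hg, ← measureReal_def,
    inv_mul_cancel_left₀ ((measureReal_ne_zero_iff (measure_ne_top μ E)).2 hμE)]

theorem measure_mul_cprob_inter_of_indep [IsFiniteMeasure μ] (hMN : Indep M N μ)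
    {s t u : Set Ω} (hs : MeasurableSet[M] s) (ht : MeasurableSet[M] t)
    (hu : MeasurableSet[N] u) (hsu : μ (s ∩ u) ≠ 0) :
    μ s * cprob μ t (s ∩ u) = μ (t ∩ s) := by
  rw [Indep_iff] at hMN
  have hs0 : μ s ≠ 0 := fun h => hsu (measure_mono_null Set.inter_subset_left h)
  have hu0 : μ u ≠ 0 := fun h => hsu (measure_mono_null Set.inter_subset_right h)
  rw [cprob, ← Set.inter_assoc, hMN _ _ (ht.inter hs) hu, hMN _ _ hs hu,
    ENNReal.mul_div_mul_right _ _ hu0 (measure_ne_top μ u),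
    ENNReal.mul_div_cancel hs0 (measure_ne_top μ s)]

end Independence

section LmSCM

variable {Ω 𝒲 𝒴₀ 𝒰₀ 𝒰R 𝒰A 𝒰Y : Type*} {mΩ : MeasurableSpace Ω} [MeasurableSpace 𝒲]
  [MeasurableSpace 𝒴₀] [MeasurableSpace 𝒰₀] [MeasurableSpace 𝒰R] [MeasurableSpace 𝒰A]
  [MeasurableSpace 𝒰Y] {μ : Measure Ω}
  {W : Ω → 𝒲} {U₀ : Ω → 𝒰₀} {UR : Ω → 𝒰R} {UA : Ω → 𝒰A} {UY : Ω → 𝒰Y}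
  {f₀ : 𝒲 × 𝒰₀ → 𝒴₀} {fR : 𝒲 × 𝒰R → Fin 2} {fA : 𝒲 × 𝒴₀ × 𝒰A → Fin 2} {gA : 𝒲 × 𝒰A → Fin 2}
  {Y₀ : Ω → 𝒴₀} {R A : Ω → Fin 2}

abbrev exogenousSigma (W : Ω → 𝒲) (U₀ : Ω → 𝒰₀) (UR : Ω → 𝒰R) (UA : Ω → 𝒰A) (UY : Ω → 𝒰Y) :
    Fin 5 → MeasurableSpace Ω :=
  ![MeasurableSpace.comap W inferInstance, MeasurableSpace.comap U₀ inferInstance,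
    MeasurableSpace.comap UR inferInstance, MeasurableSpace.comap UA inferInstance,
    MeasurableSpace.comap UY inferInstance]

theorem exogenousSigma_le (hW : Measurable W) (hU₀ : Measurable U₀) (hUR : Measurable UR)
    (hUA : Measurable UA) (hUY : Measurable UY) (i : Fin 5) :
    exogenousSigma W U₀ UR UA UY i ≤ mΩ := by
  fin_cases i
  exacts [hW.comap_le, hU₀.comap_le, hUR.comap_le, hUA.comap_le, hUY.comap_le]

theorem measurable_history {M : MeasurableSpace Ω} (hW : Measurable[M] W)
    (hU₀ : Measurable[M] U₀) (hUR : Measurable[M] UR) (hUA : Measurable[M] UA)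
    (hf₀ : Measurable f₀) (hfR : Measurable fR) (hfA : Measurable fA) (hgA : Measurable gA)
    (hY₀ : ∀ ω, Y₀ ω = f₀ (W ω, U₀ ω)) (hR : ∀ ω, R ω = fR (W ω, UR ω))
    (hA : ∀ ω, A ω = if R ω = 1 then fA (W ω, Y₀ ω, UA ω) else gA (W ω, UA ω)) :
    Measurable[M] fun ω => (W ω, Y₀ ω, A ω, R ω) := by
  have hY₀M : Measurable[M] Y₀ := by rw [funext hY₀]; exact hf₀.comp (hW.prodMk hU₀)
  have hRM : Measurable[M] R := by rw [funext hR]; exact hfR.comp (hW.prodMk hUR)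
  have hAM : Measurable[M] A := by
    rw [funext hA]
    exact Measurable.ite (hRM (measurableSet_singleton 1))
      (hfA.comp (hW.prodMk (hY₀M.prodMk hUA))) (hgA.comp (hW.prodMk hUA))
  exact hW.prodMk (hY₀M.prodMk (hAM.prodMk hRM))

theorem indepFun_history_noiseY (hW : Measurable W) (hU₀ : Measurable U₀)
    (hUR : Measurable UR) (hUA : Measurable UA) (hUY : Measurable UY)
    (hIndep : iIndep (exogenousSigma W U₀ UR UA UY) μ)
    (hf₀ : Measurable f₀) (hfR : Measurable fR) (hfA : Measurable fA) (hgA : Measurable gA)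
    (hY₀ : ∀ ω, Y₀ ω = f₀ (W ω, U₀ ω)) (hR : ∀ ω, R ω = fR (W ω, UR ω))
    (hA : ∀ ω, A ω = if R ω = 1 then fA (W ω, Y₀ ω, UA ω) else gA (W ω, UA ω)) :
    IndepFun (fun ω => (W ω, Y₀ ω, A ω, R ω)) UY μ := by
  set m := exogenousSigma W U₀ UR UA UY
  refine indepFun_of_iIndep_of_disjoint (exogenousSigma_le hW hU₀ hUR hUA hUY) hIndep
    (S := {0, 1, 2, 3}) (T := {4}) (Set.disjoint_singleton_right.2 (by simp))
    (measurable_history ?_ ?_ ?_ ?_ hf₀ hfR hfA hgA hY₀ hR hA)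
    ((comap_measurable UY).mono (le_biSup m (i := 4) rfl) le_rfl)
  exacts [(comap_measurable W).mono (le_biSup m (i := 0) (by simp)) le_rfl,
    (comap_measurable U₀).mono (le_biSup m (i := 1) (by simp)) le_rfl,
    (comap_measurable UR).mono (le_biSup m (i := 2) (by simp)) le_rfl,
    (comap_measurable UA).mono (le_biSup m (i := 3) (by simp)) le_rfl]

theorem indepFun_baseline_noiseR (hW : Measurable W) (hU₀ : Measurable U₀)
    (hUR : Measurable UR) (hUA : Measurable UA) (hUY : Measurable UY)
    (hIndep : iIndep (exogenousSigma W U₀ UR UA UY) μ)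
    (hf₀ : Measurable f₀) (hY₀ : ∀ ω, Y₀ ω = f₀ (W ω, U₀ ω)) :
    IndepFun (fun ω => (W ω, Y₀ ω)) UR μ := by
  set m := exogenousSigma W U₀ UR UA UY
  have hWM : Measurable[⨆ i ∈ ({0, 1} : Set (Fin 5)), m i] W :=
    (comap_measurable W).mono (le_biSup m (i := 0) (by simp)) le_rfl
  have hU₀M : Measurable[⨆ i ∈ ({0, 1} : Set (Fin 5)), m i] U₀ :=
    (comap_measurable U₀).mono (le_biSup m (i := 1) (by simp)) le_rfl
  refine indepFun_of_iIndep_of_disjoint (exogenousSigma_le hW hU₀ hUR hUA hUY) hIndep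
    (S := {0, 1}) (T := {2}) (Set.disjoint_singleton_right.2 (by simp)) ?_
    ((comap_measurable UR).mono (le_biSup m (i := 2) rfl) le_rfl)
  rw [funext hY₀]
  exact hWM.prodMk (hf₀.comp (hWM.prodMk hU₀M))

variable {fY : 𝒲 × 𝒴₀ × Fin 2 × 𝒰Y → ℝ}

theorem cexp_outcome_eq_integral [IsFiniteMeasure μ] [MeasurableSingletonClass 𝒲]
    [MeasurableSingletonClass 𝒴₀] (hX : Measurable fun ω => (W ω, Y₀ ω, A ω, R ω))
    (hUY : Measurable UY) (hXUY : IndepFun (fun ω => (W ω, Y₀ ω, A ω, R ω)) UY μ)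
    (hfY : Measurable fY) {Y₁ : Ω → ℝ} (hY₁ : ∀ ω, R ω = 1 → Y₁ ω = fY (W ω, Y₀ ω, A ω, UY ω))
    {w : 𝒲} {y : 𝒴₀} {a : Fin 2} (hpos : μ {ω | W ω = w ∧ Y₀ ω = y ∧ A ω = a ∧ R ω = 1} ≠ 0) :
    cexp μ Y₁ {ω | W ω = w ∧ Y₀ ω = y ∧ A ω = a ∧ R ω = 1} = ∫ ω, fY (w, y, a, UY ω) ∂μ := by
  refine cexp_eq_integral_of_indep hX.comap_le hUY.comap_le ((IndepFun_iff_Indep _ _ _).1 hXUY)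
    (MeasurableSpace.measurableSet_comap.2
      ⟨{(w, y, a, 1)}, measurableSet_singleton _, by ext; simp⟩)
    hpos ((by fun_prop : Measurable fun u => fY (w, y, a, u)).comp (comap_measurable UY)) ?_
  rintro ω ⟨rfl, rfl, rfl, hr⟩
  exact hY₁ ω hr

theorem integral_eq_sum_measureReal_mul_integral_outcome [Fintype 𝒲] [MeasurableSingletonClass 𝒲]
    [Fintype 𝒴₀] [MeasurableSingletonClass 𝒴₀] (hV : Measurable fun ω => (W ω, Y₀ ω))
    (hUY : Measurable UY) (hVUY : IndepFun (fun ω => (W ω, Y₀ ω)) UY μ) (hfY : Measurable fY)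
    {a : Fin 2} {Y : Ω → ℝ} (hY : ∀ ω, Y ω = fY (W ω, Y₀ ω, a, UY ω)) (hYint : Integrable Y μ) :
    ∫ ω, Y ω ∂μ = ∑ w, ∑ y,
      μ.real {ω | W ω = w ∧ Y₀ ω = y} * ∫ ω, fY (w, y, a, UY ω) ∂μ := by
  rw [integral_eq_sum_measureReal_fiber_mul_of_indep hV.comap_le hUY.comap_le
    ((IndepFun_iff_Indep _ _ _).1 hVUY) (comap_measurable _) hYint
    (g := fun p ω => fY (p.1, p.2, a, UY ω))
    (fun p => (by fun_prop : Measurable fun u => fY (p.1, p.2, a, u)).comp (comap_measurable UY))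
    hY,
    Fintype.sum_prod_type]
  congr! with w _ y _
  ext ω
  simp [Prod.ext_iff]

theorem measure_mul_cprob_baseline [IsFiniteMeasure μ] [MeasurableSingletonClass 𝒲]
    [MeasurableSingletonClass 𝒴₀] (hVUR : IndepFun (fun ω => (W ω, Y₀ ω)) UR μ)
    (hfR : Measurable fR) (hR : ∀ ω, R ω = fR (W ω, UR ω)) {w : 𝒲} (y : 𝒴₀)
    (hpos : μ {ω | W ω = w ∧ R ω = 1} ≠ 0) :
    μ {ω | W ω = w} * cprob μ {ω | Y₀ ω = y} {ω | W ω = w ∧ R ω = 1}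
      = μ {ω | W ω = w ∧ Y₀ ω = y} := by
  have hWR : {ω | W ω = w ∧ R ω = 1} = W ⁻¹' {w} ∩ UR ⁻¹' {u | fR (w, u) = 1} := by
    ext ω
    simp only [Set.mem_ofPred_eq, Set.mem_inter_iff, Set.mem_preimage, Set.mem_singleton_iff, hR]
    constructor <;> rintro ⟨rfl, h⟩ <;> exact ⟨rfl, h⟩
  rw [hWR] at hpos ⊢
  rw [show {ω | W ω = w} = W ⁻¹' {w} from rfl, measure_mul_cprob_inter_of_indep
    (s := W ⁻¹' {w}) (t := {ω | Y₀ ω = y}) (u := UR ⁻¹' {u | fR (w, u) = 1})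
    ((IndepFun_iff_Indep _ _ _).1 hVUR)
    ((measurable_fst.comp (comap_measurable _)) (measurableSet_singleton w))
    ((measurable_snd.comp (comap_measurable _)) (measurableSet_singleton y))
    (comap_measurable UR ((hfR.comp measurable_prodMk_left) (measurableSet_singleton 1))) hpos]
  congr 1 with ω
  simp [and_comm]

end LmSCM

theorem lmSCM_fate_recovery_general
    {Ω 𝒲 𝒴₀ 𝒰₀ 𝒰R 𝒰A 𝒰Y : Type*}
    [MeasurableSpace Ω]
    [Fintype 𝒲] [MeasurableSpace 𝒲] [MeasurableSingletonClass 𝒲]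
    [Fintype 𝒴₀] [MeasurableSpace 𝒴₀] [MeasurableSingletonClass 𝒴₀]
    [MeasurableSpace 𝒰₀] [MeasurableSpace 𝒰R] [MeasurableSpace 𝒰A] [MeasurableSpace 𝒰Y]
    (μ : Measure Ω) [IsProbabilityMeasure μ]
    (W : Ω → 𝒲) (U₀ : Ω → 𝒰₀) (UR : Ω → 𝒰R) (UA : Ω → 𝒰A) (UY : Ω → 𝒰Y)
    (hW : Measurable W) (hU₀ : Measurable U₀) (hUR : Measurable UR)
    (hUA : Measurable UA) (hUY : Measurable UY)
    (hIndep : iIndep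
      (![MeasurableSpace.comap W inferInstance, MeasurableSpace.comap U₀ inferInstance,
         MeasurableSpace.comap UR inferInstance, MeasurableSpace.comap UA inferInstance,
         MeasurableSpace.comap UY inferInstance] : Fin 5 → MeasurableSpace Ω) μ)
    (f₀ : 𝒲 × 𝒰₀ → 𝒴₀) (hf₀ : Measurable f₀)
    (fR : 𝒲 × 𝒰R → Fin 2) (hfR : Measurable fR)
    (fA : 𝒲 × 𝒴₀ × 𝒰A → Fin 2) (hfA : Measurable fA)
    (gA : 𝒲 × 𝒰A → Fin 2) (hgA : Measurable gA)
    (fY : 𝒲 × 𝒴₀ × Fin 2 × 𝒰Y → ℝ) (hfY : Measurable fY)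
    (gY : 𝒲 × Fin 2 × 𝒰Y → ℝ)
    (Y₀ : Ω → 𝒴₀) (R A : Ω → Fin 2) (Y₁ : Ω → ℝ)
    (hY₀ : ∀ ω, Y₀ ω = f₀ (W ω, U₀ ω))
    (hR : ∀ ω, R ω = fR (W ω, UR ω))
    (hA : ∀ ω, A ω = if R ω = 1 then fA (W ω, Y₀ ω, UA ω) else gA (W ω, UA ω))
    (hY₁ : ∀ ω, Y₁ ω = if R ω = 1 then fY (W ω, Y₀ ω, A ω, UY ω) else gY (W ω, A ω, UY ω))
    (Yful : Fin 2 → Ω → ℝ)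
    (hYful : ∀ (a : Fin 2) (ω : Ω), Yful a ω = fY (W ω, Y₀ ω, a, UY ω))
    (hIntF0 : Integrable (Yful 0) μ) (hIntF1 : Integrable (Yful 1) μ)
    (hpos : ∀ (w : 𝒲) (y : 𝒴₀) (r a : Fin 2),
      0 < μ {ω | W ω = w ∧ Y₀ ω = y ∧ R ω = r ∧ A ω = a})
    (Q1 : 𝒲 → 𝒴₀ → Fin 2 → ℝ)
    (hQ1 : ∀ (w : 𝒲) (y : 𝒴₀) (a : Fin 2),
      Q1 w y a = cexp μ Y₁ {ω | W ω = w ∧ Y₀ ω = y ∧ A ω = a ∧ R ω = 1})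
    :
    (∫ ω, Yful 1 ω ∂μ) - (∫ ω, Yful 0 ω ∂μ)
      = ∑ w : 𝒲, (μ {ω | W ω = w}).toReal *
          ∑ y : 𝒴₀, (cprob μ {ω | Y₀ ω = y} {ω | W ω = w ∧ R ω = 1}).toReal *
            (Q1 w y 1 - Q1 w y 0) := by
  have hX := measurable_history hW hU₀ hUR hUA hf₀ hfR hfA hgA hY₀ hR hA
  have hXUY := indepFun_history_noiseY hW hU₀ hUR hUA hUY hIndep hf₀ hfR hfA hgA hY₀ hR hA
  have hVUR := indepFun_baseline_noiseR hW hU₀ hUR hUA hUY hIndep hf₀ hY₀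
  have hproj : Measurable fun x : 𝒲 × 𝒴₀ × Fin 2 × Fin 2 => (x.1, x.2.1) := by fun_prop
  have hV : Measurable fun ω => (W ω, Y₀ ω) := hproj.comp hX
  have hVUY : IndepFun (fun ω => (W ω, Y₀ ω)) UY μ := hXUY.comp hproj measurable_id
  have hQ (w : 𝒲) (y : 𝒴₀) (a : Fin 2) : Q1 w y a = ∫ ω, fY (w, y, a, UY ω) ∂μ := by
    have hE : μ {ω | W ω = w ∧ Y₀ ω = y ∧ A ω = a ∧ R ω = 1} ≠ 0 := by
      refine ((hpos w y 1 a).trans_le (measure_mono ?_)).ne'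
      exact fun ω ⟨hw, hy, hr, ha⟩ => ⟨hw, hy, ha, hr⟩
    rw [hQ1, cexp_outcome_eq_integral hX hUY hXUY hfY (fun ω hr => by rw [hY₁, if_pos hr]) hE]
  have hC (w : 𝒲) (y : 𝒴₀) :
      (μ {ω | W ω = w}).toReal * (cprob μ {ω | Y₀ ω = y} {ω | W ω = w ∧ R ω = 1}).toReal
        = μ.real {ω | W ω = w ∧ Y₀ ω = y} := by
    have hWR : μ {ω | W ω = w ∧ R ω = 1} ≠ 0 := by
      refine ((hpos w y 1 0).trans_le (measure_mono ?_)).ne'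
      exact fun ω ⟨hw, _, hr, _⟩ => ⟨hw, hr⟩
    rw [← ENNReal.toReal_mul, measure_mul_cprob_baseline hVUR hfR hR y hWR, measureReal_def]
  rw [integral_eq_sum_measureReal_mul_integral_outcome hV hUY hVUY hfY (hYful 1) hIntF1,
    integral_eq_sum_measureReal_mul_integral_outcome hV hUY hVUY hfY (hYful 0) hIntF0,
    ← Finset.sum_sub_distrib]
  refine Finset.sum_congr rfl fun w _ => ?_
  rw [← Finset.sum_sub_distrib, Finset.mul_sum]
  refine Finset.sum_congr rfl fun y _ => ?_
  rw [hQ, hQ, ← mul_assoc, hC]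
  ring

/-- In the discrete lm-SCM of Figure 1c, under positivity, the FATE is recovered by the sequential-factorization estimand of Equations (4)-(5). -/
theorem lmSCM_fate_recovery
    {Ω 𝒲 𝒴₀ 𝒰₀ 𝒰R 𝒰A 𝒰Y : Type*}
    [MeasurableSpace Ω]
    [Fintype 𝒲] [Nonempty 𝒲] [MeasurableSpace 𝒲] [MeasurableSingletonClass 𝒲]
    [Fintype 𝒴₀] [Nonempty 𝒴₀] [MeasurableSpace 𝒴₀] [MeasurableSingletonClass 𝒴₀]
    [MeasurableSpace 𝒰₀] [MeasurableSpace 𝒰R] [MeasurableSpace 𝒰A] [MeasurableSpace 𝒰Y]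
    (μ : Measure Ω) [IsProbabilityMeasure μ]
    (W : Ω → 𝒲) (U₀ : Ω → 𝒰₀) (UR : Ω → 𝒰R) (UA : Ω → 𝒰A) (UY : Ω → 𝒰Y)
    (hW : Measurable W) (hU₀ : Measurable U₀) (hUR : Measurable UR)
    (hUA : Measurable UA) (hUY : Measurable UY)
    (hIndep : iIndep
      (![MeasurableSpace.comap W inferInstance, MeasurableSpace.comap U₀ inferInstance,
         MeasurableSpace.comap UR inferInstance, MeasurableSpace.comap UA inferInstance,
         MeasurableSpace.comap UY inferInstance] : Fin 5 → MeasurableSpace Ω) μ)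
    (f₀ : 𝒲 × 𝒰₀ → 𝒴₀) (hf₀ : Measurable f₀)
    (fR : 𝒲 × 𝒰R → Fin 2) (hfR : Measurable fR)
    (fA : 𝒲 × 𝒴₀ × 𝒰A → Fin 2) (hfA : Measurable fA)
    (gA : 𝒲 × 𝒰A → Fin 2) (hgA : Measurable gA)
    (fY : 𝒲 × 𝒴₀ × Fin 2 × 𝒰Y → ℝ) (hfY : Measurable fY)
    (gY : 𝒲 × Fin 2 × 𝒰Y → ℝ) (hgY : Measurable gY)
    (Y₀ : Ω → 𝒴₀) (R A : Ω → Fin 2) (Y₁ : Ω → ℝ)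
    (hY₀ : ∀ ω, Y₀ ω = f₀ (W ω, U₀ ω))
    (hR : ∀ ω, R ω = fR (W ω, UR ω))
    (hA : ∀ ω, A ω = if R ω = 1 then fA (W ω, Y₀ ω, UA ω) else gA (W ω, UA ω))
    (hY₁ : ∀ ω, Y₁ ω = if R ω = 1 then fY (W ω, Y₀ ω, A ω, UY ω) else gY (W ω, A ω, UY ω))
    (Ynat : Fin 2 → Ω → ℝ)
    (hYnat : ∀ (a : Fin 2) (ω : Ω),
      Ynat a ω = if R ω = 1 then fY (W ω, Y₀ ω, a, UY ω) else gY (W ω, a, UY ω))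
    (Yful : Fin 2 → Ω → ℝ)
    (hYful : ∀ (a : Fin 2) (ω : Ω), Yful a ω = fY (W ω, Y₀ ω, a, UY ω))
    (hIntY₁ : Integrable Y₁ μ)
    (hIntN0 : Integrable (Ynat 0) μ) (hIntN1 : Integrable (Ynat 1) μ)
    (hIntF0 : Integrable (Yful 0) μ) (hIntF1 : Integrable (Yful 1) μ)
    (hpos : ∀ (w : 𝒲) (y : 𝒴₀) (r a : Fin 2),
      0 < μ {ω | W ω = w ∧ Y₀ ω = y ∧ R ω = r ∧ A ω = a})
    (Q1 : 𝒲 → 𝒴₀ → Fin 2 → ℝ)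
    (hQ1 : ∀ (w : 𝒲) (y : 𝒴₀) (a : Fin 2),
      Q1 w y a = cexp μ Y₁ {ω | W ω = w ∧ Y₀ ω = y ∧ A ω = a ∧ R ω = 1})
    (Q0 : 𝒲 → Fin 2 → ℝ)
    (hQ0 : ∀ (w : 𝒲) (a : Fin 2), Q0 w a = cexp μ Y₁ {ω | W ω = w ∧ A ω = a ∧ R ω = 0})
    :
    (∫ ω, Yful 1 ω ∂μ) - (∫ ω, Yful 0 ω ∂μ)
      = ∑ w : 𝒲, (μ {ω | W ω = w}).toReal *
          ∑ y : 𝒴₀, (cprob μ {ω | Y₀ ω = y} {ω | W ω = w ∧ R ω = 1}).toReal *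
            (Q1 w y 1 - Q1 w y 0) :=
  lmSCM_fate_recovery_general μ W U₀ UR UA UY hW hU₀ hUR hUA hUY hIndep f₀ hf₀ fR hfR fA hfA gA hgA
    fY hfY gY Y₀ R A Y₁ hY₀ hR hA hY₁ Yful hYful hIntF0 hIntF1 hpos Q1 hQ1
end

section
/- In the discrete lm-SCM for the motivating example (Figure 1c), under Positivity, the full interventional distribution P(Y₁ | do(A = a, R = 1)) is recovered at the distribution level: for every a ∈ {0,1} and every Borel set S ⊆ ℝ, μ(Y₁ᵃ¹ ∈ S) = Σ_{w ∈ 𝒲} Σ_{y ∈ 𝒴₀} μ(W = w) · μ(Y₀ = y | W = w, R = 1) · μ(Y₁ ∈ S | W = w, Y₀ = y, A = a, R = 1). -/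
open MeasureTheory ProbabilityTheory

lemma partition_sum_aux {Ω β : Type*} [MeasurableSpace Ω] [Fintype β] [MeasurableSpace β]
    [MeasurableSingletonClass β] (μ : Measure Ω) (g : Ω → β) (hg : Measurable g)
    (s : Set Ω) : μ s = ∑ b : β, μ (s ∩ g ⁻¹' {b}) := by
  calc μ s = μ.restrict s (g ⁻¹' ↑(Finset.univ : Finset β)) := by
        simp [Measure.restrict_apply_univ]
    _ = ∑ b : β, μ.restrict s (g ⁻¹' {b}) := (sum_measure_preimage_singleton _
        (fun y _ => hg (measurableSet_singleton y))).symm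
    _ = ∑ b : β, μ (s ∩ g ⁻¹' {b}) := Finset.sum_congr rfl (fun b _ => by
        rw [Measure.restrict_apply (hg (measurableSet_singleton b)), Set.inter_comm])

lemma indep_five_aux {Ω : Type*} [MeasurableSpace Ω] (μ : Measure Ω)
    (m : Fin 5 → MeasurableSpace Ω)
    (h : iIndep m μ) (E0 E1 E2 E3 E4 : Set Ω)
    (h0 : MeasurableSet[m 0] E0) (h1 : MeasurableSet[m 1] E1) (h2 : MeasurableSet[m 2] E2)
    (h3 : MeasurableSet[m 3] E3) (h4 : MeasurableSet[m 4] E4) :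
    μ (E0 ∩ (E1 ∩ (E2 ∩ (E3 ∩ E4)))) = μ E0 * μ E1 * μ E2 * μ E3 * μ E4 ∧
    μ (E0 ∩ (E1 ∩ (E2 ∩ E3))) = μ E0 * μ E1 * μ E2 * μ E3 ∧
    μ (E0 ∩ E2) = μ E0 * μ E2 ∧
    μ (E0 ∩ (E1 ∩ E2)) = μ E0 * μ E1 * μ E2 ∧
    μ (E0 ∩ (E1 ∩ E4)) = μ E0 * μ E1 * μ E4 := by
  have hm : ∀ i, MeasurableSet[m i] (![E0,E1,E2,E3,E4] i) := by
    intro i; fin_cases i <;> simpa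
  have key : ∀ s : Finset (Fin 5), μ (⋂ i ∈ s, ![E0,E1,E2,E3,E4] i)
      = ∏ i ∈ s, μ (![E0,E1,E2,E3,E4] i) :=
    fun s => h.meas_biInter (fun i _ => hm i)
  refine ⟨?_, ?_, ?_, ?_, ?_⟩
  · have := key {0,1,2,3,4}; simpa [Finset.prod_insert, mul_assoc] using this
  · have := key {0,1,2,3}; simpa [Finset.prod_insert, mul_assoc] using this
  · have := key {0,2}; simpa [Finset.prod_insert, mul_assoc] using this
  · have := key {0,1,2}; simpa [Finset.prod_insert, mul_assoc] using this
  · have := key {0,1,4}; simpa [Finset.prod_insert, mul_assoc] using this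

/-- In the discrete lm-SCM of Figure 1c, under positivity, the full interventional distribution `P(Y₁ | do(A = a, R = 1))` is recovered at the distribution level. -/
theorem lmSCM_full_interventional_distribution_recovery
    {Ω 𝒲 𝒴₀ 𝒰₀ 𝒰R 𝒰A 𝒰Y : Type*}
    [MeasurableSpace Ω]
    [Fintype 𝒲] [Nonempty 𝒲] [MeasurableSpace 𝒲] [MeasurableSingletonClass 𝒲]
    [Fintype 𝒴₀] [Nonempty 𝒴₀] [MeasurableSpace 𝒴₀] [MeasurableSingletonClass 𝒴₀]
    [MeasurableSpace 𝒰₀] [MeasurableSpace 𝒰R] [MeasurableSpace 𝒰A] [MeasurableSpace 𝒰Y]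
    (μ : Measure Ω) [IsProbabilityMeasure μ]
    (W : Ω → 𝒲) (U₀ : Ω → 𝒰₀) (UR : Ω → 𝒰R) (UA : Ω → 𝒰A) (UY : Ω → 𝒰Y)
    (hW : Measurable W) (hU₀ : Measurable U₀) (hUR : Measurable UR)
    (hUA : Measurable UA) (hUY : Measurable UY)
    (hIndep : iIndep
      (![MeasurableSpace.comap W inferInstance, MeasurableSpace.comap U₀ inferInstance,
         MeasurableSpace.comap UR inferInstance, MeasurableSpace.comap UA inferInstance,
         MeasurableSpace.comap UY inferInstance] : Fin 5 → MeasurableSpace Ω) μ)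
    (f₀ : 𝒲 × 𝒰₀ → 𝒴₀) (hf₀ : Measurable f₀)
    (fR : 𝒲 × 𝒰R → Fin 2) (hfR : Measurable fR)
    (fA : 𝒲 × 𝒴₀ × 𝒰A → Fin 2) (hfA : Measurable fA)
    (gA : 𝒲 × 𝒰A → Fin 2) (hgA : Measurable gA)
    (fY : 𝒲 × 𝒴₀ × Fin 2 × 𝒰Y → ℝ) (hfY : Measurable fY)
    (gY : 𝒲 × Fin 2 × 𝒰Y → ℝ) (hgY : Measurable gY)
    (Y₀ : Ω → 𝒴₀) (R A : Ω → Fin 2) (Y₁ : Ω → ℝ)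
    (hY₀ : ∀ ω, Y₀ ω = f₀ (W ω, U₀ ω))
    (hR : ∀ ω, R ω = fR (W ω, UR ω))
    (hA : ∀ ω, A ω = if R ω = 1 then fA (W ω, Y₀ ω, UA ω) else gA (W ω, UA ω))
    (hY₁ : ∀ ω, Y₁ ω = if R ω = 1 then fY (W ω, Y₀ ω, A ω, UY ω) else gY (W ω, A ω, UY ω))
    (Ynat : Fin 2 → Ω → ℝ)
    (hYnat : ∀ (a : Fin 2) (ω : Ω),
      Ynat a ω = if R ω = 1 then fY (W ω, Y₀ ω, a, UY ω) else gY (W ω, a, UY ω))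
    (Yful : Fin 2 → Ω → ℝ)
    (hYful : ∀ (a : Fin 2) (ω : Ω), Yful a ω = fY (W ω, Y₀ ω, a, UY ω))
    (hIntY₁ : Integrable Y₁ μ)
    (hIntN0 : Integrable (Ynat 0) μ) (hIntN1 : Integrable (Ynat 1) μ)
    (hIntF0 : Integrable (Yful 0) μ) (hIntF1 : Integrable (Yful 1) μ)
    (hpos : ∀ (w : 𝒲) (y : 𝒴₀) (r a : Fin 2),
      0 < μ {ω | W ω = w ∧ Y₀ ω = y ∧ R ω = r ∧ A ω = a})
    :
    ∀ (a : Fin 2) (S : Set ℝ), MeasurableSet S →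
      μ {ω | Yful a ω ∈ S}
        = ∑ w : 𝒲, ∑ y : 𝒴₀,
            μ {ω | W ω = w} * cprob μ {ω | Y₀ ω = y} {ω | W ω = w ∧ R ω = 1}
              * cprob μ {ω | Y₁ ω ∈ S} {ω | W ω = w ∧ Y₀ ω = y ∧ A ω = a ∧ R ω = 1} := by
  intro a S hS
  have hY₀m : Measurable Y₀ := by
    have h : Y₀ = fun ω => f₀ (W ω, U₀ ω) := funext hY₀
    rw [h]; exact hf₀.comp (hW.prodMk hU₀)
  have hYfm : Measurable (Yful a) := by
    have h : Yful a = fun ω => fY (W ω, Y₀ ω, a, UY ω) := funext (hYful a)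
    rw [h]
    exact hfY.comp (hW.prodMk (hY₀m.prodMk (measurable_const.prodMk hUY)))
  have hTm : MeasurableSet {ω | Yful a ω ∈ S} := hYfm hS
  rw [partition_sum_aux μ W hW {ω | Yful a ω ∈ S}]
  refine Finset.sum_congr rfl fun w _ => ?_
  rw [partition_sum_aux μ Y₀ hY₀m ({ω | Yful a ω ∈ S} ∩ W ⁻¹' {w})]
  refine Finset.sum_congr rfl fun y _ => ?_
  -- the five basic events
  set E0 : Set Ω := {ω | W ω = w} with hE0def
  set E1 : Set Ω := {ω | f₀ (w, U₀ ω) = y} with hE1def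
  set E2 : Set Ω := {ω | fR (w, UR ω) = 1} with hE2def
  set E3 : Set Ω := {ω | fA (w, y, UA ω) = a} with hE3def
  set E4 : Set Ω := {ω | fY (w, y, a, UY ω) ∈ S} with hE4def
  -- comap measurability
  have h0 : MeasurableSet[MeasurableSpace.comap W inferInstance] E0 :=
    ⟨{w}, measurableSet_singleton w, rfl⟩
  have h1 : MeasurableSet[MeasurableSpace.comap U₀ inferInstance] E1 :=
    ⟨(fun u => f₀ (w, u)) ⁻¹' {y},
      (hf₀.comp (measurable_const.prodMk measurable_id)) (measurableSet_singleton y), rfl⟩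
  have h2 : MeasurableSet[MeasurableSpace.comap UR inferInstance] E2 :=
    ⟨(fun u => fR (w, u)) ⁻¹' {1},
      (hfR.comp (measurable_const.prodMk measurable_id)) (measurableSet_singleton 1), rfl⟩
  have h3 : MeasurableSet[MeasurableSpace.comap UA inferInstance] E3 :=
    ⟨(fun u => fA (w, y, u)) ⁻¹' {a},
      (hfA.comp (measurable_const.prodMk (measurable_const.prodMk measurable_id)))
        (measurableSet_singleton a), rfl⟩
  have h4 : MeasurableSet[MeasurableSpace.comap UY inferInstance] E4 :=
    ⟨(fun u => fY (w, y, a, u)) ⁻¹' S,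
      (hfY.comp (measurable_const.prodMk (measurable_const.prodMk
        (measurable_const.prodMk measurable_id)))) hS, rfl⟩
  obtain ⟨P5, P4, P2, P3, PT⟩ := indep_five_aux μ _ hIndep E0 E1 E2 E3 E4 h0 h1 h2 h3 h4
  -- translation lemmas
  have conv₀ : ∀ ω, W ω = w → (Y₀ ω = y ↔ f₀ (w, U₀ ω) = y) := fun ω hw => by
    rw [hY₀ ω, hw]
  have convR : ∀ ω, W ω = w → (R ω = 1 ↔ fR (w, UR ω) = 1) := fun ω hw => by
    rw [hR ω, hw]
  have convA : ∀ ω, W ω = w → Y₀ ω = y → R ω = 1 → (A ω = a ↔ fA (w, y, UA ω) = a) :=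
    fun ω hw hy hr => by rw [hA ω, if_pos hr, hw, hy]
  have convY : ∀ ω, W ω = w → Y₀ ω = y → R ω = 1 → A ω = a →
      (Y₁ ω ∈ S ↔ fY (w, y, a, UY ω) ∈ S) := fun ω hw hy hr ha => by
    rw [hY₁ ω, if_pos hr, hw, hy, ha]
  have convF : ∀ ω, W ω = w → Y₀ ω = y → (Yful a ω ∈ S ↔ fY (w, y, a, UY ω) ∈ S) :=
    fun ω hw hy => by rw [hYful a ω, hw, hy]
  -- set identities
  have hsetPos : {ω | W ω = w ∧ Y₀ ω = y ∧ R ω = 1 ∧ A ω = a} = E0 ∩ (E1 ∩ (E2 ∩ E3)) := by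
    ext ω
    simp only [Set.mem_inter_iff, Set.mem_setOf_eq, hE0def, hE1def, hE2def, hE3def]
    constructor
    · rintro ⟨hw, hy, hr, ha⟩
      exact ⟨hw, (conv₀ ω hw).1 hy, (convR ω hw).1 hr, (convA ω hw hy hr).1 ha⟩
    · rintro ⟨hw, g1, g2, g3⟩
      have hy := (conv₀ ω hw).2 g1
      have hr := (convR ω hw).2 g2
      exact ⟨hw, hy, hr, (convA ω hw hy hr).2 g3⟩
  have hsetDen2 : {ω | W ω = w ∧ Y₀ ω = y ∧ A ω = a ∧ R ω = 1} = E0 ∩ (E1 ∩ (E2 ∩ E3)) := by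
    rw [← hsetPos]; ext ω; simp only [Set.mem_setOf_eq]; tauto
  have hsetNum2 : {ω | Y₁ ω ∈ S} ∩ {ω | W ω = w ∧ Y₀ ω = y ∧ A ω = a ∧ R ω = 1}
      = E0 ∩ (E1 ∩ (E2 ∩ (E3 ∩ E4))) := by
    ext ω
    simp only [Set.mem_inter_iff, Set.mem_setOf_eq, hE0def, hE1def, hE2def, hE3def, hE4def]
    constructor
    · rintro ⟨hYS, hw, hy, ha, hr⟩
      exact ⟨hw, (conv₀ ω hw).1 hy, (convR ω hw).1 hr, (convA ω hw hy hr).1 ha,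
        (convY ω hw hy hr ha).1 hYS⟩
    · rintro ⟨hw, g1, g2, g3, g4⟩
      have hy := (conv₀ ω hw).2 g1
      have hr := (convR ω hw).2 g2
      have ha := (convA ω hw hy hr).2 g3
      exact ⟨(convY ω hw hy hr ha).2 g4, hw, hy, ha, hr⟩
  have hsetDen1 : {ω | W ω = w ∧ R ω = 1} = E0 ∩ E2 := by
    ext ω
    simp only [Set.mem_inter_iff, Set.mem_setOf_eq, hE0def, hE2def]
    constructor
    · rintro ⟨hw, hr⟩; exact ⟨hw, (convR ω hw).1 hr⟩
    · rintro ⟨hw, g2⟩; exact ⟨hw, (convR ω hw).2 g2⟩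
  have hsetNum1 : {ω | Y₀ ω = y} ∩ {ω | W ω = w ∧ R ω = 1} = E0 ∩ (E1 ∩ E2) := by
    ext ω
    simp only [Set.mem_inter_iff, Set.mem_setOf_eq, hE0def, hE1def, hE2def]
    constructor
    · rintro ⟨hy, hw, hr⟩; exact ⟨hw, (conv₀ ω hw).1 hy, (convR ω hw).1 hr⟩
    · rintro ⟨hw, g1, g2⟩; exact ⟨(conv₀ ω hw).2 g1, hw, (convR ω hw).2 g2⟩
  have hsetT : {ω | Yful a ω ∈ S} ∩ W ⁻¹' {w} ∩ Y₀ ⁻¹' {y} = E0 ∩ (E1 ∩ E4) := by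
    ext ω
    simp only [Set.mem_inter_iff, Set.mem_setOf_eq, Set.mem_preimage, Set.mem_singleton_iff,
      hE0def, hE1def, hE4def]
    constructor
    · rintro ⟨⟨hYS, hw⟩, hy⟩
      exact ⟨hw, (conv₀ ω hw).1 hy, (convF ω hw hy).1 hYS⟩
    · rintro ⟨hw, g1, g4⟩
      have hy := (conv₀ ω hw).2 g1
      exact ⟨⟨(convF ω hw hy).2 g4, hw⟩, hy⟩
  -- positivity of individual factors
  have hposP : 0 < μ E0 * μ E1 * μ E2 * μ E3 := by
    rw [← P4, ← hsetPos]; exact hpos w y 1 a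
  have hne : μ E0 * μ E1 * μ E2 * μ E3 ≠ 0 := hposP.ne'
  rw [mul_ne_zero_iff, mul_ne_zero_iff, mul_ne_zero_iff] at hne
  obtain ⟨⟨⟨hn0, hn1⟩, hn2⟩, hn3⟩ := hne
  -- compute the two conditional probabilities
  have hc1 : cprob μ {ω | Y₀ ω = y} {ω | W ω = w ∧ R ω = 1} = μ E1 := by
    rw [cprob, hsetNum1, hsetDen1, P3, P2]
    have h : μ E0 * μ E1 * μ E2 = μ E1 * (μ E0 * μ E2) := by ring
    rw [h, mul_div_assoc, ENNReal.div_self (mul_ne_zero hn0 hn2)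
      (ENNReal.mul_ne_top (measure_ne_top μ _) (measure_ne_top μ _)), mul_one]
  have hc2 : cprob μ {ω | Y₁ ω ∈ S} {ω | W ω = w ∧ Y₀ ω = y ∧ A ω = a ∧ R ω = 1} = μ E4 := by
    rw [cprob, hsetNum2, hsetDen2, P5, P4]
    have h : μ E0 * μ E1 * μ E2 * μ E3 * μ E4 = μ E4 * (μ E0 * μ E1 * μ E2 * μ E3) := by ring
    rw [h, mul_div_assoc, ENNReal.div_self hposP.ne'
      (ENNReal.mul_ne_top (ENNReal.mul_ne_top (ENNReal.mul_ne_top (measure_ne_top μ _)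
        (measure_ne_top μ _)) (measure_ne_top μ _)) (measure_ne_top μ _)), mul_one]
  rw [hsetT, PT, hc1, hc2]
end

section
/- In the discrete lm-SCM for the motivating example (Figure 1c), under Positivity, the natural interventional mean in the context R = 0 is recovered by adjusting only for W: for every a ∈ {0,1}, E[Y₁ᵃ | R = 0] = Σ_{w ∈ 𝒲} μ(W = w | R = 0) · Q₀(w, a), where Q₀(w, a) := E[Y₁ | W = w, A = a, R = 0]. -/
/-!
On the event `{W = w, R = 0}` the natural outcome `Y₁ᵃ` equals `gY (w, a, U_Y)`, and so does `Y₁`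
on `{W = w, A = a, R = 0}`. Both events are measurable with respect to `(W, U₀, U_R, U_A)`, which
is independent of `U_Y`, so both conditional means equal `E[gY (w, a, U_Y)]`; positivity makes them
well defined. Summing over `w` (law of total expectation) gives the adjustment formula.
-/

open MeasureTheory ProbabilityTheory

open scoped ENNReal


section cexp

variable {Ω : Type*} [MeasurableSpace Ω] {μ : Measure Ω} {X Y : Ω → ℝ} {E : Set Ω}

lemma cexp_congr (hE : MeasurableSet E) (h : Set.EqOn X Y E) : cexp μ X E = cexp μ Y E := by
  rw [cexp, cexp, setIntegral_congr_fun hE h]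

lemma toReal_cprob_mul_cexp_inter [IsFiniteMeasure μ] (S : Set Ω) :
    (cprob μ S E).toReal * cexp μ X (S ∩ E) = (μ E).toReal⁻¹ * ∫ ω in S ∩ E, X ω ∂μ := by
  rcases eq_or_ne (μ (S ∩ E)) 0 with h | h
  · simp [cexp, Measure.restrict_eq_zero.2 h]
  · have : (μ (S ∩ E)).toReal ≠ 0 := ENNReal.toReal_ne_zero.2 ⟨h, measure_ne_top μ _⟩
    rw [cprob, cexp, ENNReal.toReal_div]
    field_simp

lemma cexp_eq_sum_toReal_cprob_mul_cexp [IsFiniteMeasure μ] {β : Type*} [Fintype β]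
    [MeasurableSpace β] [MeasurableSingletonClass β] {V : Ω → β} (hV : Measurable V)
    (hE : MeasurableSet E) (hX : IntegrableOn X E μ) :
    cexp μ X E = ∑ b, (cprob μ {ω | V ω = b} E).toReal * cexp μ X ({ω | V ω = b} ∩ E) := by
  have hpart : E = ⋃ b, {ω | V ω = b} ∩ E := by ext; simp
  simp_rw [toReal_cprob_mul_cexp_inter, ← Finset.mul_sum, cexp]
  rw [← integral_iUnion_fintype (s := fun b ↦ {ω | V ω = b} ∩ E)
    (fun b ↦ (hV (measurableSet_singleton b)).inter hE) (fun b b' hbb' ↦ ?_)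
    (fun b ↦ hX.mono_set Set.inter_subset_right), ← hpart]
  exact Set.disjoint_left.2 fun ω h h' ↦ hbb' (h.1.symm.trans h'.1)

end cexp

section Indep

variable {Ω ι : Type*} {m₁ m₂ mΩ : MeasurableSpace Ω} {μ : Measure Ω} {s t : Set Ω}

lemma indep_iSup_ne {m : ι → MeasurableSpace Ω} (h_le : ∀ i, m i ≤ mΩ) (h : iIndep m μ) (j : ι) :
    Indep (⨆ (i) (_ : i ≠ j), m i) (m j) μ := by
  simpa using indep_iSup_of_disjoint h_le h (S := {j}ᶜ) (T := {j}) disjoint_compl_left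

lemma indepFun_prodMk₄_of_iIndep {β₀ β₁ β₂ β₃ β₄ : Type*} [MeasurableSpace β₀]
    [MeasurableSpace β₁] [MeasurableSpace β₂] [MeasurableSpace β₃] [MeasurableSpace β₄]
    {X₀ : Ω → β₀} {X₁ : Ω → β₁} {X₂ : Ω → β₂} {X₃ : Ω → β₃} {X₄ : Ω → β₄}
    {m : Fin 5 → MeasurableSpace Ω} (h_le : ∀ i, m i ≤ mΩ) (h : iIndep m μ)
    (h₀ : Measurable[m 0] X₀) (h₁ : Measurable[m 1] X₁) (h₂ : Measurable[m 2] X₂)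
    (h₃ : Measurable[m 3] X₃) (h₄ : Measurable[m 4] X₄) :
    IndepFun (fun ω ↦ (X₀ ω, X₁ ω, X₂ ω, X₃ ω)) X₄ μ := by
  rw [IndepFun_iff_Indep]
  refine indep_of_indep_of_le (indep_iSup_ne h_le h 4) ?_ h₄.comap_le
  have hle (i : Fin 5) (hi : i ≠ 4) : m i ≤ ⨆ (j) (_ : j ≠ 4), m j :=
    le_iSup₂ (f := fun j _ ↦ m j) i hi
  exact Measurable.comap_le <| .prodMk (h₀.mono (hle 0 (by decide)) le_rfl) <|
    .prodMk (h₁.mono (hle 1 (by decide)) le_rfl) <|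
      .prodMk (h₂.mono (hle 2 (by decide)) le_rfl) (h₃.mono (hle 3 (by decide)) le_rfl)

lemma indepFun_prodMk₄_of_iIndep_comap {β₀ β₁ β₂ β₃ β₄ : Type*} [MeasurableSpace β₀]
    [MeasurableSpace β₁] [MeasurableSpace β₂] [MeasurableSpace β₃] [MeasurableSpace β₄]
    {X₀ : Ω → β₀} {X₁ : Ω → β₁} {X₂ : Ω → β₂} {X₃ : Ω → β₃} {X₄ : Ω → β₄} (h₀ : Measurable X₀)
    (h₁ : Measurable X₁) (h₂ : Measurable X₂) (h₃ : Measurable X₃) (h₄ : Measurable X₄)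
    (h : iIndep (![MeasurableSpace.comap X₀ inferInstance, MeasurableSpace.comap X₁ inferInstance,
      MeasurableSpace.comap X₂ inferInstance, MeasurableSpace.comap X₃ inferInstance,
      MeasurableSpace.comap X₄ inferInstance] : Fin 5 → MeasurableSpace Ω) μ) :
    IndepFun (fun ω ↦ (X₀ ω, X₁ ω, X₂ ω, X₃ ω)) X₄ μ :=
  indepFun_prodMk₄_of_iIndep
    (fun i ↦ by
      fin_cases i
      exacts [h₀.comap_le, h₁.comap_le, h₂.comap_le, h₃.comap_le, h₄.comap_le])
    h (comap_measurable X₀) (comap_measurable X₁) (comap_measurable X₂) (comap_measurable X₃)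
    (comap_measurable X₄)

lemma setLIntegral_eq_measure_mul_lintegral_of_indep (hind : Indep m₁ m₂ μ) (h₁ : m₁ ≤ mΩ)
    (h₂ : m₂ ≤ mΩ) (hs : MeasurableSet[m₁] s) {g : Ω → ℝ≥0∞} (hg : Measurable[m₂] g) :
    ∫⁻ ω in s, g ω ∂μ = μ s * ∫⁻ ω, g ω ∂μ := by
  have hs_ind : Measurable[m₁] (s.indicator (1 : Ω → ℝ≥0∞)) := measurable_const.indicator hs
  have hprod := lintegral_mul_eq_lintegral_mul_lintegral_of_independent_measurableSpace h₁ h₂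
    hind hs_ind hg
  simp_rw [← Set.indicator_mul_left, Pi.one_apply, one_mul] at hprod
  rwa [lintegral_indicator (h₁ s hs), lintegral_indicator_one (h₁ s hs)] at hprod

lemma integrable_of_integrableOn_of_indep (hind : Indep m₁ m₂ μ) (h₁ : m₁ ≤ mΩ) (h₂ : m₂ ≤ mΩ)
    (hs : MeasurableSet[m₁] s) (hμs : μ s ≠ 0) {f : Ω → ℝ} (hf : StronglyMeasurable[m₂] f)
    (hfs : IntegrableOn f s μ) : Integrable f μ := by
  refine ⟨(hf.mono h₂).aestronglyMeasurable, ?_⟩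
  have hf_enorm : Measurable[m₂] (‖f ·‖ₑ) := measurable_enorm.comp hf.measurable
  have hlint := setLIntegral_eq_measure_mul_lintegral_of_indep hind h₁ h₂ hs hf_enorm
  rw [hasFiniteIntegral_iff_enorm, lt_top_iff_ne_top]
  intro htop
  rw [htop, ENNReal.mul_top hμs] at hlint
  exact hfs.2.ne hlint

lemma setIntegral_eq_measureReal_mul_integral_of_indep_s8 [IsFiniteMeasure μ]
    (hind : Indep m₁ m₂ μ) (h₁ : m₁ ≤ mΩ) (h₂ : m₂ ≤ mΩ) (hs : MeasurableSet[m₁] s) {f : Ω → ℝ}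
    (hf : StronglyMeasurable[m₂] f) (hfi : Integrable f μ) :
    ∫ ω in s, f ω ∂μ = μ.real s * ∫ ω, f ω ∂μ := by
  rw [← setIntegral_condExp h₁ hfi hs, setIntegral_congr_ae (h₁ s hs)
    ((condExp_indep_eq h₂ h₁ hf hind.symm).mono fun _ h _ ↦ h), setIntegral_const, smul_eq_mul]

lemma cexp_eq_integral_of_indep_s8 [IsFiniteMeasure μ] (hind : Indep m₁ m₂ μ) (h₁ : m₁ ≤ mΩ)
    (h₂ : m₂ ≤ mΩ) (hs : MeasurableSet[m₁] s) (hμs : μ s ≠ 0) {f : Ω → ℝ}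
    (hf : StronglyMeasurable[m₂] f) (hfi : Integrable f μ) : cexp μ f s = ∫ ω, f ω ∂μ := by
  have : μ.real s ≠ 0 := ENNReal.toReal_ne_zero.2 ⟨hμs, measure_ne_top μ s⟩
  rw [cexp, setIntegral_eq_measureReal_mul_integral_of_indep_s8 hind h₁ h₂ hs hf hfi, ← Measure.real,
    inv_mul_cancel_left₀ this]

lemma cexp_eq_cexp_of_eqOn_of_indep [IsFiniteMeasure μ] (hind : Indep m₁ m₂ μ) (h₁ : m₁ ≤ mΩ)
    (h₂ : m₂ ≤ mΩ) (hs : MeasurableSet[m₁] s) (ht : MeasurableSet[m₁] t) (hμs : μ s ≠ 0)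
    (hμt : μ t ≠ 0) {g X Y : Ω → ℝ} (hg : StronglyMeasurable[m₂] g) (hX : s.EqOn X g)
    (hY : t.EqOn Y g) (hXs : IntegrableOn X s μ) : cexp μ X s = cexp μ Y t := by
  have hgi : Integrable g μ :=
    integrable_of_integrableOn_of_indep hind h₁ h₂ hs hμs hg (hXs.congr_fun hX (h₁ s hs))
  rw [cexp_congr (h₁ s hs) hX, cexp_congr (h₁ t ht) hY,
    cexp_eq_integral_of_indep_s8 hind h₁ h₂ hs hμs hg hgi,
    cexp_eq_integral_of_indep_s8 hind h₁ h₂ ht hμt hg hgi]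

end Indep

lemma measurable_comap_exogenous_of_lmSCM {Ω 𝒲 𝒴₀ 𝒰₀ 𝒰R 𝒰A : Type*} [MeasurableSpace 𝒲]
    [MeasurableSpace 𝒴₀] [MeasurableSpace 𝒰₀] [MeasurableSpace 𝒰R] [MeasurableSpace 𝒰A]
    {W : Ω → 𝒲} {U₀ : Ω → 𝒰₀} {UR : Ω → 𝒰R} {UA : Ω → 𝒰A} {f₀ : 𝒲 × 𝒰₀ → 𝒴₀}
    {fR : 𝒲 × 𝒰R → Fin 2} {fA : 𝒲 × 𝒴₀ × 𝒰A → Fin 2} {gA : 𝒲 × 𝒰A → Fin 2}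
    (hf₀ : Measurable f₀) (hfR : Measurable fR) (hfA : Measurable fA) (hgA : Measurable gA)
    {Y₀ : Ω → 𝒴₀} {R A : Ω → Fin 2} (hY₀ : ∀ ω, Y₀ ω = f₀ (W ω, U₀ ω))
    (hR : ∀ ω, R ω = fR (W ω, UR ω))
    (hA : ∀ ω, A ω = if R ω = 1 then fA (W ω, Y₀ ω, UA ω) else gA (W ω, UA ω)) :
    Measurable[.comap (fun ω ↦ (W ω, U₀ ω, UR ω, UA ω)) inferInstance] fun ω ↦ (W ω, R ω, A ω) := by
  set U := fun ω ↦ (W ω, U₀ ω, UR ω, UA ω)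
  have hU : Measurable[.comap U inferInstance] U := comap_measurable U
  have hR' : Measurable[.comap U inferInstance] R :=
    funext hR ▸ hfR.comp (hU.fst.prodMk hU.snd.snd.fst)
  have hY₀' : Measurable[.comap U inferInstance] Y₀ :=
    funext hY₀ ▸ hf₀.comp (hU.fst.prodMk hU.snd.fst)
  have hA' : Measurable[.comap U inferInstance] A :=
    funext hA ▸ Measurable.ite (hR' (measurableSet_singleton 1))
      (hfA.comp (hU.fst.prodMk (hY₀'.prodMk hU.snd.snd.snd)))
      (hgA.comp (hU.fst.prodMk hU.snd.snd.snd))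
  exact hU.fst.prodMk (hR'.prodMk hA')

theorem lmSCM_natural_mean_context0_general
    {Ω 𝒲 𝒴₀ 𝒰₀ 𝒰R 𝒰A 𝒰Y : Type*}
    [MeasurableSpace Ω]
    [Fintype 𝒲] [MeasurableSpace 𝒲] [MeasurableSingletonClass 𝒲]
    [Nonempty 𝒴₀] [MeasurableSpace 𝒴₀]
    [MeasurableSpace 𝒰₀] [MeasurableSpace 𝒰R] [MeasurableSpace 𝒰A] [MeasurableSpace 𝒰Y]
    (μ : Measure Ω) [IsProbabilityMeasure μ]
    (W : Ω → 𝒲) (U₀ : Ω → 𝒰₀) (UR : Ω → 𝒰R) (UA : Ω → 𝒰A) (UY : Ω → 𝒰Y)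
    (hW : Measurable W) (hU₀ : Measurable U₀) (hUR : Measurable UR)
    (hUA : Measurable UA) (hUY : Measurable UY)
    (hIndep : iIndep
      (![MeasurableSpace.comap W inferInstance, MeasurableSpace.comap U₀ inferInstance,
         MeasurableSpace.comap UR inferInstance, MeasurableSpace.comap UA inferInstance,
         MeasurableSpace.comap UY inferInstance] : Fin 5 → MeasurableSpace Ω) μ)
    (f₀ : 𝒲 × 𝒰₀ → 𝒴₀) (hf₀ : Measurable f₀)
    (fR : 𝒲 × 𝒰R → Fin 2) (hfR : Measurable fR)
    (fA : 𝒲 × 𝒴₀ × 𝒰A → Fin 2) (hfA : Measurable fA)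
    (gA : 𝒲 × 𝒰A → Fin 2) (hgA : Measurable gA)
    (fY : 𝒲 × 𝒴₀ × Fin 2 × 𝒰Y → ℝ)
    (gY : 𝒲 × Fin 2 × 𝒰Y → ℝ) (hgY : Measurable gY)
    (Y₀ : Ω → 𝒴₀) (R A : Ω → Fin 2) (Y₁ : Ω → ℝ)
    (hY₀ : ∀ ω, Y₀ ω = f₀ (W ω, U₀ ω))
    (hR : ∀ ω, R ω = fR (W ω, UR ω))
    (hA : ∀ ω, A ω = if R ω = 1 then fA (W ω, Y₀ ω, UA ω) else gA (W ω, UA ω))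
    (hY₁ : ∀ ω, Y₁ ω = if R ω = 1 then fY (W ω, Y₀ ω, A ω, UY ω) else gY (W ω, A ω, UY ω))
    (Ynat : Fin 2 → Ω → ℝ)
    (hYnat : ∀ (a : Fin 2) (ω : Ω),
      Ynat a ω = if R ω = 1 then fY (W ω, Y₀ ω, a, UY ω) else gY (W ω, a, UY ω))
    (hIntN0 : Integrable (Ynat 0) μ) (hIntN1 : Integrable (Ynat 1) μ)
    (hpos : ∀ (w : 𝒲) (y : 𝒴₀) (r a : Fin 2),
      0 < μ {ω | W ω = w ∧ Y₀ ω = y ∧ R ω = r ∧ A ω = a})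
    (Q0 : 𝒲 → Fin 2 → ℝ)
    (hQ0 : ∀ (w : 𝒲) (a : Fin 2), Q0 w a = cexp μ Y₁ {ω | W ω = w ∧ A ω = a ∧ R ω = 0})
    :
    ∀ a : Fin 2,
      cexp μ (Ynat a) {ω | R ω = 0}
        = ∑ w : 𝒲, (cprob μ {ω | W ω = w} {ω | R ω = 0}).toReal * Q0 w a := by
  intro a
  set U := fun ω ↦ (W ω, U₀ ω, UR ω, UA ω)
  have hind := (IndepFun_iff_Indep U UY μ).1
    (indepFun_prodMk₄_of_iIndep_comap hW hU₀ hUR hUA hUY hIndep)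
  have hU_le := (hW.prodMk (hU₀.prodMk (hUR.prodMk hUA))).comap_le
  have hobs := measurable_comap_exogenous_of_lmSCM hf₀ hfR hfA hgA hY₀ hR hA
  have hR0 : MeasurableSet[.comap U inferInstance] {ω | R ω = 0} :=
    hobs.snd.fst (measurableSet_singleton 0)
  have hWw (w : 𝒲) : MeasurableSet[.comap U inferInstance] {ω | W ω = w} :=
    hobs.fst (measurableSet_singleton w)
  have hIntNat : Integrable (Ynat a) μ := by fin_cases a <;> assumption
  obtain ⟨y⟩ := ‹Nonempty 𝒴₀›
  rw [cexp_eq_sum_toReal_cprob_mul_cexp hW (hU_le _ hR0) hIntNat.integrableOn]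
  refine Finset.sum_congr rfl fun w _ ↦ congrArg _ ?_
  have hμs : μ ({ω | W ω = w} ∩ {ω | R ω = 0}) ≠ 0 :=
    pos_iff_ne_zero.mp <| (hpos w y 0 a).trans_le <| measure_mono fun _ ⟨hw, _, hr, _⟩ ↦ ⟨hw, hr⟩
  have hμt : μ {ω | W ω = w ∧ A ω = a ∧ R ω = 0} ≠ 0 :=
    pos_iff_ne_zero.mp <| (hpos w y 0 a).trans_le <|
      measure_mono fun _ ⟨hw, _, hr, ha⟩ ↦ ⟨hw, ha, hr⟩
  rw [hQ0]
  refine cexp_eq_cexp_of_eqOn_of_indep (g := fun ω ↦ gY (w, a, UY ω)) hind hU_le hUY.comap_le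
    ((hWw w).inter hR0) ((hWw w).inter ((hobs.snd.snd (measurableSet_singleton a)).inter hR0))
    hμs hμt (hgY.comp (measurable_const.prodMk
      (measurable_const.prodMk (comap_measurable UY)))).stronglyMeasurable ?_ ?_
    hIntNat.integrableOn
  · rintro ω ⟨hw : W ω = w, hr : R ω = 0⟩
    simp [hYnat, hw, hr]
  · rintro ω ⟨hw : W ω = w, ha : A ω = a, hr : R ω = 0⟩
    simp [hY₁, hw, ha, hr]

/-- In the discrete lm-SCM of Figure 1c, under positivity, the natural interventional mean in the context `R = 0` is recovered by adjusting only for `W`. -/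
theorem lmSCM_natural_mean_context0
    {Ω 𝒲 𝒴₀ 𝒰₀ 𝒰R 𝒰A 𝒰Y : Type*}
    [MeasurableSpace Ω]
    [Fintype 𝒲] [Nonempty 𝒲] [MeasurableSpace 𝒲] [MeasurableSingletonClass 𝒲]
    [Fintype 𝒴₀] [Nonempty 𝒴₀] [MeasurableSpace 𝒴₀] [MeasurableSingletonClass 𝒴₀]
    [MeasurableSpace 𝒰₀] [MeasurableSpace 𝒰R] [MeasurableSpace 𝒰A] [MeasurableSpace 𝒰Y]
    (μ : Measure Ω) [IsProbabilityMeasure μ]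
    (W : Ω → 𝒲) (U₀ : Ω → 𝒰₀) (UR : Ω → 𝒰R) (UA : Ω → 𝒰A) (UY : Ω → 𝒰Y)
    (hW : Measurable W) (hU₀ : Measurable U₀) (hUR : Measurable UR)
    (hUA : Measurable UA) (hUY : Measurable UY)
    (hIndep : iIndep
      (![MeasurableSpace.comap W inferInstance, MeasurableSpace.comap U₀ inferInstance,
         MeasurableSpace.comap UR inferInstance, MeasurableSpace.comap UA inferInstance,
         MeasurableSpace.comap UY inferInstance] : Fin 5 → MeasurableSpace Ω) μ)
    (f₀ : 𝒲 × 𝒰₀ → 𝒴₀) (hf₀ : Measurable f₀)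
    (fR : 𝒲 × 𝒰R → Fin 2) (hfR : Measurable fR)
    (fA : 𝒲 × 𝒴₀ × 𝒰A → Fin 2) (hfA : Measurable fA)
    (gA : 𝒲 × 𝒰A → Fin 2) (hgA : Measurable gA)
    (fY : 𝒲 × 𝒴₀ × Fin 2 × 𝒰Y → ℝ) (hfY : Measurable fY)
    (gY : 𝒲 × Fin 2 × 𝒰Y → ℝ) (hgY : Measurable gY)
    (Y₀ : Ω → 𝒴₀) (R A : Ω → Fin 2) (Y₁ : Ω → ℝ)
    (hY₀ : ∀ ω, Y₀ ω = f₀ (W ω, U₀ ω))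
    (hR : ∀ ω, R ω = fR (W ω, UR ω))
    (hA : ∀ ω, A ω = if R ω = 1 then fA (W ω, Y₀ ω, UA ω) else gA (W ω, UA ω))
    (hY₁ : ∀ ω, Y₁ ω = if R ω = 1 then fY (W ω, Y₀ ω, A ω, UY ω) else gY (W ω, A ω, UY ω))
    (Ynat : Fin 2 → Ω → ℝ)
    (hYnat : ∀ (a : Fin 2) (ω : Ω),
      Ynat a ω = if R ω = 1 then fY (W ω, Y₀ ω, a, UY ω) else gY (W ω, a, UY ω))
    (Yful : Fin 2 → Ω → ℝ)
    (hYful : ∀ (a : Fin 2) (ω : Ω), Yful a ω = fY (W ω, Y₀ ω, a, UY ω))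
    (hIntY₁ : Integrable Y₁ μ)
    (hIntN0 : Integrable (Ynat 0) μ) (hIntN1 : Integrable (Ynat 1) μ)
    (hIntF0 : Integrable (Yful 0) μ) (hIntF1 : Integrable (Yful 1) μ)
    (hpos : ∀ (w : 𝒲) (y : 𝒴₀) (r a : Fin 2),
      0 < μ {ω | W ω = w ∧ Y₀ ω = y ∧ R ω = r ∧ A ω = a})
    (Q1 : 𝒲 → 𝒴₀ → Fin 2 → ℝ)
    (hQ1 : ∀ (w : 𝒲) (y : 𝒴₀) (a : Fin 2),
      Q1 w y a = cexp μ Y₁ {ω | W ω = w ∧ Y₀ ω = y ∧ A ω = a ∧ R ω = 1})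
    (Q0 : 𝒲 → Fin 2 → ℝ)
    (hQ0 : ∀ (w : 𝒲) (a : Fin 2), Q0 w a = cexp μ Y₁ {ω | W ω = w ∧ A ω = a ∧ R ω = 0})
    :
    ∀ a : Fin 2,
      cexp μ (Ynat a) {ω | R ω = 0}
        = ∑ w : 𝒲, (cprob μ {ω | W ω = w} {ω | R ω = 0}).toReal * Q0 w a :=
  lmSCM_natural_mean_context0_general μ W U₀ UR UA UY hW hU₀ hUR hUA hUY hIndep f₀ hf₀ fR hfR fA hfA
    gA hgA fY gY hgY Y₀ R A Y₁ hY₀ hR hA hY₁ Ynat hYnat hIntN0 hIntN1 hpos Q0 hQ0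
end

section
/- In the discrete lm-SCM for the motivating example (Figure 1c), under Positivity, the natural interventional mean in the context R = 1 is recovered by adjusting for (W, Y₀): for every a ∈ {0,1}, E[Y₁ᵃ | R = 1] = Σ_{w ∈ 𝒲} Σ_{y ∈ 𝒴₀} μ(W = w, Y₀ = y | R = 1) · Q₁(w, y, a), where Q₁(w, y, a) := E[Y₁ | W = w, Y₀ = y, A = a, R = 1]. -/
open MeasureTheory ProbabilityTheory

/-!
On `{R = 1}` the natural outcome `Y₁ᵃ` equals `fY (w, y, a, U_Y)` on each cell `{W = w, Y₀ = y}`,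
and so does `Y₁` on the part of the cell where moreover `A = a`. All of `W, Y₀, R, A` are
functions of `(W, U₀, U_R, U_A)`, which is independent of `U_Y`, so integrating over either set
factors as its probability times `E[fY (w, y, a, U_Y)]`. Hence each `Q₁(w, y, a)` (a genuine
conditional mean by positivity) equals `E[fY (w, y, a, U_Y)]`, and summing the cell integrals of
`Y₁ᵃ` over `(w, y)` gives the adjustment formula.
-/

section

variable {Ω 𝒳 𝒲 𝒴 𝒰 ρ α : Type*} {m mΩ : MeasurableSpace Ω} {μ : Measure Ω}

theorem integral_eq_sum_setIntegral_fiber {β G : Type*} [Fintype β] [MeasurableSpace β]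
    [MeasurableSingletonClass β] [NormedAddCommGroup G] [NormedSpace ℝ G]
    {Z : Ω → β} (hZ : Measurable Z) {X : Ω → G} (hX : Integrable X μ) :
    ∫ ω, X ω ∂μ = ∑ b, ∫ ω in Z ⁻¹' {b}, X ω ∂μ := by
  have hdisj : Pairwise (Function.onFun Disjoint fun b => Z ⁻¹' {b}) :=
    fun b b' hb => Set.disjoint_left.2 fun ω h h' => hb (h.symm.trans h')
  rw [← integral_iUnion_fintype (fun b => hZ (measurableSet_singleton b)) hdisj
    fun b => hX.integrableOn, ← setIntegral_univ]
  congr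
  exact (Set.iUnion_eq_univ_iff.2 fun ω => ⟨Z ω, rfl⟩).symm

variable [IsFiniteMeasure μ]

theorem cexp_eq_integral_of_indep_s9 [MeasurableSpace 𝒳]
    (hm : m ≤ mΩ) {X : Ω → 𝒳} (hind : Indep m (MeasurableSpace.comap X inferInstance) μ)
    (hX : Measurable X) {S : Set Ω} (hS : MeasurableSet[m] S) (hS₀ : μ S ≠ 0)
    {f : 𝒳 → ℝ} (hf : Measurable f) {Y : Ω → ℝ} (hY : Set.EqOn Y (fun ω => f (X ω)) S) :
    cexp μ Y S = ∫ ω, f (X ω) ∂μ := by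
  have hS₀' : μ.real S ≠ 0 := ENNReal.toReal_ne_zero.2 ⟨hS₀, measure_ne_top μ S⟩
  rw [cexp, setIntegral_congr_fun (hm S hS) hY,
    hind.setIntegral_eq_mul hm hX.aemeasurable hS hf.aestronglyMeasurable, ← measureReal_def,
    inv_mul_cancel_left₀ hS₀']

variable [Fintype 𝒲] [MeasurableSpace 𝒲] [MeasurableSingletonClass 𝒲]
  [Fintype 𝒴] [MeasurableSpace 𝒴] [MeasurableSingletonClass 𝒴]
  [MeasurableSpace 𝒰] [MeasurableSpace ρ] [MeasurableSingletonClass ρ]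
  [MeasurableSpace α] [MeasurableSingletonClass α]

theorem cexp_eq_sum_cprob_mul_cexp (hm : m ≤ mΩ)
    {W : Ω → 𝒲} {Y₀ : Ω → 𝒴} {R : Ω → ρ} {A : Ω → α} {U : Ω → 𝒰}
    (hW : Measurable[m] W) (hY₀ : Measurable[m] Y₀) (hR : Measurable[m] R)
    (hA : Measurable[m] A) (hU : Measurable U)
    (hind : Indep m (MeasurableSpace.comap U inferInstance) μ)
    {g : 𝒲 → 𝒴 → 𝒰 → ℝ} (hg : ∀ w y, Measurable (g w y)) {r : ρ} {a : α} {Y Yₐ : Ω → ℝ}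
    (hYₐ : ∀ ω, R ω = r → Yₐ ω = g (W ω) (Y₀ ω) (U ω))
    (hY : ∀ ω, A ω = a → R ω = r → Y ω = g (W ω) (Y₀ ω) (U ω))
    (hpos : ∀ w y, μ {ω | W ω = w ∧ Y₀ ω = y ∧ A ω = a ∧ R ω = r} ≠ 0)
    (hint : Integrable Yₐ μ) :
    cexp μ Yₐ {ω | R ω = r} = ∑ w, ∑ y, (cprob μ {ω | W ω = w ∧ Y₀ ω = y} {ω | R ω = r}).toReal
      * cexp μ Y {ω | W ω = w ∧ Y₀ ω = y ∧ A ω = a ∧ R ω = r} := by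
  have hcell (w : 𝒲) (y : 𝒴) : MeasurableSet[m] {ω | W ω = w ∧ Y₀ ω = y} :=
    (hW (measurableSet_singleton w)).inter (hY₀ (measurableSet_singleton y))
  have hr : MeasurableSet[m] {ω | R ω = r} := hR (measurableSet_singleton r)
  have hQ (w : 𝒲) (y : 𝒴) :
      cexp μ Y {ω | W ω = w ∧ Y₀ ω = y ∧ A ω = a ∧ R ω = r} = ∫ ω, g w y (U ω) ∂μ := by
    refine cexp_eq_integral_of_indep_s9 hm hind hU ?_ (hpos w y) (hg w y) ?_
    · exact (hW (measurableSet_singleton w)).inter <| (hY₀ (measurableSet_singleton y)).inter <|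
        (hA (measurableSet_singleton a)).inter (hR (measurableSet_singleton r))
    · rintro ω ⟨rfl, rfl, hAω, hRω⟩
      exact hY ω hAω hRω
  have hcellIntegral (w : 𝒲) (y : 𝒴) : ∫ ω in {ω | W ω = w ∧ Y₀ ω = y} ∩ {ω | R ω = r}, Yₐ ω ∂μ
      = μ.real ({ω | W ω = w ∧ Y₀ ω = y} ∩ {ω | R ω = r}) * ∫ ω, g w y (U ω) ∂μ := by
    rw [← hind.setIntegral_eq_mul hm hU.aemeasurable ((hcell w y).inter hr)
      (hg w y).aestronglyMeasurable]
    refine setIntegral_congr_fun (hm _ ((hcell w y).inter hr)) ?_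
    rintro ω ⟨⟨rfl, rfl⟩, hRω⟩
    exact hYₐ ω hRω
  have hsplit : ∫ ω in {ω | R ω = r}, Yₐ ω ∂μ
      = ∑ w, ∑ y, ∫ ω in {ω | W ω = w ∧ Y₀ ω = y} ∩ {ω | R ω = r}, Yₐ ω ∂μ := by
    have hZ : Measurable fun ω => (W ω, Y₀ ω) := (hW.prodMk hY₀).mono hm le_rfl
    rw [integral_eq_sum_setIntegral_fiber hZ hint.restrict, Fintype.sum_prod_type]
    simp only [Set.preimage, Set.mem_singleton_iff, Prod.mk.injEq,
      Measure.restrict_restrict (hm _ (hcell _ _))]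
  simp only [hQ]
  simp only [cexp, hsplit, hcellIntegral, cprob, ENNReal.toReal_div, ← measureReal_def,
    Finset.mul_sum]
  ring_nf

end

theorem lmSCM_natural_mean_context1_general
    {Ω 𝒲 𝒴₀ 𝒰₀ 𝒰R 𝒰A 𝒰Y : Type*}
    [MeasurableSpace Ω]
    [Fintype 𝒲] [MeasurableSpace 𝒲] [MeasurableSingletonClass 𝒲]
    [Fintype 𝒴₀] [MeasurableSpace 𝒴₀] [MeasurableSingletonClass 𝒴₀]
    [MeasurableSpace 𝒰₀] [MeasurableSpace 𝒰R] [MeasurableSpace 𝒰A] [MeasurableSpace 𝒰Y]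
    (μ : Measure Ω) [IsProbabilityMeasure μ]
    (W : Ω → 𝒲) (U₀ : Ω → 𝒰₀) (UR : Ω → 𝒰R) (UA : Ω → 𝒰A) (UY : Ω → 𝒰Y)
    (hW : Measurable W) (hU₀ : Measurable U₀) (hUR : Measurable UR)
    (hUA : Measurable UA) (hUY : Measurable UY)
    (hIndep : iIndep
      (![MeasurableSpace.comap W inferInstance, MeasurableSpace.comap U₀ inferInstance,
         MeasurableSpace.comap UR inferInstance, MeasurableSpace.comap UA inferInstance,
         MeasurableSpace.comap UY inferInstance] : Fin 5 → MeasurableSpace Ω) μ)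
    (f₀ : 𝒲 × 𝒰₀ → 𝒴₀) (hf₀ : Measurable f₀)
    (fR : 𝒲 × 𝒰R → Fin 2) (hfR : Measurable fR)
    (fA : 𝒲 × 𝒴₀ × 𝒰A → Fin 2) (hfA : Measurable fA)
    (gA : 𝒲 × 𝒰A → Fin 2) (hgA : Measurable gA)
    (fY : 𝒲 × 𝒴₀ × Fin 2 × 𝒰Y → ℝ) (hfY : Measurable fY)
    (gY : 𝒲 × Fin 2 × 𝒰Y → ℝ)
    (Y₀ : Ω → 𝒴₀) (R A : Ω → Fin 2) (Y₁ : Ω → ℝ)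
    (hY₀ : ∀ ω, Y₀ ω = f₀ (W ω, U₀ ω))
    (hR : ∀ ω, R ω = fR (W ω, UR ω))
    (hA : ∀ ω, A ω = if R ω = 1 then fA (W ω, Y₀ ω, UA ω) else gA (W ω, UA ω))
    (hY₁ : ∀ ω, Y₁ ω = if R ω = 1 then fY (W ω, Y₀ ω, A ω, UY ω) else gY (W ω, A ω, UY ω))
    (Ynat : Fin 2 → Ω → ℝ)
    (hYnat : ∀ (a : Fin 2) (ω : Ω),
      Ynat a ω = if R ω = 1 then fY (W ω, Y₀ ω, a, UY ω) else gY (W ω, a, UY ω))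
    (hIntN0 : Integrable (Ynat 0) μ) (hIntN1 : Integrable (Ynat 1) μ)
    (hpos : ∀ (w : 𝒲) (y : 𝒴₀) (r a : Fin 2),
      0 < μ {ω | W ω = w ∧ Y₀ ω = y ∧ R ω = r ∧ A ω = a})
    (Q1 : 𝒲 → 𝒴₀ → Fin 2 → ℝ)
    (hQ1 : ∀ (w : 𝒲) (y : 𝒴₀) (a : Fin 2),
      Q1 w y a = cexp μ Y₁ {ω | W ω = w ∧ Y₀ ω = y ∧ A ω = a ∧ R ω = 1})
    :
    ∀ a : Fin 2,
      cexp μ (Ynat a) {ω | R ω = 1}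
        = ∑ w : 𝒲, ∑ y : 𝒴₀,
            (cprob μ {ω | W ω = w ∧ Y₀ ω = y} {ω | R ω = 1}).toReal * Q1 w y a := by
  intro a
  set s : Fin 5 → MeasurableSpace Ω := ![MeasurableSpace.comap W inferInstance,
    MeasurableSpace.comap U₀ inferInstance, MeasurableSpace.comap UR inferInstance,
    MeasurableSpace.comap UA inferInstance, MeasurableSpace.comap UY inferInstance]
  have hs (i : Fin 5) : s i ≤ ‹MeasurableSpace Ω› := by
    fin_cases i
    exacts [hW.comap_le, hU₀.comap_le, hUR.comap_le, hUA.comap_le, hUY.comap_le]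
  -- `m` is a local instance from here on, so the ambient σ-algebra is only named above.
  set m := ⨆ j ∈ ({4}ᶜ : Set (Fin 5)), s j
  have hle (i : Fin 5) (hi : i ≠ 4) : s i ≤ m := le_biSup s hi
  have hWm : Measurable[m] W := .of_comap_le (hle 0 (by decide))
  have hU₀m : Measurable[m] U₀ := .of_comap_le (hle 1 (by decide))
  have hURm : Measurable[m] UR := .of_comap_le (hle 2 (by decide))
  have hUAm : Measurable[m] UA := .of_comap_le (hle 3 (by decide))
  have hY₀m : Measurable[m] Y₀ := funext hY₀ ▸ hf₀.comp (hWm.prodMk hU₀m)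
  have hRm : Measurable[m] R := funext hR ▸ hfR.comp (hWm.prodMk hURm)
  have hAm : Measurable[m] A := funext hA ▸
    Measurable.ite (hRm (measurableSet_singleton 1)) (hfA.comp (hWm.prodMk (hY₀m.prodMk hUAm)))
      (hgA.comp (hWm.prodMk hUAm))
  have hind : Indep m (MeasurableSpace.comap UY inferInstance) μ := by
    have h := indep_biSup_compl hs hIndep {4}ᶜ
    rwa [compl_compl, iSup_singleton] at h
  simp only [hQ1]
  refine cexp_eq_sum_cprob_mul_cexp (iSup₂_le fun i _ => hs i) hWm hY₀m hRm hAm hUY hind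
    (g := fun w y u => fY (w, y, a, u)) (fun w y => by fun_prop) ?_ ?_ ?_ ?_
  · intro ω hRω
    simp [hYnat, hRω]
  · intro ω hAω hRω
    simp [hY₁, hRω, hAω]
  · intro w y
    convert (hpos w y 1 a).ne' using 6
    exact and_comm
  · fin_cases a <;> assumption

/-- In the discrete lm-SCM of Figure 1c, under positivity, the natural interventional mean in the context `R = 1` is recovered by adjusting for `(W, Y₀)`. -/
theorem lmSCM_natural_mean_context1
    {Ω 𝒲 𝒴₀ 𝒰₀ 𝒰R 𝒰A 𝒰Y : Type*}
    [MeasurableSpace Ω]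
    [Fintype 𝒲] [Nonempty 𝒲] [MeasurableSpace 𝒲] [MeasurableSingletonClass 𝒲]
    [Fintype 𝒴₀] [Nonempty 𝒴₀] [MeasurableSpace 𝒴₀] [MeasurableSingletonClass 𝒴₀]
    [MeasurableSpace 𝒰₀] [MeasurableSpace 𝒰R] [MeasurableSpace 𝒰A] [MeasurableSpace 𝒰Y]
    (μ : Measure Ω) [IsProbabilityMeasure μ]
    (W : Ω → 𝒲) (U₀ : Ω → 𝒰₀) (UR : Ω → 𝒰R) (UA : Ω → 𝒰A) (UY : Ω → 𝒰Y)
    (hW : Measurable W) (hU₀ : Measurable U₀) (hUR : Measurable UR)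
    (hUA : Measurable UA) (hUY : Measurable UY)
    (hIndep : iIndep
      (![MeasurableSpace.comap W inferInstance, MeasurableSpace.comap U₀ inferInstance,
         MeasurableSpace.comap UR inferInstance, MeasurableSpace.comap UA inferInstance,
         MeasurableSpace.comap UY inferInstance] : Fin 5 → MeasurableSpace Ω) μ)
    (f₀ : 𝒲 × 𝒰₀ → 𝒴₀) (hf₀ : Measurable f₀)
    (fR : 𝒲 × 𝒰R → Fin 2) (hfR : Measurable fR)
    (fA : 𝒲 × 𝒴₀ × 𝒰A → Fin 2) (hfA : Measurable fA)
    (gA : 𝒲 × 𝒰A → Fin 2) (hgA : Measurable gA)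
    (fY : 𝒲 × 𝒴₀ × Fin 2 × 𝒰Y → ℝ) (hfY : Measurable fY)
    (gY : 𝒲 × Fin 2 × 𝒰Y → ℝ) (hgY : Measurable gY)
    (Y₀ : Ω → 𝒴₀) (R A : Ω → Fin 2) (Y₁ : Ω → ℝ)
    (hY₀ : ∀ ω, Y₀ ω = f₀ (W ω, U₀ ω))
    (hR : ∀ ω, R ω = fR (W ω, UR ω))
    (hA : ∀ ω, A ω = if R ω = 1 then fA (W ω, Y₀ ω, UA ω) else gA (W ω, UA ω))
    (hY₁ : ∀ ω, Y₁ ω = if R ω = 1 then fY (W ω, Y₀ ω, A ω, UY ω) else gY (W ω, A ω, UY ω))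
    (Ynat : Fin 2 → Ω → ℝ)
    (hYnat : ∀ (a : Fin 2) (ω : Ω),
      Ynat a ω = if R ω = 1 then fY (W ω, Y₀ ω, a, UY ω) else gY (W ω, a, UY ω))
    (Yful : Fin 2 → Ω → ℝ)
    (hYful : ∀ (a : Fin 2) (ω : Ω), Yful a ω = fY (W ω, Y₀ ω, a, UY ω))
    (hIntY₁ : Integrable Y₁ μ)
    (hIntN0 : Integrable (Ynat 0) μ) (hIntN1 : Integrable (Ynat 1) μ)
    (hIntF0 : Integrable (Yful 0) μ) (hIntF1 : Integrable (Yful 1) μ)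
    (hpos : ∀ (w : 𝒲) (y : 𝒴₀) (r a : Fin 2),
      0 < μ {ω | W ω = w ∧ Y₀ ω = y ∧ R ω = r ∧ A ω = a})
    (Q1 : 𝒲 → 𝒴₀ → Fin 2 → ℝ)
    (hQ1 : ∀ (w : 𝒲) (y : 𝒴₀) (a : Fin 2),
      Q1 w y a = cexp μ Y₁ {ω | W ω = w ∧ Y₀ ω = y ∧ A ω = a ∧ R ω = 1})
    (Q0 : 𝒲 → Fin 2 → ℝ)
    (hQ0 : ∀ (w : 𝒲) (a : Fin 2), Q0 w a = cexp μ Y₁ {ω | W ω = w ∧ A ω = a ∧ R ω = 0})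
    :
    ∀ a : Fin 2,
      cexp μ (Ynat a) {ω | R ω = 1}
        = ∑ w : 𝒲, ∑ y : 𝒴₀,
            (cprob μ {ω | W ω = w ∧ Y₀ ω = y} {ω | R ω = 1}).toReal * Q1 w y a :=
  lmSCM_natural_mean_context1_general μ W U₀ UR UA UY hW hU₀ hUR hUA hUY hIndep f₀ hf₀ fR hfR fA hfA
    gA hgA fY hfY gY Y₀ R A Y₁ hY₀ hR hA hY₁ Ynat hYnat hIntN0 hIntN1 hpos Q1 hQ1
end

section
/- In the discrete lm-SCM for the motivating example (Figure 1c), under Positivity, the NATE is recovered as the mixture-over-contexts estimand of Equations (12)–(13) (an instance of Proposition 4): θ = μ(R = 0) · Σ_{w ∈ 𝒲} μ(W = w | R = 0) · (Q₀(w, 1) − Q₀(w, 0)) + μ(R = 1) · Σ_{w ∈ 𝒲} Σ_{y ∈ 𝒴₀} μ(W = w, Y₀ = y | R = 1) · (Q₁(w, y, 1) − Q₁(w, y, 0)), where Q₁(w, y, a) := E[Y₁ | W = w, Y₀ = y, A = a, R = 1] and Q₀(w, a) := E[Y₁ | W = w, A = a, R = 0]. -/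
open MeasureTheory ProbabilityTheory

/-!
The noise `U_Y` is independent of `σ(W, U₀, U_R, U_A)`, which carries `W`, `Y₀`, `R` and `A`.
On the stratum `{W = w, Y₀ = y, R = 1}` the natural potential outcome `Y₁ᵃ` is
`f_Y(w, y, a, U_Y)`, and so is the observed `Y₁` on the cell where moreover `A = a`; by
independence both averages equal `E[f_Y(w, y, a, U_Y)]`, so the integral of `Y₁ᵃ` over the
stratum is its measure times `Q₁(w, y, a)` (positivity keeps the cell non-null). The strata
`{W = w, R = 0}` are handled alike with `g_Y` and `Q₀`. Summing over strata and writing the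
measure of a stratum as `μ(R = r) · μ(stratum | R = r)` gives the mixture.
-/

section

variable {Ω : Type*} {𝒢 mΩ : MeasurableSpace Ω} {μ : Measure Ω}

namespace ProbabilityTheory

theorem iIndep.exists_indep_of_ne {ι : Type*} {m : ι → MeasurableSpace Ω}
    (h_le : ∀ i, m i ≤ mΩ) (h : iIndep m μ) (i : ι) :
    ∃ m' ≤ mΩ, Indep m' (m i) μ ∧ ∀ j ≠ i, m j ≤ m' := by
  refine ⟨⨆ j ∈ ({i}ᶜ : Set ι), m j, iSup₂_le fun j _ => h_le j, ?_,
    fun j hj => le_iSup₂ (f := fun j (_ : j ∈ ({i}ᶜ : Set ι)) => m j) j hj⟩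
  simpa using indep_iSup_of_disjoint h_le h (disjoint_compl_left (a := ({i} : Set ι)))

section IndepOutcome

variable {𝓧 : Type*} [MeasurableSpace 𝓧] {X : Ω → 𝓧} {f : 𝓧 → ℝ}

theorem Indep.setIntegral_eq_measureReal_mul_of_eqOn {E : Set Ω} {Z : Ω → ℝ}
    (h𝒢 : 𝒢 ≤ mΩ) (hind : Indep 𝒢 (MeasurableSpace.comap X inferInstance) μ)
    (hX : Measurable X) (hf : Measurable f) (hE : MeasurableSet[𝒢] E)
    (hZ : Set.EqOn Z (f ∘ X) E) :
    ∫ ω in E, Z ω ∂μ = μ.real E * ∫ ω, f (X ω) ∂μ := by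
  rw [setIntegral_congr_fun (h𝒢 E hE) hZ]
  exact hind.setIntegral_eq_mul h𝒢 hX.aemeasurable hE hf.aestronglyMeasurable

theorem Indep.setIntegral_eq_measureReal_mul_cexp [IsFiniteMeasure μ] {E F : Set Ω}
    {Z Y : Ω → ℝ} (h𝒢 : 𝒢 ≤ mΩ) (hind : Indep 𝒢 (MeasurableSpace.comap X inferInstance) μ)
    (hX : Measurable X) (hf : Measurable f) (hE : MeasurableSet[𝒢] E)
    (hF : MeasurableSet[𝒢] F) (hF0 : μ F ≠ 0) (hZ : Set.EqOn Z (f ∘ X) E)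
    (hY : Set.EqOn Y (f ∘ X) F) :
    ∫ ω in E, Z ω ∂μ = μ.real E * cexp μ Y F := by
  rw [cexp, hind.setIntegral_eq_measureReal_mul_of_eqOn h𝒢 hX hf hE hZ,
    hind.setIntegral_eq_measureReal_mul_of_eqOn h𝒢 hX hf hF hY, ← measureReal_def,
    inv_mul_cancel_left₀ ((measureReal_ne_zero_iff (measure_ne_top μ F)).2 hF0)]

end IndepOutcome

end ProbabilityTheory

theorem measureReal_mul_toReal_cprob [IsFiniteMeasure μ] (S E : Set Ω) :
    μ.real E * (cprob μ S E).toReal = μ.real (S ∩ E) := by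
  rw [cprob, measureReal_def, measureReal_def, ← ENNReal.toReal_mul,
    ENNReal.mul_div_cancel' (fun h => measure_mono_null Set.inter_subset_right h)
      (fun h => absurd h (measure_ne_top μ E))]

theorem setIntegral_eq_sum_fiber {E κ : Type*} [NormedAddCommGroup E] [NormedSpace ℝ E]
    [Fintype κ] [MeasurableSpace κ] [MeasurableSingletonClass κ] {V : Ω → κ} (hV : Measurable V)
    {S : Set Ω} (hS : MeasurableSet S) {X : Ω → E} (hX : IntegrableOn X S μ) :
    ∫ ω in S, X ω ∂μ = ∑ k, ∫ ω in {ω | V ω = k} ∩ S, X ω ∂μ := by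
  have hcover : S = ⋃ k, {ω | V ω = k} ∩ S := by ext; simp
  conv_lhs => rw [hcover]
  refine integral_iUnion_fintype (fun k => (hV (measurableSet_singleton k)).inter hS)
    (fun k l hkl => ?_) fun k => hX.mono_set Set.inter_subset_right
  exact Disjoint.mono Set.inter_subset_left Set.inter_subset_left
    (Set.disjoint_left.2 fun ω hk hl => hkl (hk.symm.trans hl))

section Strata

variable {𝒲 𝒴 : Type*} [Fintype 𝒲] [MeasurableSpace 𝒲] [MeasurableSingletonClass 𝒲]
  [Fintype 𝒴] [MeasurableSpace 𝒴] [MeasurableSingletonClass 𝒴]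
  {W : Ω → 𝒲} {Y : Ω → 𝒴} {R : Ω → Fin 2} {X : Ω → ℝ}

theorem integral_eq_sum_strata (hW : Measurable W) (hY : Measurable Y) (hR : Measurable R)
    (hX : Integrable X μ) :
    ∫ ω, X ω ∂μ = ∑ w, ∫ ω in {ω | W ω = w ∧ R ω = 0}, X ω ∂μ
      + ∑ w, ∑ y, ∫ ω in {ω | W ω = w ∧ Y ω = y ∧ R ω = 1}, X ω ∂μ := by
  have hR0 : MeasurableSet {ω | R ω = 0} := hR (measurableSet_singleton 0)
  have hR1 : MeasurableSet {ω | R ω = 1} := hR (measurableSet_singleton 1)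
  have hcompl : {ω | R ω = 1}ᶜ = {ω | R ω = 0} := by
    ext ω; simp only [Set.mem_compl_iff, Set.mem_ofPred_eq]; omega
  rw [← integral_add_compl hR1 hX, hcompl, add_comm,
    setIntegral_eq_sum_fiber hW hR0 hX.integrableOn,
    setIntegral_eq_sum_fiber hY hR1 hX.integrableOn, Finset.sum_comm]
  exact congrArg _ <| Finset.sum_congr rfl fun y _ =>
    setIntegral_eq_sum_fiber hW ((hY (measurableSet_singleton y)).inter hR1) hX.integrableOn

theorem integral_eq_mixture_of_setIntegral_strata [IsFiniteMeasure μ] (hW : Measurable W)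
    (hY : Measurable Y) (hR : Measurable R) (hX : Integrable X μ) {q₀ : 𝒲 → ℝ}
    {q₁ : 𝒲 → 𝒴 → ℝ}
    (h₀ : ∀ w, ∫ ω in {ω | W ω = w ∧ R ω = 0}, X ω ∂μ = μ.real {ω | W ω = w ∧ R ω = 0} * q₀ w)
    (h₁ : ∀ w y, ∫ ω in {ω | W ω = w ∧ Y ω = y ∧ R ω = 1}, X ω ∂μ
      = μ.real {ω | W ω = w ∧ Y ω = y ∧ R ω = 1} * q₁ w y) :
    ∫ ω, X ω ∂μ
      = (μ {ω | R ω = 0}).toReal * ∑ w, (cprob μ {ω | W ω = w} {ω | R ω = 0}).toReal * q₀ w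
        + (μ {ω | R ω = 1}).toReal *
          ∑ w, ∑ y, (cprob μ {ω | W ω = w ∧ Y ω = y} {ω | R ω = 1}).toReal * q₁ w y := by
  simp only [integral_eq_sum_strata hW hY hR hX, h₀, h₁, Finset.mul_sum, ← mul_assoc,
    ← measureReal_def, measureReal_mul_toReal_cprob]
  simp only [Set.ofPred_and, Set.inter_assoc]

end Strata

section LmSCM

variable {𝒲 𝒴₀ 𝒰₀ 𝒰R 𝒰A 𝒰Y : Type*} [MeasurableSpace 𝒲] [MeasurableSpace 𝒰₀]
  [MeasurableSpace 𝒰R] [MeasurableSpace 𝒰A] [MeasurableSpace 𝒰Y]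
  {W : Ω → 𝒲} {U₀ : Ω → 𝒰₀} {UR : Ω → 𝒰R} {UA : Ω → 𝒰A} {UY : Ω → 𝒰Y}
  {Y₀ : Ω → 𝒴₀} {R A : Ω → Fin 2}

theorem measurable_lmSCM_of_comap_le [MeasurableSpace 𝒴₀] {f₀ : 𝒲 × 𝒰₀ → 𝒴₀} {fR : 𝒲 × 𝒰R → Fin 2}
    {fA : 𝒲 × 𝒴₀ × 𝒰A → Fin 2} {gA : 𝒲 × 𝒰A → Fin 2}
    (hW : MeasurableSpace.comap W inferInstance ≤ 𝒢)
    (hU₀ : MeasurableSpace.comap U₀ inferInstance ≤ 𝒢)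
    (hUR : MeasurableSpace.comap UR inferInstance ≤ 𝒢)
    (hUA : MeasurableSpace.comap UA inferInstance ≤ 𝒢)
    (hf₀ : Measurable f₀) (hfR : Measurable fR) (hfA : Measurable fA) (hgA : Measurable gA)
    (hY₀ : ∀ ω, Y₀ ω = f₀ (W ω, U₀ ω)) (hR : ∀ ω, R ω = fR (W ω, UR ω))
    (hA : ∀ ω, A ω = if R ω = 1 then fA (W ω, Y₀ ω, UA ω) else gA (W ω, UA ω)) :
    Measurable[𝒢] W ∧ Measurable[𝒢] Y₀ ∧ Measurable[𝒢] R ∧ Measurable[𝒢] A := by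
  have hW𝒢 : Measurable[𝒢] W := Measurable.of_comap_le hW
  have hUA𝒢 : Measurable[𝒢] UA := Measurable.of_comap_le hUA
  have hY₀𝒢 : Measurable[𝒢] Y₀ := funext hY₀ ▸ hf₀.comp (hW𝒢.prodMk (Measurable.of_comap_le hU₀))
  have hR𝒢 : Measurable[𝒢] R := funext hR ▸ hfR.comp (hW𝒢.prodMk (Measurable.of_comap_le hUR))
  refine ⟨hW𝒢, hY₀𝒢, hR𝒢, funext hA ▸ .ite (hR𝒢 (.singleton 1)) ?_ ?_⟩
  exacts [hfA.comp (hW𝒢.prodMk (hY₀𝒢.prodMk hUA𝒢)), hgA.comp (hW𝒢.prodMk hUA𝒢)]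

variable [IsFiniteMeasure μ] (h𝒢 : 𝒢 ≤ mΩ)
  (hInd : Indep 𝒢 (MeasurableSpace.comap UY inferInstance) μ) (hUY : Measurable UY)
  (hW : Measurable[𝒢] W) (hR : Measurable[𝒢] R) (hA : Measurable[𝒢] A)
include h𝒢 hInd hUY hW hR hA

variable [MeasurableSingletonClass 𝒲]

theorem setIntegral_stratum_one_eq_measureReal_mul_cexp [MeasurableSpace 𝒴₀]
    [MeasurableSingletonClass 𝒴₀] (hY₀ : Measurable[𝒢] Y₀)
    {fY : 𝒲 × 𝒴₀ × Fin 2 × 𝒰Y → ℝ} (hfY : Measurable fY) {Z Y₁ : Ω → ℝ} {w : 𝒲} {y : 𝒴₀}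
    {a : Fin 2} (hpos : 0 < μ {ω | W ω = w ∧ Y₀ ω = y ∧ R ω = 1 ∧ A ω = a})
    (hZ : ∀ ω, R ω = 1 → Z ω = fY (W ω, Y₀ ω, a, UY ω))
    (hY₁ : ∀ ω, R ω = 1 → Y₁ ω = fY (W ω, Y₀ ω, A ω, UY ω)) :
    ∫ ω in {ω | W ω = w ∧ Y₀ ω = y ∧ R ω = 1}, Z ω ∂μ
      = μ.real {ω | W ω = w ∧ Y₀ ω = y ∧ R ω = 1}
        * cexp μ Y₁ {ω | W ω = w ∧ Y₀ ω = y ∧ A ω = a ∧ R ω = 1} := by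
  have hcell : μ {ω | W ω = w ∧ Y₀ ω = y ∧ A ω = a ∧ R ω = 1} ≠ 0 :=
    (measure_pos_of_superset (by rintro ω ⟨hw, hy, hr, ha⟩; exact ⟨hw, hy, ha, hr⟩)
      hpos.ne').ne'
  exact hInd.setIntegral_eq_measureReal_mul_cexp (f := fun u => fY (w, y, a, u)) h𝒢 hUY
    (by fun_prop) ((hW (.singleton w)).inter ((hY₀ (.singleton y)).inter (hR (.singleton 1))))
    ((hW (.singleton w)).inter ((hY₀ (.singleton y)).inter
      ((hA (.singleton a)).inter (hR (.singleton 1))))) hcell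
    (fun ω ⟨hw, hy, hr⟩ => by simp [hZ ω hr, hw, hy])
    (fun ω ⟨hw, hy, ha, hr⟩ => by simp [hY₁ ω hr, hw, hy, ha])

theorem setIntegral_stratum_zero_eq_measureReal_mul_cexp {gY : 𝒲 × Fin 2 × 𝒰Y → ℝ}
    (hgY : Measurable gY) {Z Y₁ : Ω → ℝ} {w : 𝒲} {y : 𝒴₀} {a : Fin 2}
    (hpos : 0 < μ {ω | W ω = w ∧ Y₀ ω = y ∧ R ω = 0 ∧ A ω = a})
    (hZ : ∀ ω, R ω = 0 → Z ω = gY (W ω, a, UY ω))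
    (hY₁ : ∀ ω, R ω = 0 → Y₁ ω = gY (W ω, A ω, UY ω)) :
    ∫ ω in {ω | W ω = w ∧ R ω = 0}, Z ω ∂μ
      = μ.real {ω | W ω = w ∧ R ω = 0} * cexp μ Y₁ {ω | W ω = w ∧ A ω = a ∧ R ω = 0} := by
  have hcell : μ {ω | W ω = w ∧ A ω = a ∧ R ω = 0} ≠ 0 :=
    (measure_pos_of_superset (by rintro ω ⟨hw, -, hr, ha⟩; exact ⟨hw, ha, hr⟩) hpos.ne').ne'
  exact hInd.setIntegral_eq_measureReal_mul_cexp (f := fun u => gY (w, a, u)) h𝒢 hUY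
    (by fun_prop) ((hW (.singleton w)).inter (hR (.singleton 0)))
    ((hW (.singleton w)).inter ((hA (.singleton a)).inter (hR (.singleton 0)))) hcell
    (fun ω ⟨hw, hr⟩ => by simp [hZ ω hr, hw])
    (fun ω ⟨hw, ha, hr⟩ => by simp [hY₁ ω hr, hw, ha])

end LmSCM

end

theorem lmSCM_nate_recovery_general
    {Ω 𝒲 𝒴₀ 𝒰₀ 𝒰R 𝒰A 𝒰Y : Type*}
    [MeasurableSpace Ω]
    [Fintype 𝒲] [MeasurableSpace 𝒲] [MeasurableSingletonClass 𝒲]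
    [Fintype 𝒴₀] [MeasurableSpace 𝒴₀] [MeasurableSingletonClass 𝒴₀]
    [MeasurableSpace 𝒰₀] [MeasurableSpace 𝒰R] [MeasurableSpace 𝒰A] [MeasurableSpace 𝒰Y]
    (μ : Measure Ω) [IsProbabilityMeasure μ]
    (W : Ω → 𝒲) (U₀ : Ω → 𝒰₀) (UR : Ω → 𝒰R) (UA : Ω → 𝒰A) (UY : Ω → 𝒰Y)
    (hW : Measurable W) (hU₀ : Measurable U₀) (hUR : Measurable UR)
    (hUA : Measurable UA) (hUY : Measurable UY)
    (hIndep : iIndep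
      (![MeasurableSpace.comap W inferInstance, MeasurableSpace.comap U₀ inferInstance,
         MeasurableSpace.comap UR inferInstance, MeasurableSpace.comap UA inferInstance,
         MeasurableSpace.comap UY inferInstance] : Fin 5 → MeasurableSpace Ω) μ)
    (f₀ : 𝒲 × 𝒰₀ → 𝒴₀) (hf₀ : Measurable f₀)
    (fR : 𝒲 × 𝒰R → Fin 2) (hfR : Measurable fR)
    (fA : 𝒲 × 𝒴₀ × 𝒰A → Fin 2) (hfA : Measurable fA)
    (gA : 𝒲 × 𝒰A → Fin 2) (hgA : Measurable gA)
    (fY : 𝒲 × 𝒴₀ × Fin 2 × 𝒰Y → ℝ) (hfY : Measurable fY)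
    (gY : 𝒲 × Fin 2 × 𝒰Y → ℝ) (hgY : Measurable gY)
    (Y₀ : Ω → 𝒴₀) (R A : Ω → Fin 2) (Y₁ : Ω → ℝ)
    (hY₀ : ∀ ω, Y₀ ω = f₀ (W ω, U₀ ω))
    (hR : ∀ ω, R ω = fR (W ω, UR ω))
    (hA : ∀ ω, A ω = if R ω = 1 then fA (W ω, Y₀ ω, UA ω) else gA (W ω, UA ω))
    (hY₁ : ∀ ω, Y₁ ω = if R ω = 1 then fY (W ω, Y₀ ω, A ω, UY ω) else gY (W ω, A ω, UY ω))
    (Ynat : Fin 2 → Ω → ℝ)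
    (hYnat : ∀ (a : Fin 2) (ω : Ω),
      Ynat a ω = if R ω = 1 then fY (W ω, Y₀ ω, a, UY ω) else gY (W ω, a, UY ω))
    (hIntN0 : Integrable (Ynat 0) μ) (hIntN1 : Integrable (Ynat 1) μ)
    (hpos : ∀ (w : 𝒲) (y : 𝒴₀) (r a : Fin 2),
      0 < μ {ω | W ω = w ∧ Y₀ ω = y ∧ R ω = r ∧ A ω = a})
    (Q1 : 𝒲 → 𝒴₀ → Fin 2 → ℝ)
    (hQ1 : ∀ (w : 𝒲) (y : 𝒴₀) (a : Fin 2),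
      Q1 w y a = cexp μ Y₁ {ω | W ω = w ∧ Y₀ ω = y ∧ A ω = a ∧ R ω = 1})
    (Q0 : 𝒲 → Fin 2 → ℝ)
    (hQ0 : ∀ (w : 𝒲) (a : Fin 2), Q0 w a = cexp μ Y₁ {ω | W ω = w ∧ A ω = a ∧ R ω = 0})
    :
    (∫ ω, Ynat 1 ω ∂μ) - (∫ ω, Ynat 0 ω ∂μ)
      = (μ {ω | R ω = 0}).toReal *
          (∑ w : 𝒲, (cprob μ {ω | W ω = w} {ω | R ω = 0}).toReal * (Q0 w 1 - Q0 w 0))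
        + (μ {ω | R ω = 1}).toReal *
          (∑ w : 𝒲, ∑ y : 𝒴₀,
            (cprob μ {ω | W ω = w ∧ Y₀ ω = y} {ω | R ω = 1}).toReal
              * (Q1 w y 1 - Q1 w y 0)) := by
  obtain ⟨𝒢, h𝒢, hInd, hle⟩ := hIndep.exists_indep_of_ne (fun j => by
    fin_cases j
    exacts [hW.comap_le, hU₀.comap_le, hUR.comap_le, hUA.comap_le, hUY.comap_le]) 4
  obtain ⟨hW𝒢, hY₀𝒢, hR𝒢, hA𝒢⟩ := measurable_lmSCM_of_comap_le (hle 0 (by decide))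
    (hle 1 (by decide)) (hle 2 (by decide)) (hle 3 (by decide)) hf₀ hfR hfA hgA hY₀ hR hA
  obtain ⟨ω₀⟩ := nonempty_of_isProbabilityMeasure μ
  have hmix (a : Fin 2) (hint : Integrable (Ynat a) μ) :=
    integral_eq_mixture_of_setIntegral_strata (hW𝒢.mono h𝒢 le_rfl) (hY₀𝒢.mono h𝒢 le_rfl)
      (hR𝒢.mono h𝒢 le_rfl) hint (q₀ := (Q0 · a)) (q₁ := (Q1 · · a))
      (fun w => by
        rw [hQ0]
        exact setIntegral_stratum_zero_eq_measureReal_mul_cexp h𝒢 hInd hUY hW𝒢 hR𝒢 hA𝒢 hgY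
          (hpos w (Y₀ ω₀) 0 a) (fun ω hr => by simp [hYnat, hr]) (fun ω hr => by simp [hY₁, hr]))
      (fun w y => by
        rw [hQ1]
        exact setIntegral_stratum_one_eq_measureReal_mul_cexp h𝒢 hInd hUY hW𝒢 hR𝒢 hA𝒢 hY₀𝒢 hfY
          (hpos w y 1 a) (fun ω hr => by simp [hYnat, hr]) (fun ω hr => by simp [hY₁, hr]))
  rw [hmix 1 hIntN1, hmix 0 hIntN0]
  simp only [mul_sub, Finset.sum_sub_distrib]
  ring

/-- In the discrete lm-SCM of Figure 1c, under positivity, the NATE is recovered as the mixture-over-contexts estimand of Equations (12)-(13). -/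
theorem lmSCM_nate_recovery
    {Ω 𝒲 𝒴₀ 𝒰₀ 𝒰R 𝒰A 𝒰Y : Type*}
    [MeasurableSpace Ω]
    [Fintype 𝒲] [Nonempty 𝒲] [MeasurableSpace 𝒲] [MeasurableSingletonClass 𝒲]
    [Fintype 𝒴₀] [Nonempty 𝒴₀] [MeasurableSpace 𝒴₀] [MeasurableSingletonClass 𝒴₀]
    [MeasurableSpace 𝒰₀] [MeasurableSpace 𝒰R] [MeasurableSpace 𝒰A] [MeasurableSpace 𝒰Y]
    (μ : Measure Ω) [IsProbabilityMeasure μ]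
    (W : Ω → 𝒲) (U₀ : Ω → 𝒰₀) (UR : Ω → 𝒰R) (UA : Ω → 𝒰A) (UY : Ω → 𝒰Y)
    (hW : Measurable W) (hU₀ : Measurable U₀) (hUR : Measurable UR)
    (hUA : Measurable UA) (hUY : Measurable UY)
    (hIndep : iIndep
      (![MeasurableSpace.comap W inferInstance, MeasurableSpace.comap U₀ inferInstance,
         MeasurableSpace.comap UR inferInstance, MeasurableSpace.comap UA inferInstance,
         MeasurableSpace.comap UY inferInstance] : Fin 5 → MeasurableSpace Ω) μ)
    (f₀ : 𝒲 × 𝒰₀ → 𝒴₀) (hf₀ : Measurable f₀)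
    (fR : 𝒲 × 𝒰R → Fin 2) (hfR : Measurable fR)
    (fA : 𝒲 × 𝒴₀ × 𝒰A → Fin 2) (hfA : Measurable fA)
    (gA : 𝒲 × 𝒰A → Fin 2) (hgA : Measurable gA)
    (fY : 𝒲 × 𝒴₀ × Fin 2 × 𝒰Y → ℝ) (hfY : Measurable fY)
    (gY : 𝒲 × Fin 2 × 𝒰Y → ℝ) (hgY : Measurable gY)
    (Y₀ : Ω → 𝒴₀) (R A : Ω → Fin 2) (Y₁ : Ω → ℝ)
    (hY₀ : ∀ ω, Y₀ ω = f₀ (W ω, U₀ ω))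
    (hR : ∀ ω, R ω = fR (W ω, UR ω))
    (hA : ∀ ω, A ω = if R ω = 1 then fA (W ω, Y₀ ω, UA ω) else gA (W ω, UA ω))
    (hY₁ : ∀ ω, Y₁ ω = if R ω = 1 then fY (W ω, Y₀ ω, A ω, UY ω) else gY (W ω, A ω, UY ω))
    (Ynat : Fin 2 → Ω → ℝ)
    (hYnat : ∀ (a : Fin 2) (ω : Ω),
      Ynat a ω = if R ω = 1 then fY (W ω, Y₀ ω, a, UY ω) else gY (W ω, a, UY ω))
    (Yful : Fin 2 → Ω → ℝ)
    (hYful : ∀ (a : Fin 2) (ω : Ω), Yful a ω = fY (W ω, Y₀ ω, a, UY ω))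
    (hIntY₁ : Integrable Y₁ μ)
    (hIntN0 : Integrable (Ynat 0) μ) (hIntN1 : Integrable (Ynat 1) μ)
    (hIntF0 : Integrable (Yful 0) μ) (hIntF1 : Integrable (Yful 1) μ)
    (hpos : ∀ (w : 𝒲) (y : 𝒴₀) (r a : Fin 2),
      0 < μ {ω | W ω = w ∧ Y₀ ω = y ∧ R ω = r ∧ A ω = a})
    (Q1 : 𝒲 → 𝒴₀ → Fin 2 → ℝ)
    (hQ1 : ∀ (w : 𝒲) (y : 𝒴₀) (a : Fin 2),
      Q1 w y a = cexp μ Y₁ {ω | W ω = w ∧ Y₀ ω = y ∧ A ω = a ∧ R ω = 1})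
    (Q0 : 𝒲 → Fin 2 → ℝ)
    (hQ0 : ∀ (w : 𝒲) (a : Fin 2), Q0 w a = cexp μ Y₁ {ω | W ω = w ∧ A ω = a ∧ R ω = 0})
    :
    (∫ ω, Ynat 1 ω ∂μ) - (∫ ω, Ynat 0 ω ∂μ)
      = (μ {ω | R ω = 0}).toReal *
          (∑ w : 𝒲, (cprob μ {ω | W ω = w} {ω | R ω = 0}).toReal * (Q0 w 1 - Q0 w 0))
        + (μ {ω | R ω = 1}).toReal *
          (∑ w : 𝒲, ∑ y : 𝒴₀,
            (cprob μ {ω | W ω = w ∧ Y₀ ω = y} {ω | R ω = 1}).toReal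
              * (Q1 w y 1 - Q1 w y 0)) :=
  lmSCM_nate_recovery_general μ W U₀ UR UA UY hW hU₀ hUR hUA hUY hIndep f₀ hf₀ fR hfR fA hfA gA hgA
    fY hfY gY hgY Y₀ R A Y₁ hY₀ hR hA hY₁ Ynat hYnat hIntN0 hIntN1 hpos Q1 hQ1 Q0 hQ0
end

section
/- In the SCM for Figure 3c, for each a ∈ {0,1} with μ(A = a, R_W = 0) > 0 and every Borel set S ⊆ ℝ, the interventional distribution is recovered by restricting to the context R_W = 0: μ(Yᵃ ∈ S) = μ(Y ∈ S | A = a, R_W = 0). In particular the causal effect of A on Y is recoverable from this model even though the corresponding backdoor path through W is confounded when R_W = 1. -/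
open MeasureTheory ProbabilityTheory

/-- **Recovery in Figure 3c.** In the SCM for Figure 3c, for each `a` with
`μ(A = a, R_W = 0) > 0`, the interventional distribution of `Y` under `do(A = a)` is
recovered by restricting to the context `R_W = 0`. -/
theorem fig3c_recovery
    {Ω 𝒵 𝒱₁ 𝒱₂ 𝒰W 𝒰A 𝒰Y 𝒲 : Type*}
    [MeasurableSpace Ω] [MeasurableSpace 𝒵] [MeasurableSpace 𝒱₁] [MeasurableSpace 𝒱₂]
    [MeasurableSpace 𝒰W] [MeasurableSpace 𝒰A] [MeasurableSpace 𝒰Y] [MeasurableSpace 𝒲]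
    (μ : Measure Ω) [IsProbabilityMeasure μ]
    (Z : Ω → 𝒵) (V₁ : Ω → 𝒱₁) (V₂ : Ω → 𝒱₂)
    (UW : Ω → 𝒰W) (UA : Ω → 𝒰A) (UY : Ω → 𝒰Y) (RW : Ω → Fin 2)
    (hZ : Measurable Z) (hV₁ : Measurable V₁) (hV₂ : Measurable V₂)
    (hUW : Measurable UW) (hUA : Measurable UA) (hUY : Measurable UY)
    (hRW : Measurable RW)
    (hIndep : iIndep
      (![MeasurableSpace.comap Z inferInstance, MeasurableSpace.comap V₁ inferInstance,
         MeasurableSpace.comap V₂ inferInstance, MeasurableSpace.comap UW inferInstance,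
         MeasurableSpace.comap UA inferInstance, MeasurableSpace.comap UY inferInstance,
         MeasurableSpace.comap RW inferInstance] : Fin 7 → MeasurableSpace Ω) μ)
    (fW : 𝒵 × 𝒱₁ × 𝒰W → 𝒲) (hfW : Measurable fW)
    (fA : 𝒵 × 𝒲 × 𝒰A → Fin 2) (hfA : Measurable fA)
    (gA : 𝒵 × 𝒰A → Fin 2) (hgA : Measurable gA)
    (fY : Fin 2 × 𝒱₁ × 𝒱₂ × 𝒰Y → ℝ) (hfY : Measurable fY)
    (W : Ω → 𝒲) (A : Ω → Fin 2) (Y : Ω → ℝ)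
    (hWdef : ∀ ω, W ω = fW (Z ω, V₁ ω, UW ω))
    (hAdef : ∀ ω, A ω = if RW ω = 1 then fA (Z ω, W ω, UA ω) else gA (Z ω, UA ω))
    (hYdef : ∀ ω, Y ω = fY (A ω, V₁ ω, V₂ ω, UY ω))
    (Ypo : Fin 2 → Ω → ℝ)
    (hYpo : ∀ (a : Fin 2) (ω : Ω), Ypo a ω = fY (a, V₁ ω, V₂ ω, UY ω)) :
    ∀ a : Fin 2, 0 < μ {ω | A ω = a ∧ RW ω = 0} →
      ∀ S : Set ℝ, MeasurableSet S →
        μ {ω | Ypo a ω ∈ S} = cprob μ {ω | Y ω ∈ S} {ω | A ω = a ∧ RW ω = 0} := by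

  intro a hpos S hS
  set m : Fin 7 → MeasurableSpace Ω :=
    ![MeasurableSpace.comap Z inferInstance, MeasurableSpace.comap V₁ inferInstance,
      MeasurableSpace.comap V₂ inferInstance, MeasurableSpace.comap UW inferInstance,
      MeasurableSpace.comap UA inferInstance, MeasurableSpace.comap UY inferInstance,
      MeasurableSpace.comap RW inferInstance] with hm
  have h_le : ∀ i, m i ≤ ‹MeasurableSpace Ω› := by
    intro i
    fin_cases i
    · exact hZ.comap_le
    · exact hV₁.comap_le
    · exact hV₂.comap_le
    · exact hUW.comap_le
    · exact hUA.comap_le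
    · exact hUY.comap_le
    · exact hRW.comap_le
  have hIndep' : Indep (⨆ i ∈ ({1,2,5} : Set (Fin 7)), m i)
      (⨆ i ∈ ({0,4,6} : Set (Fin 7)), m i) μ := by
    refine indep_iSup_of_disjoint h_le hIndep ?_
    rw [Set.disjoint_iff]
    intro x hx
    fin_cases x <;> simp_all
  set M1 := ⨆ i ∈ ({1,2,5} : Set (Fin 7)), m i with hM1
  set M2 := ⨆ i ∈ ({0,4,6} : Set (Fin 7)), m i with hM2
  -- measurability of the relevant maps w.r.t. the grouped σ-algebras
  have hV₁' : Measurable[M1] V₁ := by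
    rw [measurable_iff_comap_le]
    exact le_trans (le_of_eq rfl) (le_biSup m (by norm_num : (1 : Fin 7) ∈ ({1,2,5} : Set (Fin 7))))
  have hV₂' : Measurable[M1] V₂ := by
    rw [measurable_iff_comap_le]
    exact le_trans (le_of_eq rfl) (le_biSup m (by norm_num : (2 : Fin 7) ∈ ({1,2,5} : Set (Fin 7))))
  have hUY' : Measurable[M1] UY := by
    rw [measurable_iff_comap_le]
    exact le_trans (le_of_eq rfl) (le_biSup m (by norm_num : (5 : Fin 7) ∈ ({1,2,5} : Set (Fin 7))))
  have hZ' : Measurable[M2] Z := by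
    rw [measurable_iff_comap_le]
    exact le_trans (le_of_eq rfl) (le_biSup m (by norm_num : (0 : Fin 7) ∈ ({0,4,6} : Set (Fin 7))))
  have hUA' : Measurable[M2] UA := by
    rw [measurable_iff_comap_le]
    exact le_trans (le_of_eq rfl) (le_biSup m (by norm_num : (4 : Fin 7) ∈ ({0,4,6} : Set (Fin 7))))
  have hRW' : Measurable[M2] RW := by
    rw [measurable_iff_comap_le]
    exact le_trans (le_of_eq rfl) (le_biSup m (by norm_num : (6 : Fin 7) ∈ ({0,4,6} : Set (Fin 7))))
  -- the potential-outcome event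
  have hE1 : MeasurableSet[M1] {ω | Ypo a ω ∈ S} := by
    have hmap : Measurable[M1] (fun ω => fY (a, V₁ ω, V₂ ω, UY ω)) :=
      hfY.comp (measurable_const.prodMk (hV₁'.prodMk (hV₂'.prodMk hUY')))
    have : {ω | Ypo a ω ∈ S} = (fun ω => fY (a, V₁ ω, V₂ ω, UY ω)) ⁻¹' S := by
      ext ω; simp [hYpo]
    rw [this]
    exact hmap hS
  -- the conditioning event
  have hEeq : {ω | A ω = a ∧ RW ω = 0}
      = {ω | gA (Z ω, UA ω) = a} ∩ {ω | RW ω = 0} := by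
    ext ω
    simp only [Set.mem_setOf_eq, Set.mem_inter_iff]
    constructor
    · rintro ⟨hA, hR⟩
      refine ⟨?_, hR⟩
      rw [hAdef ω, hR] at hA
      simpa using hA
    · rintro ⟨hg, hR⟩
      refine ⟨?_, hR⟩
      rw [hAdef ω, hR]
      simpa using hg
  have hE2 : MeasurableSet[M2] {ω | A ω = a ∧ RW ω = 0} := by
    rw [hEeq]
    refine MeasurableSet.inter ?_ ?_
    · exact (hgA.comp (hZ'.prodMk hUA')) (measurableSet_singleton a)
    · exact hRW' (measurableSet_singleton 0)
  -- on the conditioning event, Y = Ypo a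
  have hYeq : {ω | Y ω ∈ S} ∩ {ω | A ω = a ∧ RW ω = 0}
      = {ω | Ypo a ω ∈ S} ∩ {ω | A ω = a ∧ RW ω = 0} := by
    ext ω
    simp only [Set.mem_inter_iff, Set.mem_setOf_eq]
    constructor
    · rintro ⟨hY, hA, hR⟩
      refine ⟨?_, hA, hR⟩
      rw [hYpo, ← hA, ← hYdef]; exact hY
    · rintro ⟨hY, hA, hR⟩
      refine ⟨?_, hA, hR⟩
      rw [hYdef, hA, ← hYpo]; exact hY
  -- independence factorization
  have hfac : μ ({ω | Ypo a ω ∈ S} ∩ {ω | A ω = a ∧ RW ω = 0})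
      = μ {ω | Ypo a ω ∈ S} * μ {ω | A ω = a ∧ RW ω = 0} := by
    rw [Indep_iff] at hIndep'
    exact hIndep' _ _ hE1 hE2
  unfold cprob
  rw [hYeq, hfac]
  have hne : μ {ω | A ω = a ∧ RW ω = 0} ≠ 0 := ne_of_gt hpos
  have hnt : μ {ω | A ω = a ∧ RW ω = 0} ≠ ⊤ := measure_ne_top μ _
  rw [mul_div_assoc, ENNReal.div_self hne hnt, mul_one]
end

section
/- In the discrete lm-SCM for the motivating example (Figure 1c), under Positivity and with the true Nuisance functions, the population mean of the context-parameterized AIPW score equals the NATE: E[ (Q_R(1) − Q_R(0)) + (A − π_R) / (π_R (1 − π_R)) · (Y₁ − Q_R(A)) ] = θ, where pointwise on Ω, Q_R(a) := if R = 1 then Q₁(W, Y₀, a) else Q₀(W, a), and π_R := if R = 1 then π₁(W, Y₀) else π₀(W). -/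
open MeasureTheory ProbabilityTheory

/-!
The AIPW score splits into the outcome-model contrast `Q_R(1) - Q_R(0)` and a weighted residual
`c · (Y₁ - Q_R(A))`. The weight depends only on the context (`W` if `R = 0`, `(W, Y₀)` if `R = 1`)
and on `A`, and `Q_R(A)` is the conditional mean of `Y₁` on exactly these cells, so the residual
term has mean zero. For the contrast, `(W, Y₀, A, R)` is a function of `(W, U₀, U_R, U_A)` and
hence independent of `U_Y`; this makes each regression `Q_r(w, y, a)` the plain mean of the
structural outcome function at `a`, and, by Fubini over the product law of `((W, Y₀, A, R), U_Y)`,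
`E[Q_R(a)] = E[Y₁ᵃ]`.
-/

open Set

section General

variable {Ω ι 𝓧 𝓨 E : Type*} {m mΩ : MeasurableSpace Ω} {μ : Measure Ω}

lemma setIntegral_eq_measureReal_mul_cexp [IsFiniteMeasure μ] (X : Ω → ℝ) (s : Set Ω) :
    ∫ ω in s, X ω ∂μ = μ.real s * cexp μ X s := by
  rcases eq_or_ne (μ s) 0 with hs | hs
  · simp [Measure.restrict_eq_zero.2 hs, measureReal_def, hs]
  · rw [cexp, ← mul_assoc, measureReal_def,
      mul_inv_cancel₀ (ENNReal.toReal_ne_zero.2 ⟨hs, measure_ne_top μ s⟩), one_mul]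

lemma integral_mul_sub_cexp_preimage_eq_zero [IsFiniteMeasure μ] [Fintype ι] {B : Ω → ι}
    (hB : ∀ i, MeasurableSet (B ⁻¹' {i})) {Y : Ω → ℝ} (hY : Integrable Y μ) (c q : ι → ℝ)
    (hq : ∀ i, q i = cexp μ Y (B ⁻¹' {i})) :
    Integrable (fun ω => c (B ω) * (Y ω - q (B ω))) μ ∧
      ∫ ω, c (B ω) * (Y ω - q (B ω)) ∂μ = 0 := by
  classical
  have hg : ∀ i, Integrable (fun ω => c i * (Y ω - q i)) μ :=
    fun i => (hY.sub (integrable_const _)).const_mul _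
  have hsum : (fun ω => c (B ω) * (Y ω - q (B ω)))
      = fun ω => ∑ i, (B ⁻¹' {i}).indicator (fun ω => c i * (Y ω - q i)) ω := by
    ext ω
    simp [Set.indicator_apply, eq_comm]
  rw [hsum]
  refine ⟨integrable_finsetSum _ fun i _ => (hg i).indicator (hB i), ?_⟩
  rw [integral_finsetSum _ fun i _ => (hg i).indicator (hB i)]
  refine Finset.sum_eq_zero fun i _ => ?_
  rw [integral_indicator (hB i), integral_const_mul, integral_sub hY.integrableOn
    (integrable_const _), setIntegral_const, setIntegral_eq_measureReal_mul_cexp, hq i,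
    smul_eq_mul, sub_self, mul_zero]

namespace ProbabilityTheory

lemma Indep.cexp_eq_integral_comp [IsFiniteMeasure μ] [m𝓧 : MeasurableSpace 𝓧]
    {U : Ω → 𝓧} (hm : m ≤ mΩ) (hind : Indep m (m𝓧.comap U) μ) (hU : Measurable U)
    {φ : 𝓧 → ℝ} (hφ : Measurable φ) {s : Set Ω} (hs : MeasurableSet[m] s) (hpos : μ s ≠ 0)
    {Y : Ω → ℝ} (hY : EqOn Y (fun ω => φ (U ω)) s) :
    cexp μ Y s = ∫ ω, φ (U ω) ∂μ := by
  rw [cexp, setIntegral_congr_fun (hm s hs) hY,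
    hind.setIntegral_eq_mul hm hU.aemeasurable hs hφ.aestronglyMeasurable, measureReal_def,
    inv_mul_cancel_left₀ (ENNReal.toReal_ne_zero.2 ⟨hpos, measure_ne_top μ s⟩)]

lemma IndepFun.integral_comp_prodMk [IsFiniteMeasure μ] [MeasurableSpace 𝓧] [MeasurableSpace 𝓨]
    [NormedAddCommGroup E] [NormedSpace ℝ E]
    {Z : Ω → 𝓧} {U : Ω → 𝓨} (hZU : IndepFun Z U μ) (hZ : Measurable Z) (hU : Measurable U)
    {h : 𝓧 × 𝓨 → E} (hh : StronglyMeasurable h) (hint : Integrable (fun ω => h (Z ω, U ω)) μ) :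
    ∫ ω, h (Z ω, U ω) ∂μ = ∫ ω, ∫ ω', h (Z ω, U ω') ∂μ ∂μ := by
  have hZU' : Measurable fun ω => (Z ω, U ω) := hZ.prodMk hU
  have hmap : μ.map (fun ω => (Z ω, U ω)) = (μ.map Z).prod (μ.map U) :=
    (indepFun_iff_map_prod_eq_prod_map_map hZ.aemeasurable hU.aemeasurable).1 hZU
  have hint' : Integrable h ((μ.map Z).prod (μ.map U)) :=
    hmap ▸ (integrable_map_measure hh.aestronglyMeasurable hZU'.aemeasurable).2 hint
  rw [← integral_map hZU'.aemeasurable hh.aestronglyMeasurable, hmap, integral_prod _ hint',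
    integral_map hZ.aemeasurable hh.integral_prod_right'.aestronglyMeasurable]
  congr 1 with ω
  exact integral_map hU.aemeasurable
    (hh.comp_measurable measurable_prodMk_left).aestronglyMeasurable

end ProbabilityTheory

end General

section Model

variable {Ω 𝒲 𝒴₀ 𝒰₀ 𝒰R 𝒰A 𝒰Y : Type*} [MeasurableSpace 𝒲] [MeasurableSpace 𝒴₀]
  [MeasurableSpace 𝒰₀] [MeasurableSpace 𝒰R] [MeasurableSpace 𝒰A] [MeasurableSpace 𝒰Y]
  {W : Ω → 𝒲} {U₀ : Ω → 𝒰₀} {UR : Ω → 𝒰R} {UA : Ω → 𝒰A} {UY : Ω → 𝒰Y}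
  {Y₀ : Ω → 𝒴₀} {R A : Ω → Fin 2} {Y₁ : Ω → ℝ}
  {f₀ : 𝒲 × 𝒰₀ → 𝒴₀} {fR : 𝒲 × 𝒰R → Fin 2} {fA : 𝒲 × 𝒴₀ × 𝒰A → Fin 2} {gA : 𝒲 × 𝒰A → Fin 2}
  {fY : 𝒲 × 𝒴₀ × Fin 2 × 𝒰Y → ℝ} {gY : 𝒲 × Fin 2 × 𝒰Y → ℝ}
  {Q1 : 𝒲 → 𝒴₀ → Fin 2 → ℝ} {Q0 : 𝒲 → Fin 2 → ℝ}

lemma lmSCM_measurable_pretreatment {m : MeasurableSpace Ω}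
    (hW : Measurable W) (hU₀ : Measurable U₀) (hUR : Measurable UR) (hUA : Measurable UA)
    (hf₀ : Measurable f₀) (hfR : Measurable fR) (hfA : Measurable fA) (hgA : Measurable gA)
    (hY₀ : ∀ ω, Y₀ ω = f₀ (W ω, U₀ ω)) (hR : ∀ ω, R ω = fR (W ω, UR ω))
    (hA : ∀ ω, A ω = if R ω = 1 then fA (W ω, Y₀ ω, UA ω) else gA (W ω, UA ω)) :
    Measurable fun ω => (W ω, Y₀ ω, A ω, R ω) := by
  have hY₀m : Measurable Y₀ := funext hY₀ ▸ hf₀.comp (hW.prodMk hU₀)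
  have hRm : Measurable R := funext hR ▸ hfR.comp (hW.prodMk hUR)
  have hAm : Measurable A := funext hA ▸ Measurable.ite (hRm (measurableSet_singleton 1))
    (hfA.comp (hW.prodMk (hY₀m.prodMk hUA))) (hgA.comp (hW.prodMk hUA))
  exact hW.prodMk (hY₀m.prodMk (hAm.prodMk hRm))

lemma lmSCM_indepFun_pretreatment {mΩ : MeasurableSpace Ω} {μ : Measure Ω}
    (hW : Measurable W) (hU₀ : Measurable U₀) (hUR : Measurable UR) (hUA : Measurable UA)
    (hUY : Measurable UY)
    (hIndep : iIndep
      (![MeasurableSpace.comap W inferInstance, MeasurableSpace.comap U₀ inferInstance,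
         MeasurableSpace.comap UR inferInstance, MeasurableSpace.comap UA inferInstance,
         MeasurableSpace.comap UY inferInstance] : Fin 5 → MeasurableSpace Ω) μ)
    (hf₀ : Measurable f₀) (hfR : Measurable fR) (hfA : Measurable fA) (hgA : Measurable gA)
    (hY₀ : ∀ ω, Y₀ ω = f₀ (W ω, U₀ ω)) (hR : ∀ ω, R ω = fR (W ω, UR ω))
    (hA : ∀ ω, A ω = if R ω = 1 then fA (W ω, Y₀ ω, UA ω) else gA (W ω, UA ω)) :
    IndepFun (fun ω => (W ω, Y₀ ω, A ω, R ω)) UY μ := by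
  set m : Fin 5 → MeasurableSpace Ω :=
    ![MeasurableSpace.comap W inferInstance, MeasurableSpace.comap U₀ inferInstance,
      MeasurableSpace.comap UR inferInstance, MeasurableSpace.comap UA inferInstance,
      MeasurableSpace.comap UY inferInstance]
  have hle : ∀ i, m i ≤ mΩ := by
    intro i
    fin_cases i
    exacts [hW.comap_le, hU₀.comap_le, hUR.comap_le, hUA.comap_le, hUY.comap_le]
  have hS : ∀ i ∈ ({0, 1, 2, 3} : Set (Fin 5)), m i ≤ ⨆ j ∈ ({0, 1, 2, 3} : Set (Fin 5)), m j :=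
    fun i hi => le_biSup m hi
  have hT : Measurable[⨆ j ∈ ({0, 1, 2, 3} : Set (Fin 5)), m j]
      fun ω => (W ω, Y₀ ω, A ω, R ω) :=
    lmSCM_measurable_pretreatment (.of_comap_le (hS 0 (by simp))) (.of_comap_le (hS 1 (by simp)))
      (.of_comap_le (hS 2 (by simp))) (.of_comap_le (hS 3 (by simp))) hf₀ hfR hfA hgA hY₀ hR hA
  rw [IndepFun_iff_Indep]
  exact indep_of_indep_of_le (indep_iSup_of_disjoint hle hIndep (by simp)) hT.comap_le
    (le_biSup m (by simp : (4 : Fin 5) ∈ ({4} : Set (Fin 5))))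

lemma lmSCM_regression_eq_integral {mΩ : MeasurableSpace Ω} {μ : Measure Ω} [IsFiniteMeasure μ]
    [Countable 𝒲] [MeasurableSingletonClass 𝒲] [Countable 𝒴₀] [MeasurableSingletonClass 𝒴₀]
    (hTU : IndepFun (fun ω => (W ω, Y₀ ω, A ω, R ω)) UY μ)
    (hT : Measurable fun ω => (W ω, Y₀ ω, A ω, R ω)) (hUY : Measurable UY)
    (hfY : Measurable fY) (hgY : Measurable gY)
    (hY₁ : ∀ ω, Y₁ ω = if R ω = 1 then fY (W ω, Y₀ ω, A ω, UY ω) else gY (W ω, A ω, UY ω))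
    (hpos : ∀ (w : 𝒲) (y : 𝒴₀) (r a : Fin 2),
      0 < μ {ω | W ω = w ∧ Y₀ ω = y ∧ R ω = r ∧ A ω = a})
    (hQ1 : ∀ (w : 𝒲) (y : 𝒴₀) (a : Fin 2),
      Q1 w y a = cexp μ Y₁ {ω | W ω = w ∧ Y₀ ω = y ∧ A ω = a ∧ R ω = 1})
    (hQ0 : ∀ (w : 𝒲) (a : Fin 2), Q0 w a = cexp μ Y₁ {ω | W ω = w ∧ A ω = a ∧ R ω = 0})
    (r : Fin 2) (w : 𝒲) (y : 𝒴₀) (a : Fin 2) :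
    (if r = 1 then Q1 w y a else Q0 w a)
      = ∫ ω, (if r = 1 then fY (w, y, a, UY ω) else gY (w, a, UY ω)) ∂μ := by
  have hind := (IndepFun_iff_Indep _ _ _).1 hTU
  by_cases hr : r = 1
  · simp only [hr, if_true, hQ1]
    refine hind.cexp_eq_integral_comp (φ := fun u => fY (w, y, a, u)) hT.comap_le hUY
      (by fun_prop) ⟨{t | t.1 = w ∧ t.2.1 = y ∧ t.2.2.1 = a ∧ t.2.2.2 = 1}, .of_discrete, rfl⟩
      ((hpos w y 1 a).trans_le (measure_mono ?_)).ne' ?_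
    · exact fun ω ⟨h1, h2, h3, h4⟩ => ⟨h1, h2, h4, h3⟩
    · rintro ω ⟨rfl, rfl, rfl, hR : R ω = 1⟩
      simp [hY₁, hR]
  · simp only [hr, if_false, hQ0]
    refine hind.cexp_eq_integral_comp (φ := fun u => gY (w, a, u)) hT.comap_le hUY
      (by fun_prop) ⟨{t | t.1 = w ∧ t.2.2.1 = a ∧ t.2.2.2 = 0}, .of_discrete, rfl⟩
      ((hpos w y 0 a).trans_le (measure_mono ?_)).ne' ?_
    · exact fun ω ⟨h1, _, h3, h4⟩ => ⟨h1, h4, h3⟩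
    · rintro ω ⟨rfl, rfl, hR : R ω = 0⟩
      simp [hY₁, hR]

lemma lmSCM_integral_natural_outcome {mΩ : MeasurableSpace Ω} {μ : Measure Ω} [IsFiniteMeasure μ]
    [Countable 𝒲] [MeasurableSingletonClass 𝒲] [Countable 𝒴₀] [MeasurableSingletonClass 𝒴₀]
    (hTU : IndepFun (fun ω => (W ω, Y₀ ω, A ω, R ω)) UY μ)
    (hT : Measurable fun ω => (W ω, Y₀ ω, A ω, R ω)) (hUY : Measurable UY)
    (hfY : Measurable fY) (hgY : Measurable gY)
    (hY₁ : ∀ ω, Y₁ ω = if R ω = 1 then fY (W ω, Y₀ ω, A ω, UY ω) else gY (W ω, A ω, UY ω))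
    (hpos : ∀ (w : 𝒲) (y : 𝒴₀) (r a : Fin 2),
      0 < μ {ω | W ω = w ∧ Y₀ ω = y ∧ R ω = r ∧ A ω = a})
    (hQ1 : ∀ (w : 𝒲) (y : 𝒴₀) (a : Fin 2),
      Q1 w y a = cexp μ Y₁ {ω | W ω = w ∧ Y₀ ω = y ∧ A ω = a ∧ R ω = 1})
    (hQ0 : ∀ (w : 𝒲) (a : Fin 2), Q0 w a = cexp μ Y₁ {ω | W ω = w ∧ A ω = a ∧ R ω = 0})
    (a : Fin 2) {Yₐ : Ω → ℝ}
    (hYₐ : ∀ ω, Yₐ ω = if R ω = 1 then fY (W ω, Y₀ ω, a, UY ω) else gY (W ω, a, UY ω))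
    (hint : Integrable Yₐ μ) :
    ∫ ω, Yₐ ω ∂μ = ∫ ω, (if R ω = 1 then Q1 (W ω) (Y₀ ω) a else Q0 (W ω) a) ∂μ := by
  rw [funext hYₐ] at hint ⊢
  rw [hTU.integral_comp_prodMk (h := fun p => if p.1.2.2.2 = 1 then fY (p.1.1, p.1.2.1, a, p.2)
    else gY (p.1.1, a, p.2)) hT hUY ?_ hint]
  · exact integral_congr_ae (ae_of_all _ fun ω =>
      (lmSCM_regression_eq_integral hTU hT hUY hfY hgY hY₁ hpos hQ1 hQ0 _ _ _ a).symm)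
  · refine (measurable_from_prod_countable_right fun t => ?_).stronglyMeasurable
    dsimp only
    split_ifs <;> fun_prop

lemma lmSCM_integral_aipw_correction {mΩ : MeasurableSpace Ω} {μ : Measure Ω} [IsFiniteMeasure μ]
    [Fintype 𝒲] [MeasurableSingletonClass 𝒲] [Fintype 𝒴₀] [MeasurableSingletonClass 𝒴₀]
    (hT : Measurable fun ω => (W ω, Y₀ ω, A ω, R ω)) (hY₁ : Integrable Y₁ μ)
    (hQ1 : ∀ (w : 𝒲) (y : 𝒴₀) (a : Fin 2),
      Q1 w y a = cexp μ Y₁ {ω | W ω = w ∧ Y₀ ω = y ∧ A ω = a ∧ R ω = 1})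
    (hQ0 : ∀ (w : 𝒲) (a : Fin 2), Q0 w a = cexp μ Y₁ {ω | W ω = w ∧ A ω = a ∧ R ω = 0})
    (π1 : 𝒲 → 𝒴₀ → ℝ) (π0 : 𝒲 → ℝ) :
    Integrable (fun ω => (((A ω : ℕ) : ℝ) - (if R ω = 1 then π1 (W ω) (Y₀ ω) else π0 (W ω)))
        / ((if R ω = 1 then π1 (W ω) (Y₀ ω) else π0 (W ω))
          * (1 - (if R ω = 1 then π1 (W ω) (Y₀ ω) else π0 (W ω))))
        * (Y₁ ω - (if R ω = 1 then Q1 (W ω) (Y₀ ω) (A ω) else Q0 (W ω) (A ω)))) μ ∧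
    ∫ ω, (((A ω : ℕ) : ℝ) - (if R ω = 1 then π1 (W ω) (Y₀ ω) else π0 (W ω)))
        / ((if R ω = 1 then π1 (W ω) (Y₀ ω) else π0 (W ω))
          * (1 - (if R ω = 1 then π1 (W ω) (Y₀ ω) else π0 (W ω))))
        * (Y₁ ω - (if R ω = 1 then Q1 (W ω) (Y₀ ω) (A ω) else Q0 (W ω) (A ω))) ∂μ = 0 := by
  classical
  -- `(context, A)`, with the context `W` encoded as `(W, none)` and `(W, Y₀)` as `(W, some Y₀)`
  set B : Ω → 𝒲 × Option 𝒴₀ × Fin 2 :=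
    fun ω => (W ω, if R ω = 1 then some (Y₀ ω) else none, A ω)
  have hB : ∀ i, MeasurableSet (B ⁻¹' {i}) := fun i =>
    hT (t := {t | (t.1, if t.2.2.2 = 1 then some t.2.1 else none, t.2.2.1) = i}) .of_discrete
  set q : 𝒲 × Option 𝒴₀ × Fin 2 → ℝ :=
    fun i => i.2.1.elim (Q0 i.1 i.2.2) (fun y => Q1 i.1 y i.2.2)
  have hq : ∀ i, q i = cexp μ Y₁ (B ⁻¹' {i}) := by
    rintro ⟨w, _ | y, a⟩
    · show Q0 w a = _
      rw [hQ0]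
      congr 1
      ext ω
      have : ¬R ω = 1 ↔ R ω = 0 := by omega
      simp only [B, mem_ofPred_eq, mem_preimage, mem_singleton_iff, Prod.mk.injEq,
        ite_eq_right_iff, reduceCtorEq, imp_false]
      tauto
    · show Q1 w y a = _
      rw [hQ1]
      congr 1
      ext ω
      simp only [B, mem_ofPred_eq, mem_preimage, mem_singleton_iff, Prod.mk.injEq,
        Option.ite_none_right_eq_some, Option.some.injEq]
      tauto
  set c : 𝒲 × Option 𝒴₀ × Fin 2 → ℝ := fun i =>
    (((i.2.2 : ℕ) : ℝ) - i.2.1.elim (π0 i.1) (π1 i.1))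
      / (i.2.1.elim (π0 i.1) (π1 i.1) * (1 - i.2.1.elim (π0 i.1) (π1 i.1)))
  have hcB : ∀ ω, (((A ω : ℕ) : ℝ) - (if R ω = 1 then π1 (W ω) (Y₀ ω) else π0 (W ω)))
      / ((if R ω = 1 then π1 (W ω) (Y₀ ω) else π0 (W ω))
        * (1 - (if R ω = 1 then π1 (W ω) (Y₀ ω) else π0 (W ω))))
      * (Y₁ ω - (if R ω = 1 then Q1 (W ω) (Y₀ ω) (A ω) else Q0 (W ω) (A ω)))
      = c (B ω) * (Y₁ ω - q (B ω)) := fun ω => by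
    by_cases hr : R ω = 1 <;> simp [hr, B, c, q]
  simp only [hcB]
  exact integral_mul_sub_cexp_preimage_eq_zero hB hY₁ c q hq

end Model

theorem lmSCM_aipw_unbiased_general
    {Ω 𝒲 𝒴₀ 𝒰₀ 𝒰R 𝒰A 𝒰Y : Type*}
    [MeasurableSpace Ω]
    [Fintype 𝒲] [MeasurableSpace 𝒲] [MeasurableSingletonClass 𝒲]
    [Fintype 𝒴₀] [MeasurableSpace 𝒴₀] [MeasurableSingletonClass 𝒴₀]
    [MeasurableSpace 𝒰₀] [MeasurableSpace 𝒰R] [MeasurableSpace 𝒰A] [MeasurableSpace 𝒰Y]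
    (μ : Measure Ω) [IsProbabilityMeasure μ]
    (W : Ω → 𝒲) (U₀ : Ω → 𝒰₀) (UR : Ω → 𝒰R) (UA : Ω → 𝒰A) (UY : Ω → 𝒰Y)
    (hW : Measurable W) (hU₀ : Measurable U₀) (hUR : Measurable UR)
    (hUA : Measurable UA) (hUY : Measurable UY)
    (hIndep : iIndep
      (![MeasurableSpace.comap W inferInstance, MeasurableSpace.comap U₀ inferInstance,
         MeasurableSpace.comap UR inferInstance, MeasurableSpace.comap UA inferInstance,
         MeasurableSpace.comap UY inferInstance] : Fin 5 → MeasurableSpace Ω) μ)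
    (f₀ : 𝒲 × 𝒰₀ → 𝒴₀) (hf₀ : Measurable f₀)
    (fR : 𝒲 × 𝒰R → Fin 2) (hfR : Measurable fR)
    (fA : 𝒲 × 𝒴₀ × 𝒰A → Fin 2) (hfA : Measurable fA)
    (gA : 𝒲 × 𝒰A → Fin 2) (hgA : Measurable gA)
    (fY : 𝒲 × 𝒴₀ × Fin 2 × 𝒰Y → ℝ) (hfY : Measurable fY)
    (gY : 𝒲 × Fin 2 × 𝒰Y → ℝ) (hgY : Measurable gY)
    (Y₀ : Ω → 𝒴₀) (R A : Ω → Fin 2) (Y₁ : Ω → ℝ)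
    (hY₀ : ∀ ω, Y₀ ω = f₀ (W ω, U₀ ω))
    (hR : ∀ ω, R ω = fR (W ω, UR ω))
    (hA : ∀ ω, A ω = if R ω = 1 then fA (W ω, Y₀ ω, UA ω) else gA (W ω, UA ω))
    (hY₁ : ∀ ω, Y₁ ω = if R ω = 1 then fY (W ω, Y₀ ω, A ω, UY ω) else gY (W ω, A ω, UY ω))
    (Ynat : Fin 2 → Ω → ℝ)
    (hYnat : ∀ (a : Fin 2) (ω : Ω),
      Ynat a ω = if R ω = 1 then fY (W ω, Y₀ ω, a, UY ω) else gY (W ω, a, UY ω))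
    (hIntY₁ : Integrable Y₁ μ)
    (hIntN0 : Integrable (Ynat 0) μ) (hIntN1 : Integrable (Ynat 1) μ)
    (hpos : ∀ (w : 𝒲) (y : 𝒴₀) (r a : Fin 2),
      0 < μ {ω | W ω = w ∧ Y₀ ω = y ∧ R ω = r ∧ A ω = a})
    (Q1 : 𝒲 → 𝒴₀ → Fin 2 → ℝ)
    (hQ1 : ∀ (w : 𝒲) (y : 𝒴₀) (a : Fin 2),
      Q1 w y a = cexp μ Y₁ {ω | W ω = w ∧ Y₀ ω = y ∧ A ω = a ∧ R ω = 1})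
    (Q0 : 𝒲 → Fin 2 → ℝ)
    (hQ0 : ∀ (w : 𝒲) (a : Fin 2), Q0 w a = cexp μ Y₁ {ω | W ω = w ∧ A ω = a ∧ R ω = 0})
    (π1 : 𝒲 → 𝒴₀ → ℝ)
    (π0 : 𝒲 → ℝ)
    :
    ∫ ω, (((if R ω = 1 then Q1 (W ω) (Y₀ ω) 1 else Q0 (W ω) 1)
            - (if R ω = 1 then Q1 (W ω) (Y₀ ω) 0 else Q0 (W ω) 0))
          + (((A ω : ℕ) : ℝ) - (if R ω = 1 then π1 (W ω) (Y₀ ω) else π0 (W ω)))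
              / ((if R ω = 1 then π1 (W ω) (Y₀ ω) else π0 (W ω))
                  * (1 - (if R ω = 1 then π1 (W ω) (Y₀ ω) else π0 (W ω))))
              * (Y₁ ω - (if R ω = 1 then Q1 (W ω) (Y₀ ω) (A ω) else Q0 (W ω) (A ω)))) ∂μ
      = (∫ ω, Ynat 1 ω ∂μ) - (∫ ω, Ynat 0 ω ∂μ) := by
  have hTU := lmSCM_indepFun_pretreatment hW hU₀ hUR hUA hUY hIndep hf₀ hfR hfA hgA hY₀ hR hA
  have hT := lmSCM_measurable_pretreatment hW hU₀ hUR hUA hf₀ hfR hfA hgA hY₀ hR hA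
  have hnat := lmSCM_integral_natural_outcome hTU hT hUY hfY hgY hY₁ hpos hQ1 hQ0
  obtain ⟨hint, hzero⟩ := lmSCM_integral_aipw_correction hT hIntY₁ hQ1 hQ0 π1 π0
  have hQR : ∀ a, Integrable (fun ω => if R ω = 1 then Q1 (W ω) (Y₀ ω) a else Q0 (W ω) a) μ :=
    fun a => (Integrable.of_finite (f := fun t : 𝒲 × 𝒴₀ × Fin 2 × Fin 2 =>
      if t.2.2.2 = 1 then Q1 t.1 t.2.1 a else Q0 t.1 a)).comp_measurable hT
  rw [integral_add (f := fun ω => _ - _) ((hQR 1).sub (hQR 0)) hint, hzero, add_zero,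
    integral_sub (hQR 1) (hQR 0), hnat 1 (hYnat 1) hIntN1, hnat 0 (hYnat 0) hIntN0]

/-- In the discrete lm-SCM of Figure 1c, under positivity and with the true nuisance functions, the population mean of the context-parameterized AIPW score equals the NATE. -/
theorem lmSCM_aipw_unbiased
    {Ω 𝒲 𝒴₀ 𝒰₀ 𝒰R 𝒰A 𝒰Y : Type*}
    [MeasurableSpace Ω]
    [Fintype 𝒲] [Nonempty 𝒲] [MeasurableSpace 𝒲] [MeasurableSingletonClass 𝒲]
    [Fintype 𝒴₀] [Nonempty 𝒴₀] [MeasurableSpace 𝒴₀] [MeasurableSingletonClass 𝒴₀]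
    [MeasurableSpace 𝒰₀] [MeasurableSpace 𝒰R] [MeasurableSpace 𝒰A] [MeasurableSpace 𝒰Y]
    (μ : Measure Ω) [IsProbabilityMeasure μ]
    (W : Ω → 𝒲) (U₀ : Ω → 𝒰₀) (UR : Ω → 𝒰R) (UA : Ω → 𝒰A) (UY : Ω → 𝒰Y)
    (hW : Measurable W) (hU₀ : Measurable U₀) (hUR : Measurable UR)
    (hUA : Measurable UA) (hUY : Measurable UY)
    (hIndep : iIndep
      (![MeasurableSpace.comap W inferInstance, MeasurableSpace.comap U₀ inferInstance,
         MeasurableSpace.comap UR inferInstance, MeasurableSpace.comap UA inferInstance,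
         MeasurableSpace.comap UY inferInstance] : Fin 5 → MeasurableSpace Ω) μ)
    (f₀ : 𝒲 × 𝒰₀ → 𝒴₀) (hf₀ : Measurable f₀)
    (fR : 𝒲 × 𝒰R → Fin 2) (hfR : Measurable fR)
    (fA : 𝒲 × 𝒴₀ × 𝒰A → Fin 2) (hfA : Measurable fA)
    (gA : 𝒲 × 𝒰A → Fin 2) (hgA : Measurable gA)
    (fY : 𝒲 × 𝒴₀ × Fin 2 × 𝒰Y → ℝ) (hfY : Measurable fY)
    (gY : 𝒲 × Fin 2 × 𝒰Y → ℝ) (hgY : Measurable gY)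
    (Y₀ : Ω → 𝒴₀) (R A : Ω → Fin 2) (Y₁ : Ω → ℝ)
    (hY₀ : ∀ ω, Y₀ ω = f₀ (W ω, U₀ ω))
    (hR : ∀ ω, R ω = fR (W ω, UR ω))
    (hA : ∀ ω, A ω = if R ω = 1 then fA (W ω, Y₀ ω, UA ω) else gA (W ω, UA ω))
    (hY₁ : ∀ ω, Y₁ ω = if R ω = 1 then fY (W ω, Y₀ ω, A ω, UY ω) else gY (W ω, A ω, UY ω))
    (Ynat : Fin 2 → Ω → ℝ)
    (hYnat : ∀ (a : Fin 2) (ω : Ω),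
      Ynat a ω = if R ω = 1 then fY (W ω, Y₀ ω, a, UY ω) else gY (W ω, a, UY ω))
    (Yful : Fin 2 → Ω → ℝ)
    (hYful : ∀ (a : Fin 2) (ω : Ω), Yful a ω = fY (W ω, Y₀ ω, a, UY ω))
    (hIntY₁ : Integrable Y₁ μ)
    (hIntN0 : Integrable (Ynat 0) μ) (hIntN1 : Integrable (Ynat 1) μ)
    (hIntF0 : Integrable (Yful 0) μ) (hIntF1 : Integrable (Yful 1) μ)
    (hpos : ∀ (w : 𝒲) (y : 𝒴₀) (r a : Fin 2),
      0 < μ {ω | W ω = w ∧ Y₀ ω = y ∧ R ω = r ∧ A ω = a})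
    (Q1 : 𝒲 → 𝒴₀ → Fin 2 → ℝ)
    (hQ1 : ∀ (w : 𝒲) (y : 𝒴₀) (a : Fin 2),
      Q1 w y a = cexp μ Y₁ {ω | W ω = w ∧ Y₀ ω = y ∧ A ω = a ∧ R ω = 1})
    (Q0 : 𝒲 → Fin 2 → ℝ)
    (hQ0 : ∀ (w : 𝒲) (a : Fin 2), Q0 w a = cexp μ Y₁ {ω | W ω = w ∧ A ω = a ∧ R ω = 0})
    (π1 : 𝒲 → 𝒴₀ → ℝ)
    (hπ1 : ∀ (w : 𝒲) (y : 𝒴₀),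
      π1 w y = (cprob μ {ω | A ω = 1} {ω | W ω = w ∧ Y₀ ω = y ∧ R ω = 1}).toReal)
    (π0 : 𝒲 → ℝ)
    (hπ0 : ∀ w : 𝒲, π0 w = (cprob μ {ω | A ω = 1} {ω | W ω = w ∧ R ω = 0}).toReal)
    :
    ∫ ω, (((if R ω = 1 then Q1 (W ω) (Y₀ ω) 1 else Q0 (W ω) 1)
            - (if R ω = 1 then Q1 (W ω) (Y₀ ω) 0 else Q0 (W ω) 0))
          + (((A ω : ℕ) : ℝ) - (if R ω = 1 then π1 (W ω) (Y₀ ω) else π0 (W ω)))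
              / ((if R ω = 1 then π1 (W ω) (Y₀ ω) else π0 (W ω))
                  * (1 - (if R ω = 1 then π1 (W ω) (Y₀ ω) else π0 (W ω))))
              * (Y₁ ω - (if R ω = 1 then Q1 (W ω) (Y₀ ω) (A ω) else Q0 (W ω) (A ω)))) ∂μ
      = (∫ ω, Ynat 1 ω ∂μ) - (∫ ω, Ynat 0 ω ∂μ) :=
  lmSCM_aipw_unbiased_general μ W U₀ UR UA UY hW hU₀ hUR hUA hUY hIndep f₀ hf₀ fR hfR fA hfA gA hgA
    fY hfY gY hgY Y₀ R A Y₁ hY₀ hR hA hY₁ Ynat hYnat hIntY₁ hIntN0 hIntN1 hpos Q1 hQ1 Q0 hQ0 π1 π0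
end
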